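/- arXiv:2504.03542 — 13 statements merged into one kernel-verified Lean document; each statement's English description precedes it below -/
import Mathlib

section
/- For any integer m ≥ 2 and any pairwise distinct complex numbers x₁, …, x_m, and for every ε > 0, there exist indices 1 ≤ k < l ≤ m and a complex number t with 0 < |t| < ε such that |t·x_k + 1| = |t·x_l + 1| and |t·x_k + 1| > |t·x_j + 1| for every index j ∈ {1, …, m} with j ≠ k and j ≠ l. -/
/-!
With `t = -C⁻¹` we have `‖t * x + 1‖ = ‖x - C‖ / ‖C‖`, so it suffices to find centres `C` of
arbitrarily large modulus from which exactly two of the points are farthest.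
Gift wrapping from the lowest point gives an edge `[x k, x l]` of the convex hull; after the
affine normalisation `x k ↦ 0`, `x l ↦ 1`, all points lie in the closed upper half-plane and
those on the real axis lie in `[0, 1]`. Seen from `1 / 2 + R * I` with `R` large, both endpoints
are equally far, the squared distance of a point `w` above the axis is smaller by about
`2 * R * im w`, and the remaining points on the axis lie strictly inside the segment.
-/

open Complex Filter Function

def AboveUnitInterval (w : ℂ) : Prop :=
  0 < w.im ∨ (w.im = 0 ∧ 0 ≤ w.re ∧ w.re ≤ 1)

theorem aboveUnitInterval_div {z w : ℂ} (hw : w ≠ 0) (h₁ : arg w ≤ arg z)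
    (h₂ : arg z < arg w + Real.pi) (h₃ : arg z = arg w → ‖z‖ ≤ ‖w‖) :
    AboveUnitInterval (z / w) := by
  set r := ‖z‖ / ‖w‖
  set θ := arg z - arg w
  have hpolar : z / w = r * exp (θ * I) := by
    conv_lhs => rw [← norm_mul_exp_arg_mul_I z, ← norm_mul_exp_arg_mul_I w]
    simp only [r, θ, ofReal_div, ofReal_sub, sub_mul, exp_sub]
    have : (‖w‖ : ℂ) ≠ 0 := by simpa using hw
    field_simp
  have hr : 0 ≤ r := by positivity
  have hsin : 0 ≤ Real.sin θ := Real.sin_nonneg_of_nonneg_of_le_pi (by linarith) (by linarith)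
  rw [hpolar, AboveUnitInterval, re_ofReal_mul, im_ofReal_mul, exp_ofReal_mul_I_re,
    exp_ofReal_mul_I_im]
  rcases (mul_nonneg hr hsin).lt_or_eq with hpos | hzero
  · exact Or.inl hpos
  right
  rcases mul_eq_zero.1 hzero.symm with hr0 | hsin0
  · simp [hr0]
  have hθ : θ = 0 := by
    by_contra hθ
    exact (Real.sin_pos_of_pos_of_lt_pi (lt_of_le_of_ne (by linarith) (Ne.symm hθ))
      (by linarith)).ne' hsin0
  refine ⟨by simp [hθ], by simpa [hθ] using hr, ?_⟩
  simp only [hθ, Real.cos_zero, mul_one]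
  exact div_le_one_of_le₀ (h₃ (sub_eq_zero.1 hθ)) (norm_nonneg _)

theorem exists_pair_forall_aboveUnitInterval {ι : Type*} [Finite ι] [Nontrivial ι] {x : ι → ℂ}
    (hx : Injective x) :
    ∃ k l, k ≠ l ∧ ∀ j, AboveUnitInterval ((x j - x k) / (x l - x k)) := by
  -- `a` is the lowest point, leftmost among the lowest ones
  obtain ⟨a, ha⟩ := Finite.exists_min fun j => toLex ((x j).im, (x j).re)
  have harg : ∀ j, 0 ≤ arg (x j - x a) ∧ arg (x j - x a) < Real.pi := fun j => by
    rw [arg_nonneg_iff, arg_lt_pi_iff, sub_im, sub_re]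
    have hle := Prod.Lex.le_iff.1 (ha j)
    simp only [ofLex_toLex] at hle
    rcases hle with h | ⟨h, h'⟩
    · exact ⟨by linarith, Or.inr (sub_pos.2 h).ne'⟩
    · exact ⟨by linarith, Or.inl (by linarith)⟩
  have : Nonempty {j // j ≠ a} := nonempty_subtype.2 (exists_ne a)
  -- `b` is seen from `a` at the smallest angle, farthest among those at that angle
  obtain ⟨⟨b, hba⟩, hb⟩ := Finite.exists_min fun j : {j // j ≠ a} =>
    toLex (arg (x j - x a), -‖x j - x a‖)
  refine ⟨a, b, hba.symm, fun j => ?_⟩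
  by_cases hja : j = a
  · simp [hja, AboveUnitInterval]
  have hle := Prod.Lex.le_iff.1 (hb ⟨j, hja⟩)
  simp only [ofLex_toLex, neg_le_neg_iff] at hle
  refine aboveUnitInterval_div (sub_ne_zero.2 (hx.ne hba)) ?_ ?_ fun heq => ?_
  · rcases hle with h | ⟨h, -⟩ <;> linarith
  · linarith [harg j, harg b]
  · rcases hle with h | ⟨-, h⟩
    · linarith
    · exact h

theorem AboveUnitInterval.eventually_norm_sub_lt {w : ℂ} (hw : AboveUnitInterval w)
    (h₀ : w ≠ 0) (h₁ : w ≠ 1) :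
    ∀ᶠ R : ℝ in atTop, ‖w - (1 / 2 + R * I)‖ < ‖(1 / 2 + R * I : ℂ)‖ := by
  -- with `c = 1 / 2 + R * I`: `‖w - c‖² - ‖c‖² = ‖w‖² - re w - 2 * R * im w`
  suffices ∀ᶠ R : ℝ in atTop, normSq w - w.re < 2 * R * w.im by
    refine this.mono fun R hR => ?_
    rw [← sq_lt_sq₀ (norm_nonneg _) (norm_nonneg _), Complex.sq_norm, Complex.sq_norm]
    rw [normSq_apply] at hR
    norm_num [normSq_apply]
    linarith
  rcases hw with him | ⟨him, hre₀, hre₁⟩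
  · filter_upwards [eventually_gt_atTop ((normSq w - w.re) / (2 * w.im))] with R hR
    rw [div_lt_iff₀ (by positivity)] at hR
    linarith
  · have hre₀' : w.re ≠ 0 := fun h => h₀ (Complex.ext h him)
    have hre₁' : w.re ≠ 1 := fun h => h₁ (Complex.ext h him)
    refine Eventually.of_forall fun R => ?_
    rw [normSq_apply, him]
    nlinarith [lt_of_le_of_ne hre₀ (Ne.symm hre₀'), lt_of_le_of_ne hre₁ hre₁']

def IsFarthestPair {ι E : Type*} [SeminormedAddCommGroup E] (x : ι → E) (c : E) (k l : ι) :
    Prop :=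
  ‖x k - c‖ = ‖x l - c‖ ∧ ∀ j, j ≠ k → j ≠ l → ‖x j - c‖ < ‖x k - c‖

namespace IsFarthestPair

variable {ι : Type*} {k l : ι}

theorem symm {E : Type*} [SeminormedAddCommGroup E] {x : ι → E} {c : E}
    (h : IsFarthestPair x c k l) : IsFarthestPair x c l k :=
  ⟨h.1.symm, fun j hl hk => h.1 ▸ h.2 j hk hl⟩

theorem mul_add {𝕜 : Type*} [NormedDivisionRing 𝕜] {x : ι → 𝕜} {c : 𝕜}
    (h : IsFarthestPair x c k l) {d : 𝕜} (hd : d ≠ 0) (p : 𝕜) :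
    IsFarthestPair (fun j => d * x j + p) (d * c + p) k l := by
  have hdist : ∀ j, ‖d * x j + p - (d * c + p)‖ = ‖d‖ * ‖x j - c‖ := fun j => by
    rw [add_sub_add_right_eq_sub, ← mul_sub, norm_mul]
  refine ⟨by simp only [hdist, h.1], fun j hk hl => ?_⟩
  simp only [hdist]
  exact mul_lt_mul_of_pos_left (h.2 j hk hl) (norm_pos_iff.2 hd)

end IsFarthestPair

theorem eventually_isFarthestPair_of_aboveUnitInterval {ι : Type*} [Finite ι] {w : ι → ℂ}
    (hw : Injective w) {k l : ι} (hk : w k = 0) (hl : w l = 1)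
    (habove : ∀ j, AboveUnitInterval (w j)) :
    ∀ᶠ R : ℝ in atTop, IsFarthestPair w (1 / 2 + R * I) k l := by
  have hkc : ∀ c : ℂ, ‖w k - c‖ = ‖c‖ := fun c => by rw [hk, zero_sub, norm_neg]
  -- `1 - c = conj c` on the line `re c = 1 / 2`
  have hlc : ∀ R : ℝ, ‖w l - (1 / 2 + R * I)‖ = ‖(1 / 2 + R * I : ℂ)‖ := fun R => by
    rw [hl, ← norm_conj (1 / 2 + R * I)]
    congr 1
    apply Complex.ext <;> norm_num
  have hfar : ∀ j, ∀ᶠ R : ℝ in atTop,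
      j ≠ k → j ≠ l → ‖w j - (1 / 2 + R * I)‖ < ‖w k - (1 / 2 + R * I)‖ := fun j => by
    by_cases hjk : j = k
    · exact Eventually.of_forall fun _ h => absurd hjk h
    by_cases hjl : j = l
    · exact Eventually.of_forall fun _ _ h => absurd hjl h
    refine ((habove j).eventually_norm_sub_lt (hk ▸ hw.ne hjk) (hl ▸ hw.ne hjl)).mono
      fun R hR _ _ => ?_
    rwa [hkc]
  filter_upwards [eventually_all.2 hfar] with R hR
  exact ⟨by rw [hkc, hlc], hR⟩

theorem tendsto_norm_mul_add_atTop {d : ℂ} (hd : d ≠ 0) (p : ℂ) :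
    Tendsto (fun R : ℝ => ‖d * (1 / 2 + R * I) + p‖) atTop atTop := by
  refine tendsto_atTop_mono (fun R => ?_) <|
    tendsto_atTop_add_const_right _ (-‖p‖) (tendsto_id.const_mul_atTop (norm_pos_iff.2 hd))
  have hR : R ≤ ‖(1 / 2 + R * I : ℂ)‖ :=
    (le_abs_self R).trans (by simpa using abs_im_le_norm (1 / 2 + R * I : ℂ))
  have := norm_sub_le (d * (1 / 2 + R * I) + p) p
  rw [add_sub_cancel_right, norm_mul] at this
  simp only [id]
  nlinarith [norm_nonneg d]

theorem stmt0 (m : ℕ) (hm : 2 ≤ m) (x : Fin m → ℂ) (hx : Function.Injective x)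
    (ε : ℝ) (hε : 0 < ε) :
    ∃ k l : Fin m, k < l ∧ ∃ t : ℂ, 0 < ‖t‖ ∧ ‖t‖ < ε ∧
      ‖t * x k + 1‖ = ‖t * x l + 1‖ ∧
      ∀ j : Fin m, j ≠ k → j ≠ l → ‖t * x j + 1‖ < ‖t * x k + 1‖ := by
  have : Nontrivial (Fin m) := Fin.nontrivial_iff_two_le.2 hm
  obtain ⟨k, l, hkl, habove⟩ := exists_pair_forall_aboveUnitInterval hx
  set d := x l - x k
  have hd : d ≠ 0 := sub_ne_zero.2 (hx.ne hkl.symm)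
  have hw : Injective fun j => (x j - x k) / d := fun i j h => hx (by simpa [hd] using h)
  obtain ⟨R, hfar, hbig⟩ :=
    ((eventually_isFarthestPair_of_aboveUnitInterval (k := k) (l := l) hw (by simp)
      (div_self hd) habove).and
      ((tendsto_norm_mul_add_atTop hd (x k)).eventually_gt_atTop ε⁻¹)).exists
  set C := d * (1 / 2 + R * I) + x k
  have hC : C ≠ 0 := norm_pos_iff.1 ((inv_pos.2 hε).trans hbig)
  have hxC : IsFarthestPair x C k l := by
    convert hfar.mul_add hd (x k)
    field_simp
    ring
  have ht : IsFarthestPair (fun j => -C⁻¹ * x j + 1) 0 k l := by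
    simpa [hC] using hxC.mul_add (neg_ne_zero.2 (inv_ne_zero hC)) 1
  obtain ⟨k', l', hlt, ht'⟩ :
      ∃ k' l', k' < l' ∧ IsFarthestPair (fun j => -C⁻¹ * x j + 1) 0 k' l' := by
    rcases hkl.lt_or_gt with h | h
    exacts [⟨k, l, h, ht⟩, ⟨l, k, h, ht.symm⟩]
  simp only [IsFarthestPair, sub_zero] at ht'
  refine ⟨k', l', hlt, -C⁻¹, by simpa using hC, ?_, ht'⟩
  rw [norm_neg, norm_inv]
  exact inv_lt_of_inv_lt₀ hε hbig
end

section
/- Let n ≥ 2 and let u₁, …, u_N ∈ ℂⁿ be vectors spanning ℂⁿ over ℂ such that u_k ∉ absconv{u_j : j ≠ k} for every 1 ≤ k ≤ N. Then there exist indices 1 ≤ k < l ≤ N and a ℂ-linear functional f : ℂⁿ → ℂ satisfying |f(u_k)| = |f(u_l)| = 1 and |f(u_j)| < 1 for every j ≠ k, l. -/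
/-!
Separating `u k` from `absconv {u j | j ≠ k}` (Hahn–Banach, using that this set is balanced)
gives a functional `g` with `g (u k) = 1` and `‖g (u j)‖ < 1` for `j ≠ k`; a small generic
perturbation makes every `g (u j)` nonzero. Now take a generic `h` with `h (u k) = 0` and look at
the slice `g + z • h`, `z ∈ ℂ`: the parameters with `‖g (u j) + z * h (u j)‖ ≤ 1` for all `j ≠ k`
form an intersection of discs, a bounded convex set with `0` in its interior, so its frontier is
infinite, and at each frontier point some constraint `j ≠ k` is active. Genericity of `h` makes the
boundary circles pairwise distinct (equal circles would force `u j'` to be a unimodular multiple of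
`u j`), so two of them meet in at most two points, and a frontier point avoiding all these
intersections has exactly one active constraint besides `k`.
-/

open Set Metric Filter Topology

theorem EuclideanGeometry.Sphere.finite_inter_of_finrank_eq_two {V P : Type*}
    [NormedAddCommGroup V] [InnerProductSpace ℝ V] [MetricSpace P] [NormedAddTorsor V P]
    [FiniteDimensional ℝ V] (hd : Module.finrank ℝ V = 2) {s₁ s₂ : Sphere P} (hs : s₁ ≠ s₂) :
    ((s₁ : Set P) ∩ s₂).Finite := by
  rcases (s₁ ∩ s₂ : Set P).subsingleton_or_nontrivial with h | ⟨p₁, hp₁, p₂, hp₂, hp⟩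
  · exact h.finite
  · refine (finite_singleton p₂).insert p₁ |>.subset fun p hp' => ?_
    exact eq_of_mem_sphere_of_mem_sphere_of_finrank_eq_two hd hs hp hp₁.1 hp₂.1 hp'.1 hp₁.2 hp₂.2
      hp'.2

theorem Convex.infinite_frontier {E : Type*} [NormedAddCommGroup E] [NormedSpace ℝ E]
    (hE : 1 < Module.rank ℝ E) {s : Set E} (hc : Convex ℝ s) (hne : (interior s).Nonempty)
    (hb : Bornology.IsBounded s) : (frontier s).Infinite := by
  obtain ⟨h, -, -, hfr⟩ := exists_homeomorph_image_interior_closure_frontier_eq_unitBall hc hne hb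
  have : Nontrivial E := rank_pos_iff_nontrivial.1 (zero_lt_one.trans hE)
  obtain ⟨x, hx⟩ := (NormedSpace.sphere_nonempty (x := (0 : E)) (r := 1)).2 zero_le_one
  have hsphere : (sphere (0 : E) 1).Infinite := by
    refine (isConnected_sphere hE 0 zero_le_one).isPreconnected.infinite_of_nontrivial
      ⟨x, hx, -x, by simpa using hx, fun h => ?_⟩
    have : x = 0 := by simpa [eq_neg_iff_add_eq_zero, ← two_smul ℝ] using h
    simp [this] at hx
  exact Set.Infinite.of_image h (hfr ▸ hsphere)

namespace Complex

theorem norm_add_mul_eq_mul_dist (a : ℂ) {b : ℂ} (hb : b ≠ 0) (z : ℂ) :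
    ‖a + z * b‖ = ‖b‖ * dist z (-a / b) := by
  rw [dist_eq, ← norm_mul, mul_sub, mul_div_cancel₀ _ hb, mul_comm, sub_neg_eq_add, add_comm]

theorem setOf_norm_add_mul_eq_one (a : ℂ) {b : ℂ} (hb : b ≠ 0) :
    {z : ℂ | ‖a + z * b‖ = 1} = sphere (-a / b) ‖b‖⁻¹ := by
  ext z
  rw [mem_ofPred_eq, norm_add_mul_eq_mul_dist a hb, mem_sphere, mul_comm,
    mul_eq_one_iff_eq_inv₀ (norm_ne_zero_iff.2 hb)]

theorem setOf_norm_add_mul_le_one (a : ℂ) {b : ℂ} (hb : b ≠ 0) :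
    {z : ℂ | ‖a + z * b‖ ≤ 1} = closedBall (-a / b) ‖b‖⁻¹ := by
  ext z
  rw [mem_ofPred_eq, norm_add_mul_eq_mul_dist a hb, mem_closedBall,
    ← le_inv_mul_iff₀ (norm_pos_iff.2 hb), mul_one]

theorem finite_setOf_norm_add_mul_eq_one_inter {a b a' b' : ℂ} (hb : b ≠ 0) (hb' : b' ≠ 0)
    (h : ¬(a * b' = a' * b ∧ ‖b‖ = ‖b'‖)) :
    ({z : ℂ | ‖a + z * b‖ = 1} ∩ {z | ‖a' + z * b'‖ = 1}).Finite := by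
  rw [setOf_norm_add_mul_eq_one a hb, setOf_norm_add_mul_eq_one a' hb']
  refine EuclideanGeometry.Sphere.finite_inter_of_finrank_eq_two finrank_real_complex
    (s₁ := ⟨-a / b, ‖b‖⁻¹⟩) (s₂ := ⟨-a' / b', ‖b'‖⁻¹⟩) ?_
  intro hs
  simp only [EuclideanGeometry.Sphere.mk.injEq, neg_div, neg_inj, inv_inj] at hs
  exact h ⟨(div_eq_div_iff hb hb').1 hs.1, hs.2⟩

theorem convex_setOf_norm_add_mul_le (a b : ℂ) (r : ℝ) :
    Convex ℝ {z : ℂ | ‖a + z * b‖ ≤ r} := by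
  simpa [Set.preimage, dist_eq] using ((convex_closedBall (0 : ℂ) r).translate_preimage_right a
    |>.is_linear_preimage (LinearMap.mulRight ℝ b).isLinear)

theorem exists_norm_add_mul_eq_one_and_lt_one {ι : Type*} [Finite ι] (a b : ι → ℂ)
    (ha : ∀ j, ‖a j‖ < 1) (hb : ∃ j, b j ≠ 0)
    (hdist : ∀ j j', j ≠ j' → b j ≠ 0 → b j' ≠ 0 → a j * b j' = a j' * b j → ‖b j‖ ≠ ‖b j'‖) :
    ∃ z : ℂ, ∃ l, ‖a l + z * b l‖ = 1 ∧ ∀ j, j ≠ l → ‖a j + z * b j‖ < 1 := by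
  set Z := ⋂ j, {z : ℂ | ‖a j + z * b j‖ ≤ 1}
  have hint : ∀ z, (∀ j, ‖a j + z * b j‖ < 1) → z ∈ interior Z := by
    intro z hz
    rw [mem_interior_iff_mem_nhds]
    have : ∀ j, ∀ᶠ w in 𝓝 z, ‖a j + w * b j‖ < 1 := fun j =>
      (by fun_prop : Continuous fun w => ‖a j + w * b j‖).continuousAt.eventually_lt
        continuousAt_const (hz j)
    filter_upwards [eventually_all.2 this] with w hw
    exact mem_iInter.2 fun j => (hw j).le
  have hclosed : IsClosed Z := isClosed_iInter fun j => isClosed_le (by fun_prop) continuous_const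
  have hbdd : Bornology.IsBounded Z := by
    obtain ⟨j, hj⟩ := hb
    refine (isBounded_closedBall (x := -a j / b j) (r := ‖b j‖⁻¹)).subset ?_
    exact (iInter_subset _ j).trans (setOf_norm_add_mul_le_one (a j) hj).le
  have hfrontier : (frontier Z).Infinite :=
    (convex_iInter fun j => convex_setOf_norm_add_mul_le (a j) (b j) 1).infinite_frontier
      (by rw [rank_real_complex]; norm_num) ⟨0, hint 0 (by simpa using ha)⟩ hbdd
  have hpairs : (⋃ j, ⋃ j', ⋃ (_ : j ≠ j'),
      {z : ℂ | ‖a j + z * b j‖ = 1} ∩ {z | ‖a j' + z * b j'‖ = 1}).Finite := by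
    refine finite_iUnion fun j => finite_iUnion fun j' => finite_iUnion fun hjj' => ?_
    rcases eq_or_ne (b j) 0 with hj | hj
    · simp [hj, (ha j).ne]
    rcases eq_or_ne (b j') 0 with hj' | hj'
    · simp [hj', (ha j').ne]
    exact finite_setOf_norm_add_mul_eq_one_inter hj hj' fun h => hdist j j' hjj' hj hj' h.1 h.2
  obtain ⟨z, hzZ, hzpairs⟩ := (hfrontier.sdiff hpairs).nonempty
  have hz : ∀ j, ‖a j + z * b j‖ ≤ 1 := fun j => mem_iInter.1 (hclosed.frontier_subset hzZ) j
  obtain ⟨l, hl⟩ : ∃ l, ‖a l + z * b l‖ = 1 := by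
    by_contra! h
    exact hzZ.2 (hint z fun j => (hz j).lt_of_ne (h j))
  refine ⟨z, l, hl, fun j hj => (hz j).lt_of_ne fun hj1 => hzpairs ?_⟩
  simp only [mem_iUnion]
  exact ⟨j, l, hj, hj1, hl⟩

end Complex

theorem Module.Dual.exists_apply_eq_zero_and_ne_zero {K M ι : Type*} [Field K] [Infinite K]
    [AddCommGroup M] [Module K M] [Finite ι] (x : M) (v : ι → M) :
    ∃ f : Module.Dual K M, f x = 0 ∧ ∀ i, v i ∉ K ∙ x → f (v i) ≠ 0 := by
  obtain ⟨f, hf⟩ := Module.exists_dual_forall_apply_ne_zero (K := K)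
    (fun i : {i // v i ∉ K ∙ x} => (K ∙ x).mkQ (v i))
    (fun i => by simpa [Submodule.Quotient.mk_eq_zero] using i.2)
  refine ⟨f ∘ₗ (K ∙ x).mkQ, ?_, fun i hi => hf ⟨i, hi⟩⟩
  simp [(Submodule.Quotient.mk_eq_zero _).2 (Submodule.mem_span_singleton_self x)]

theorem eventually_add_mul_ne_zero {𝕜 : Type*} [NontriviallyNormedField 𝕜] {a b : 𝕜}
    (hab : a ≠ 0 ∨ b ≠ 0) : ∀ᶠ t in 𝓝[≠] 0, a + t * b ≠ 0 := by
  rcases eq_or_ne a 0 with rfl | ha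
  · filter_upwards [self_mem_nhdsWithin] with t ht
    simpa using mul_ne_zero ht (hab.resolve_left (not_not.2 rfl))
  · refine nhdsWithin_le_nhds (ContinuousAt.eventually_ne ?_ (by simpa using ha))
    fun_prop

theorem Module.Dual.eq_zero_of_mem_span_singleton {K M : Type*} [Field K] [AddCommGroup M]
    [Module K M] {g : Module.Dual K M} {x v : M} (hgx : g x = 1) (hv : v ∈ K ∙ x) (hgv : g v = 0) :
    v = 0 := by
  obtain ⟨c, rfl⟩ := Submodule.mem_span_singleton.1 hv
  simp_all

theorem exists_notMem_span_singleton_of_span_eq_top {K M ι : Type*} [Field K] [AddCommGroup M]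
    [Module K M] {u : ι → M} (hspan : Submodule.span K (range u) = ⊤)
    (hM : 1 < Module.finrank K M) (x : M) : ∃ j, u j ∉ K ∙ x := by
  by_contra! h
  have : (⊤ : Submodule K M) ≤ K ∙ x := hspan ▸ Submodule.span_le.2 (range_subset_iff.2 h)
  have := (Submodule.finrank_mono this).trans (finrank_span_le_card {x})
  simp only [finrank_top, Set.toFinset_singleton, Finset.card_singleton] at this
  omega

section Peak

variable {𝕜 E : Type*} [RCLike 𝕜] [NormedAddCommGroup E] [NormedSpace 𝕜 E] [NormedSpace ℝ E]
  [IsScalarTower ℝ 𝕜 E]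

theorem exists_apply_eq_one_norm_lt_one_of_balanced {s : Set E} (hconv : Convex ℝ s)
    (hbal : Balanced 𝕜 s) (hclosed : IsClosed s) (hne : s.Nonempty) {x : E} (hx : x ∉ s) :
    ∃ f : StrongDual 𝕜 E, f x = 1 ∧ ∀ y ∈ s, ‖f y‖ < 1 := by
  obtain ⟨f, r, hfs, hfx⟩ := RCLike.geometric_hahn_banach_closed_point (𝕜 := 𝕜) hconv hclosed hx
  have hr : 0 < r := by simpa using hfs 0 (hbal.zero_mem hne)
  -- rotating `y` by a unimodular scalar makes `f y` real, so `re ∘ f < r` on `s` bounds `‖f ·‖`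
  have hnorm : ∀ y ∈ s, ‖f y‖ < r := by
    intro y hy
    set c : 𝕜 := (‖f y‖ : 𝕜)⁻¹ * starRingEnd 𝕜 (f y)
    have hc : ‖c‖ ≤ 1 := by
      rcases eq_or_ne (f y) 0 with h | h
      · simp [c, h]
      · simp [c, norm_inv, inv_mul_cancel₀ (norm_ne_zero_iff.2 h)]
    have hfc : f (c • y) = ‖f y‖ := by
      rcases eq_or_ne (f y) 0 with h | h
      · simp [c, h]
      · rw [map_smul, smul_eq_mul, mul_assoc, RCLike.conj_mul, pow_two, ← mul_assoc,
          inv_mul_cancel₀ (by simpa using h), one_mul]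
    simpa [hfc] using hfs _ (balanced_iff_smul_mem.1 hbal hc hy)
  have hfx' : r < ‖f x‖ := hfx.trans_le (RCLike.re_le_norm _)
  have hfx0 : f x ≠ 0 := norm_pos_iff.1 (hr.trans hfx')
  refine ⟨(f x)⁻¹ • f, by simp [hfx0], fun y hy => ?_⟩
  rw [smul_apply, smul_eq_mul, norm_mul, norm_inv, inv_mul_lt_one₀ (hr.trans hfx')]
  exact (hnorm y hy).trans hfx'

end Peak

section AbsConvexHullExcept

variable (𝕜 : Type*) {E ι : Type*} [RCLike 𝕜] [NormedAddCommGroup E] [NormedSpace 𝕜 E]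
  [Fintype ι]

/-- `absconv {u j | j ≠ k}`. -/
def absConvexHullExcept (u : ι → E) (k : ι) : Set E :=
  Fintype.linearCombination 𝕜 u '' {α | α k = 0 ∧ ∑ j, ‖α j‖ ≤ 1}

variable {𝕜} {u : ι → E} {k : ι}

theorem mem_absConvexHullExcept {x : E} :
    x ∈ absConvexHullExcept 𝕜 u k ↔ ∃ α : ι → 𝕜, α k = 0 ∧ ∑ j, ‖α j‖ ≤ 1 ∧ x = ∑ j, α j • u j := by
  simp [absConvexHullExcept, Fintype.linearCombination_apply, eq_comm, and_assoc]

theorem zero_mem_absConvexHullExcept : 0 ∈ absConvexHullExcept 𝕜 u k :=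
  ⟨0, by simp, map_zero _⟩

theorem smul_mem_absConvexHullExcept {j : ι} (hj : j ≠ k) {c : 𝕜} (hc : ‖c‖ ≤ 1) :
    c • u j ∈ absConvexHullExcept 𝕜 u k := by
  classical
  exact ⟨Pi.single j c, by simp [Pi.single_apply, hj.symm, apply_ite, hc],
    by simp [Fintype.linearCombination_apply_single]⟩

theorem balanced_absConvexHullExcept : Balanced 𝕜 (absConvexHullExcept 𝕜 u k) := by
  refine balanced_iff_smul_mem.2 fun c hc _ ⟨α, ⟨hαk, hα⟩, hx⟩ => ⟨c • α, ⟨by simp [hαk], ?_⟩, ?_⟩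
  · calc ∑ j, ‖(c • α) j‖ = ‖c‖ * ∑ j, ‖α j‖ := by simp [Finset.mul_sum]
      _ ≤ 1 := mul_le_one₀ hc (by positivity) hα
  · rw [map_smul, hx]

theorem convex_absConvexHullExcept [NormedSpace ℝ E] [IsScalarTower ℝ 𝕜 E] :
    Convex ℝ (absConvexHullExcept 𝕜 u k) := by
  refine Convex.linear_image ?_ ((Fintype.linearCombination 𝕜 u).restrictScalars ℝ)
  rintro α ⟨hαk, hα⟩ β ⟨hβk, hβ⟩ s t hs ht hst
  refine ⟨by simp [hαk, hβk], ?_⟩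
  calc ∑ j, ‖(s • α + t • β) j‖ ≤ ∑ j, (s * ‖α j‖ + t * ‖β j‖) := by
        refine Finset.sum_le_sum fun j _ => (norm_add_le _ _).trans_eq ?_
        simp [norm_smul, abs_of_nonneg hs, abs_of_nonneg ht]
    _ = s * ∑ j, ‖α j‖ + t * ∑ j, ‖β j‖ := by
        simp [Finset.sum_add_distrib, Finset.mul_sum]
    _ ≤ s * 1 + t * 1 := by gcongr
    _ = 1 := by rw [mul_one, mul_one, hst]

theorem isCompact_absConvexHullExcept : IsCompact (absConvexHullExcept 𝕜 u k) := by
  refine IsCompact.image ?_ (LinearMap.continuous_of_finiteDimensional _)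
  refine (isCompact_closedBall (0 : ι → 𝕜) 1).of_isClosed_subset ?_ fun α hα => ?_
  · exact (isClosed_eq (continuous_apply k) continuous_const).inter
      (isClosed_le (continuous_finsetSum _ fun j _ => (continuous_apply j).norm)
        continuous_const)
  · refine mem_closedBall_zero_iff.2 ((pi_norm_le_iff_of_nonneg zero_le_one).2 fun j => ?_)
    exact (Finset.single_le_sum (fun i _ => norm_nonneg (α i)) (Finset.mem_univ j)).trans hα.2

theorem exists_apply_eq_one_norm_lt_one_of_notMem_absConvexHullExcept [NormedSpace ℝ E]
    [IsScalarTower ℝ 𝕜 E] (hk : u k ∉ absConvexHullExcept 𝕜 u k) :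
    ∃ g : StrongDual 𝕜 E, g (u k) = 1 ∧ ∀ j, j ≠ k → ‖g (u j)‖ < 1 := by
  obtain ⟨g, hgk, hg⟩ := exists_apply_eq_one_norm_lt_one_of_balanced convex_absConvexHullExcept
    balanced_absConvexHullExcept isCompact_absConvexHullExcept.isClosed
    ⟨0, zero_mem_absConvexHullExcept⟩ hk
  exact ⟨g, hgk, fun j hj => by
    simpa using hg _ (smul_mem_absConvexHullExcept hj (c := 1) (by simp))⟩

theorem exists_apply_eq_one_norm_lt_one_apply_ne_zero [NormedSpace ℝ E] [IsScalarTower ℝ 𝕜 E]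
    (hk : u k ∉ absConvexHullExcept 𝕜 u k) (hu : ∀ j, u j ≠ 0) :
    ∃ g : Module.Dual 𝕜 E, g (u k) = 1 ∧ (∀ j, j ≠ k → ‖g (u j)‖ < 1) ∧ ∀ j, g (u j) ≠ 0 := by
  obtain ⟨g, hgk, hg⟩ := exists_apply_eq_one_norm_lt_one_of_notMem_absConvexHullExcept hk
  obtain ⟨h, hhk, hh⟩ := Module.Dual.exists_apply_eq_zero_and_ne_zero (K := 𝕜) (u k) u
  have hlt : ∀ᶠ t in 𝓝 (0 : 𝕜), ∀ j, j ≠ k → ‖g (u j) + t * h (u j)‖ < 1 := by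
    refine eventually_all.2 fun j => ?_
    by_cases hj : j = k
    · simp [hj]
    · filter_upwards [(by fun_prop : Continuous fun t : 𝕜 => ‖g (u j) + t * h (u j)‖).continuousAt
        |>.eventually_lt continuousAt_const (by simpa using hg j hj)] with t ht _ using ht
  have hne : ∀ᶠ t in 𝓝[≠] (0 : 𝕜), ∀ j, g (u j) + t * h (u j) ≠ 0 := by
    refine eventually_all.2 fun j => eventually_add_mul_ne_zero ?_
    rw [or_iff_not_imp_left, not_not]
    exact fun hgj => hh j fun hj => hu j (Module.Dual.eq_zero_of_mem_span_singleton
      (g := (g : Module.Dual 𝕜 E)) hgk hj hgj)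
  obtain ⟨t, ht1, ht2⟩ := ((eventually_nhdsWithin_of_eventually_nhds hlt).and hne).exists
  exact ⟨g + t • h, by simp [hgk, hhk], by simpa using ht1, by simpa using ht2⟩

end AbsConvexHullExcept

theorem exists_apply_eq_one_norm_eq_one_norm_lt_one {E ι : Type*} [NormedAddCommGroup E]
    [NormedSpace ℂ E] [Fintype ι] {u : ι → E} (hess : ∀ j, u j ∉ absConvexHullExcept ℂ u j)
    (k : ι) (hk : ∃ j, u j ∉ ℂ ∙ u k) :
    ∃ l, l ≠ k ∧ ∃ f : Module.Dual ℂ E, f (u k) = 1 ∧ ‖f (u l)‖ = 1 ∧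
      ∀ j, j ≠ k → j ≠ l → ‖f (u j)‖ < 1 := by
  have hu : ∀ j, u j ≠ 0 := fun j h => hess j (h ▸ zero_mem_absConvexHullExcept)
  obtain ⟨g, hgk, hglt, hg0⟩ := exists_apply_eq_one_norm_lt_one_apply_ne_zero (hess k) hu
  obtain ⟨h, hhk, hh⟩ := Module.Dual.exists_apply_eq_zero_and_ne_zero (K := ℂ) (u k)
    (Sum.elim u fun p : ι × ι => g (u p.2) • u p.1 - g (u p.1) • u p.2)
  have hdist : ∀ j j' : {j // j ≠ k}, j ≠ j' → h (u j) ≠ 0 → h (u j') ≠ 0 →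
      g (u j) * h (u j') = g (u j') * h (u j) → ‖h (u j)‖ ≠ ‖h (u j')‖ := by
    rintro ⟨j, _⟩ ⟨j', _⟩ hjj' hj - hgh hnorm
    have hv : g (u j') • u j - g (u j) • u j' ∈ ℂ ∙ u k := by
      by_contra hv
      exact hh (Sum.inr (j, j')) hv (by simp [hgh])
    have hv0 := Module.Dual.eq_zero_of_mem_span_singleton hgk hv (by simp [mul_comm])
    have huj' : u j' = (g (u j') / g (u j)) • u j := by
      rw [sub_eq_zero] at hv0
      rw [div_eq_inv_mul, mul_smul, hv0, smul_smul, inv_mul_cancel₀ (hg0 j), one_smul]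
    have hc : ‖g (u j') / g (u j)‖ = 1 := by
      rw [huj', map_smul, smul_eq_mul, norm_mul] at hnorm
      exact (mul_eq_right₀ (norm_ne_zero_iff.2 hj)).1 hnorm.symm
    exact hess j' (huj' ▸ smul_mem_absConvexHullExcept (Subtype.coe_injective.ne hjj') hc.le)
  have hh_ne_zero : ∃ j : {j // j ≠ k}, h (u j) ≠ 0 := by
    obtain ⟨j, hj⟩ := hk
    exact ⟨⟨j, fun hjk => hj (hjk ▸ Submodule.mem_span_singleton_self _)⟩, hh (Sum.inl j) hj⟩
  obtain ⟨z, ⟨l, hlk⟩, hl, hlt⟩ := Complex.exists_norm_add_mul_eq_one_and_lt_one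
    (fun j : {j // j ≠ k} => g (u j)) (fun j => h (u j)) (fun j => hglt j j.2) hh_ne_zero hdist
  refine ⟨l, hlk, g + z • h, by simp [hgk, hhk], by simpa using hl, fun j hjk hjl => ?_⟩
  simpa using hlt ⟨j, hjk⟩ (Subtype.ext_iff.not.2 hjl)

theorem stmt1 (n N : ℕ) (hn : 2 ≤ n) (u : Fin N → (Fin n → ℂ))
    (hspan : Submodule.span ℂ (Set.range u) = ⊤)
    (hess : ∀ k : Fin N, ¬ ∃ α : Fin N → ℂ, α k = 0 ∧
      (∑ j, ‖α j‖) ≤ 1 ∧ u k = ∑ j, α j • u j) :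
    ∃ k l : Fin N, k < l ∧ ∃ f : (Fin n → ℂ) →ₗ[ℂ] ℂ,
      ‖f (u k)‖ = 1 ∧ ‖f (u l)‖ = 1 ∧
      ∀ j, j ≠ k → j ≠ l → ‖f (u j)‖ < 1 := by
  have hrank : 1 < Module.finrank ℂ (Fin n → ℂ) := by rw [Module.finrank_fin_fun]; omega
  obtain ⟨k, -⟩ := exists_notMem_span_singleton_of_span_eq_top hspan hrank 0
  obtain ⟨l, hlk, f, hfk, hfl, hf⟩ := exists_apply_eq_one_norm_eq_one_norm_lt_one
    (fun j => mem_absConvexHullExcept.not.2 (hess j)) k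
    (exists_notMem_span_singleton_of_span_eq_top hspan hrank (u k))
  rcases hlk.lt_or_gt with hlk | hkl
  · exact ⟨l, k, hlk, f, hfl, by simp [hfk], fun j hjl hjk => hf j hjk hjl⟩
  · exact ⟨k, l, hkl, f, by simp [hfk], hfl, hf⟩
end

section
/- Let n ≥ 2. There is no norm ‖·‖ on ℂⁿ that is simultaneously a complex polytope norm and an adjoint complex polytope norm. That is, there do not exist a norm ‖·‖ on ℂⁿ, vectors u₁, …, u_N spanning ℂⁿ whose absolutely convex hull absconv{u₁, …, u_N} equals the closed unit ball of ‖·‖, and ℂ-linear functionals f₁, …, f_M : ℂⁿ → ℂ such that ‖x‖ = max_{1 ≤ j ≤ M} |f_j(x)| for all x ∈ ℂⁿ. -/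
/-!
Call a boundary point `x` of the ball `B = {x | ∀ k, ‖f k x‖ ≤ 1}` a vertex when the functionals
of modulus one at `x` have no common kernel. Equality in the triangle inequality shows that if
`B = absconv u`, every vertex is a multiple of some `u i`. Conversely, from a boundary point `x`
with a nonzero common kernel direction `d`, one can move along `(1 + l * I) • d` until a new
functional reaches modulus one and then descend to a vertex; pigeonholing over `l ∈ ℕ` produces
two different real directions in `ℂ ∙ d` ending at the same vertex, which is impossible. So every
boundary point is a vertex, every vector lies on one of the finitely many lines `ℂ ∙ u i`, and
this contradicts `2 ≤ finrank ℂ E`.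
-/

open ComplexConjugate ComplexOrder Submodule Topology

theorem Complex.eq_ofReal_mul_of_sum_eq {J : Type*} {s : Finset J} {a : J → ℂ} {r : J → ℝ}
    {c : ℂ} (hc : ‖c‖ = 1) (ha : ∀ j ∈ s, ‖a j‖ ≤ r j) (hr : ∑ j ∈ s, r j ≤ 1)
    (hsum : ∑ j ∈ s, a j = c) : ∀ j ∈ s, a j = r j * c := by
  have hre_le : ∀ j ∈ s, (conj c * a j).re ≤ r j := fun j hj =>
    (re_le_norm _).trans (by simpa [hc] using ha j hj)
  have hre_sum : ∑ j ∈ s, (conj c * a j).re = 1 := by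
    rw [← re_sum, ← Finset.mul_sum, hsum, conj_mul', hc]; simp
  have hre_eq : ∀ j ∈ s, (conj c * a j).re = r j :=
    (Finset.sum_eq_sum_iff_of_le hre_le).1 <|
      le_antisymm (Finset.sum_le_sum hre_le) (hr.trans hre_sum.ge)
  intro j hj
  have hnonneg : 0 ≤ conj c * a j := re_eq_norm.1 <| le_antisymm (re_le_norm _)
    (by simpa [hc, hre_eq j hj] using ha j hj)
  calc a j = c * (conj c * a j) := by rw [← mul_assoc, mul_conj', hc]; simp
    _ = r j * c := by
      rw [eq_coe_norm_of_nonneg hnonneg, ← re_eq_norm.2 hnonneg, hre_eq j hj, mul_comm]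

theorem eq_of_mem_span_singleton_of_apply_eq {K V : Type*} [Field K] [AddCommGroup V] [Module K V]
    {g : V →ₗ[K] K} {u v w : V} (hv : v ∈ K ∙ u) (hw : w ∈ K ∙ u) (hvw : g v = g w)
    (hv0 : g v ≠ 0) : v = w := by
  obtain ⟨a, rfl⟩ := mem_span_singleton.1 hv
  obtain ⟨b, rfl⟩ := mem_span_singleton.1 hw
  simp only [map_smul, smul_eq_mul, ne_eq, mul_eq_zero, not_or] at hvw hv0
  rw [mul_right_cancel₀ hv0.2 hvw]

section AdjointBall

variable {E ι κ : Type*} [AddCommGroup E] [Module ℂ E]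

def adjointBall (f : ι → E →ₗ[ℂ] ℂ) : Set E := {x | ∀ k, ‖f k x‖ ≤ 1}

def absconv [Fintype κ] (u : κ → E) : Set E :=
  {x | ∃ α : κ → ℂ, ∑ j, ‖α j‖ ≤ 1 ∧ x = ∑ j, α j • u j}

def activeKernel (f : ι → E →ₗ[ℂ] ℂ) (x : E) : Submodule ℂ E :=
  ⨅ k ∈ {k | ‖f k x‖ = 1}, LinearMap.ker (f k)

variable (f : ι → E →ₗ[ℂ] ℂ)

@[simp]
theorem mem_activeKernel {x d : E} : d ∈ activeKernel f x ↔ ∀ k, ‖f k x‖ = 1 → f k d = 0 := by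
  simp [activeKernel]

theorem apply_add_smul_of_mem_activeKernel {x d : E} (hd : d ∈ activeKernel f x) (c : ℂ) {k : ι}
    (hk : ‖f k x‖ = 1) : f k (x + c • d) = f k x := by
  rw [map_add, map_smul, (mem_activeKernel f).1 hd k hk, smul_zero, add_zero]

theorem exists_apply_ne_zero (hf : ∀ x, (∀ k, f k x = 0) → x = 0) {d : E} (hd : d ≠ 0) :
    ∃ k, f k d ≠ 0 := by
  contrapose! hd
  exact hf d hd

theorem mem_span_singleton_of_activeKernel_eq_bot [Fintype κ] {u : κ → E}
    (hball : adjointBall f = absconv u) {x : E} (hx : x ∈ adjointBall f) {k₀ : ι}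
    (hk₀ : ‖f k₀ x‖ = 1) (hK : activeKernel f x = ⊥) : ∃ i, x ∈ ℂ ∙ u i := by
  classical
  obtain ⟨α, hα, rfl⟩ : x ∈ absconv u := hball ▸ hx
  have hu : ∀ i, u i ∈ adjointBall f := fun i => hball ▸
    ⟨Pi.single i 1, by simp [Pi.single_apply, apply_ite], by simp [Pi.single_apply, ite_smul]⟩
  have hphase : ∀ k, ‖f k (∑ j, α j • u j)‖ = 1 → ∀ j,
      α j * f k (u j) = ‖α j‖ * f k (∑ j, α j • u j) := fun k hk j =>
    Complex.eq_ofReal_mul_of_sum_eq (a := fun j => α j * f k (u j)) hk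
      (fun j _ => by simpa using mul_le_of_le_one_right (norm_nonneg _) (hu j k)) hα
      (by simp) j (Finset.mem_univ j)
  obtain ⟨i, hi⟩ : ∃ i, α i ≠ 0 := by
    by_contra! h
    simp [h] at hk₀
  refine ⟨i, (smul_mem_iff _ (by exact_mod_cast norm_ne_zero_iff.2 hi : (‖α i‖ : ℂ) ≠ 0)).1 ?_⟩
  have hdiff : α i • u i - (‖α i‖ : ℂ) • ∑ j, α j • u j ∈ activeKernel f (∑ j, α j • u j) := by
    rw [mem_activeKernel]
    intro k hk
    simp only [map_sub, map_smul, smul_eq_mul, hphase k hk i, sub_self]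
  rw [hK, Submodule.mem_bot, sub_eq_zero] at hdiff
  exact hdiff ▸ smul_mem _ _ (mem_span_singleton_self _)

theorem exists_pos_norm_eq_one_of_mem_activeKernel [Finite ι] {x d : E} (hx : x ∈ adjointBall f)
    (hd : d ∈ activeKernel f x) (hfd : ∃ k, f k d ≠ 0) :
    ∃ t : ℝ, 0 < t ∧ x + (t : ℂ) • d ∈ adjointBall f ∧
      ∃ k, ‖f k (x + (t : ℂ) • d)‖ = 1 ∧ f k d ≠ 0 := by
  have hline : ∀ k (t : ℝ), f k (x + (t : ℂ) • d) = f k x + t * f k d := by simp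
  have hcont : ∀ k, Continuous fun t : ℝ => ‖f k (x + (t : ℂ) • d)‖ := by
    simp only [hline]; fun_prop
  set T := {t : ℝ | 0 ≤ t ∧ ∀ k, ‖f k (x + (t : ℂ) • d)‖ ≤ 1}
  have hT_closed : IsClosed T := by
    simp only [T, Set.ofPred_and, Set.ofPred_forall]
    exact isClosed_le continuous_const continuous_id |>.inter <|
      isClosed_iInter fun k => isClosed_le (hcont k) continuous_const
  obtain ⟨k₁, hk₁⟩ := hfd
  have hT_bdd : T ⊆ Set.Icc 0 (2 / ‖f k₁ d‖) := by
    rintro t ⟨ht, htx⟩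
    refine ⟨ht, (le_div_iff₀ (norm_pos_iff.2 hk₁)).2 ?_⟩
    have htriangle := norm_sub_le (f k₁ (x + (t : ℂ) • d)) (f k₁ x)
    rw [hline, add_sub_cancel_left, norm_mul, Complex.norm_real, Real.norm_of_nonneg ht,
      ← hline] at htriangle
    linarith [htx k₁, hx k₁]
  obtain ⟨t₀, ⟨ht₀, ht₀x⟩, ht₀max⟩ := (Metric.isCompact_of_isClosed_isBounded hT_closed
    (Metric.isBounded_Icc _ _ |>.subset hT_bdd)).exists_isGreatest ⟨0, le_rfl, fun k => by simpa using hx k⟩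
  obtain ⟨k, hk, hkd⟩ : ∃ k, ‖f k (x + (t₀ : ℂ) • d)‖ = 1 ∧ f k d ≠ 0 := by
    by_contra! hslack
    have hnear : ∀ᶠ t : ℝ in 𝓝[>] t₀, ∀ k, ‖f k (x + (t : ℂ) • d)‖ ≤ 1 := by
      refine nhdsWithin_le_nhds <| Filter.eventually_all.2 fun k => ?_
      by_cases hkd : f k d = 0
      · simpa [hline, hkd] using hx k
      · exact (hcont k).continuousAt.eventually_lt continuousAt_const
          ((ht₀x k).lt_of_ne fun h => hkd (hslack k h)) |>.mono fun _ => le_of_lt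
    obtain ⟨t, htx, ht⟩ := (hnear.and self_mem_nhdsWithin).exists
    exact (ht₀max ⟨ht₀.trans ht.le, htx⟩).not_gt ht
  refine ⟨t₀, ht₀.lt_of_ne fun h => ?_, ht₀x, k, hk, hkd⟩
  subst h
  exact hkd ((mem_activeKernel f).1 hd k (by simpa using hk))

theorem exists_activeKernel_eq_bot [Finite ι] [FiniteDimensional ℂ E]
    (hf : ∀ x, (∀ k, f k x = 0) → x = 0) {x : E} (hx : x ∈ adjointBall f) :
    ∃ w ∈ adjointBall f, (∀ k, ‖f k x‖ = 1 → f k w = f k x) ∧ activeKernel f w = ⊥ := by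
  induction hm : Module.finrank ℂ (activeKernel f x) using Nat.strong_induction_on
    generalizing x with
  | _ m ih =>
  by_cases hK : activeKernel f x = ⊥
  · exact ⟨x, hx, fun _ _ => rfl, hK⟩
  obtain ⟨d, hd, hd0⟩ := (Submodule.ne_bot_iff _).1 hK
  obtain ⟨t, -, hx', k', hk', hk'd⟩ :=
    exists_pos_norm_eq_one_of_mem_activeKernel f hx hd (exists_apply_ne_zero f hf hd0)
  have hkeep : ∀ k, ‖f k x‖ = 1 → f k (x + (t : ℂ) • d) = f k x := fun k hk =>
    apply_add_smul_of_mem_activeKernel f hd _ hk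
  have hlt : activeKernel f (x + (t : ℂ) • d) < activeKernel f x := by
    refine SetLike.lt_iff_le_and_exists.2 ⟨fun v hv => ?_, d, hd, ?_⟩
    · simp only [mem_activeKernel] at hv ⊢
      exact fun k hk => hv k (hkeep k hk ▸ hk)
    · exact fun h => hk'd ((mem_activeKernel f).1 h k' hk')
  obtain ⟨w, hw, hwx', hwK⟩ := ih _ (hm ▸ Submodule.finrank_lt_finrank_of_lt hlt) hx' rfl
  exact ⟨w, hw, fun k hk => (hwx' k (hkeep k hk ▸ hk)).trans (hkeep k hk), hwK⟩

theorem exists_pos_activeKernel_eq_bot_of_mem_activeKernel [Finite ι] [FiniteDimensional ℂ E]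
    (hf : ∀ x, (∀ k, f k x = 0) → x = 0) {x d : E} (hx : x ∈ adjointBall f)
    (hd : d ∈ activeKernel f x) (hd0 : d ≠ 0) :
    ∃ t : ℝ, 0 < t ∧ ∃ w ∈ adjointBall f, (∀ k, ‖f k x‖ = 1 → f k w = f k x) ∧
      activeKernel f w = ⊥ ∧ ∃ k, f k d ≠ 0 ∧ f k w = f k x + t * f k d := by
  obtain ⟨t, ht, hx', k, hk, hkd⟩ :=
    exists_pos_norm_eq_one_of_mem_activeKernel f hx hd (exists_apply_ne_zero f hf hd0)
  obtain ⟨w, hw, hwx', hwK⟩ := exists_activeKernel_eq_bot f hf hx'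
  refine ⟨t, ht, w, hw, fun j hj => ?_, hwK, k, hkd, by simpa using hwx' k hk⟩
  have hkeep := apply_add_smul_of_mem_activeKernel f hd t hj
  exact (hwx' j (hkeep ▸ hj)).trans hkeep

section Vertices

variable [Finite ι] [FiniteDimensional ℂ E] [Finite κ] {u : κ → E}

theorem activeKernel_eq_bot_of_norm_eq_one (hf : ∀ x, (∀ k, f k x = 0) → x = 0)
    (hvert : ∀ w ∈ adjointBall f, (∃ k, ‖f k w‖ = 1) → activeKernel f w = ⊥ → ∃ i, w ∈ ℂ ∙ u i)
    {x : E} (hx : x ∈ adjointBall f) {k₀ : ι} (hk₀ : ‖f k₀ x‖ = 1) : activeKernel f x = ⊥ := by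
  by_contra hK
  obtain ⟨d, hd, hd0⟩ := (Submodule.ne_bot_iff _).1 hK
  -- no two of the directions `(1 + l * I) • d` are positive real multiples of each other
  have hvertex : ∀ l : ℕ, ∃ (t : ℝ) (w : E) (k : ι) (i : κ), 0 < t ∧ f k₀ w = f k₀ x ∧
      f k w = f k x + t * (1 + l * Complex.I) * f k d ∧ f k d ≠ 0 ∧ w ∈ ℂ ∙ u i := by
    intro l
    have hz : (1 + l * Complex.I : ℂ) ≠ 0 := fun h => by simpa using congrArg Complex.re h
    obtain ⟨t, ht, w, hw, hwx, hwK, k, hkd, hkw⟩ :=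
      exists_pos_activeKernel_eq_bot_of_mem_activeKernel f hf hx
        (smul_mem _ (1 + l * Complex.I) hd) (smul_ne_zero hz hd0)
    obtain ⟨i, hi⟩ := hvert w hw ⟨k₀, hwx k₀ hk₀ ▸ hk₀⟩ hwK
    exact ⟨t, w, k, i, ht, hwx k₀ hk₀, by simpa [mul_assoc] using hkw, by simpa [hz] using hkd, hi⟩
  choose t w k i ht hwk₀ hwk hkd hwi using hvertex
  obtain ⟨l, l', hll', hkil⟩ := Finite.exists_ne_map_eq_of_infinite fun l => (k l, i l)
  obtain ⟨hk, hi⟩ := Prod.mk.inj hkil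
  have hw : w l = w l' := eq_of_mem_span_singleton_of_apply_eq (hwi l) (hi ▸ hwi l')
    ((hwk₀ l).trans (hwk₀ l').symm) (hwk₀ l ▸ norm_ne_zero_iff.1 (hk₀ ▸ one_ne_zero))
  have hz : (t l : ℂ) * (1 + l * Complex.I) = t l' * (1 + l' * Complex.I) := by
    have hl' := hwk l'
    rw [← hw, ← hk] at hl'
    exact mul_right_cancel₀ (hkd l) (add_left_cancel ((hwk l).symm.trans hl'))
  obtain ⟨htt, hll⟩ : t l = t l' ∧ t l * l = t l' * l' := by simpa [Complex.ext_iff] using hz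
  rw [← htt] at hll
  exact hll' (by exact_mod_cast mul_left_cancel₀ (ht l).ne' hll)

theorem exists_mem_span_singleton [Nontrivial E] (hf : ∀ x, (∀ k, f k x = 0) → x = 0)
    (hvert : ∀ w ∈ adjointBall f, (∃ k, ‖f k w‖ = 1) → activeKernel f w = ⊥ → ∃ i, w ∈ ℂ ∙ u i)
    (v : E) : ∃ i, v ∈ ℂ ∙ u i := by
  suffices h : ∀ v ≠ (0 : E), ∃ i, v ∈ ℂ ∙ u i by
    obtain ⟨v₀, hv₀⟩ := exists_ne (0 : E)
    obtain ⟨i, -⟩ := h v₀ hv₀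
    rcases eq_or_ne v 0 with rfl | hv
    exacts [⟨i, zero_mem _⟩, h v hv]
  intro v hv
  obtain ⟨k₁, hk₁⟩ := exists_apply_ne_zero f hf hv
  have : Nonempty ι := ⟨k₁⟩
  obtain ⟨k, hk⟩ := Finite.exists_max fun k => ‖f k v‖
  have hs : 0 < ‖f k v‖ := (norm_pos_iff.2 hk₁).trans_le (hk k₁)
  have hnorm : ∀ j, ‖f j ((‖f k v‖⁻¹ : ℂ) • v)‖ = ‖f k v‖⁻¹ * ‖f j v‖ := by simp
  have hy : (‖f k v‖⁻¹ : ℂ) • v ∈ adjointBall f := fun j => by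
    rw [hnorm, inv_mul_le_one₀ hs]; exact hk j
  have hyk : ‖f k ((‖f k v‖⁻¹ : ℂ) • v)‖ = 1 := by rw [hnorm, inv_mul_cancel₀ hs.ne']
  obtain ⟨i, hi⟩ := hvert _ hy ⟨k, hyk⟩ (activeKernel_eq_bot_of_norm_eq_one f hf hvert hy hyk)
  exact ⟨i, (smul_mem_iff _ (by simpa using hs.ne')).1 hi⟩

end Vertices

theorem adjointBall_ne_absconv [Finite ι] [FiniteDimensional ℂ E] [Fintype κ]
    (hE : 2 ≤ Module.finrank ℂ E) (hf : ∀ x, (∀ k, f k x = 0) → x = 0) (u : κ → E) :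
    adjointBall f ≠ absconv u := by
  intro hball
  have : Nontrivial E := Module.nontrivial_of_finrank_pos (R := ℂ) (by omega)
  obtain ⟨i, hi⟩ := Subspace.exists_eq_top_of_iUnion_eq_univ (p := fun i => ℂ ∙ u i) <|
    Set.eq_univ_of_forall fun v => Set.mem_iUnion.2 <| exists_mem_span_singleton f hf
      (fun _ hw ⟨_, hk⟩ hK => mem_span_singleton_of_activeKernel_eq_bot f hball hw hk hK) v
  have hrank := finrank_span_le_card (R := ℂ) ({u i} : Set E)
  rw [hi, finrank_top, Set.toFinset_singleton, Finset.card_singleton] at hrank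
  omega

end AdjointBall

theorem stmt2 (n : ℕ) (hn : 2 ≤ n) :
    ¬ ∃ (nrm : (Fin n → ℂ) → ℝ),
      (∀ x y, nrm (x + y) ≤ nrm x + nrm y) ∧
      (∀ (c : ℂ) x, nrm (c • x) = ‖c‖ * nrm x) ∧
      (∀ x, nrm x = 0 → x = 0) ∧
      (∃ (N : ℕ) (u : Fin N → (Fin n → ℂ)),
        Submodule.span ℂ (Set.range u) = ⊤ ∧
        {x | nrm x ≤ 1} =
          {x | ∃ α : Fin N → ℂ, (∑ j, ‖α j‖) ≤ 1 ∧ x = ∑ j, α j • u j}) ∧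
      (∃ (M : ℕ) (f : Fin M → ((Fin n → ℂ) →ₗ[ℂ] ℂ)),
        ∀ x, IsGreatest (Set.range fun j => ‖f j x‖) (nrm x)) := by
  rintro ⟨nrm, -, -, hzero, ⟨N, u, -, hball⟩, ⟨M, f, hmax⟩⟩
  have hf : ∀ x, (∀ k, f k x = 0) → x = 0 := fun x hx => hzero x <| by
    obtain ⟨k, hk⟩ := (hmax x).1
    simpa [hx k] using hk.symm
  refine adjointBall_ne_absconv f (by simpa using hn) hf u (.trans ?_ hball)
  ext x
  simp [adjointBall, isLUB_le_iff (hmax x).isLUB, mem_upperBounds]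
end

section
/- Let X = (ℂⁿ, ‖·‖) where ‖x‖ = max_{1 ≤ j ≤ N} |f_j(x)| for nonzero ℂ-linear functionals f₁, …, f_N : ℂⁿ → ℂ, and suppose this defines a norm. Let Y ⊆ X be a linear subspace and x ∈ X \ Y. Then: (i) 0 is a best approximation for x in Y if and only if for every y ∈ Y there exists 1 ≤ j ≤ N such that |f_j(x)| = ‖x‖ and Re(conj(f_j(x))·f_j(y)) ≤ 0; (ii) 0 is the unique best approximation for x in Y if and only if for every nonzero y ∈ Y there exists 1 ≤ j ≤ N such that |f_j(x)| = ‖x‖, Re(conj(f_j(x))·f_j(y)) ≤ 0, and f_j(y) ≠ 0. -/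
/-!
Write `‖z‖ = max_j |f_j z|`. Sufficiency is pointwise: for an active index `j` (one with
`|f_j x| = ‖x‖`), `Re(conj (f_j x) · f_j y) ≤ 0` gives `|f_j x| ≤ |f_j x - f_j y|`, strictly
when `f_j y ≠ 0`, since `|a - b|² = |a|² - 2 Re(conj a · b) + |b|²`.
Necessity is a first-variation argument along the ray `x - t y`, `t ↓ 0`: inactive indices
stay below `‖x‖` by continuity, while an active index with `Re(conj (f_j x) · f_j y) > 0`
strictly decreases and one with `f_j y = 0` is unchanged. As there are finitely many indices,
a single small `t > 0` works for all of them, so `‖x - t y‖ < ‖x‖` (resp. `≤`), and `t y ∈ Y`.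
-/

open Filter Topology

namespace Complex

lemma norm_sub_ofReal_mul_sq (a b : ℂ) (t : ℝ) :
    ‖a - t * b‖ ^ 2 = ‖a‖ ^ 2 - 2 * t * (starRingEnd ℂ a * b).re + t ^ 2 * ‖b‖ ^ 2 := by
  simp only [Complex.sq_norm, normSq_apply, sub_re, sub_im, mul_re, mul_im, ofReal_re, ofReal_im,
    conj_re, conj_im]
  ring

lemma norm_sub_sq (a b : ℂ) :
    ‖a - b‖ ^ 2 = ‖a‖ ^ 2 - 2 * (starRingEnd ℂ a * b).re + ‖b‖ ^ 2 := by
  simpa using norm_sub_ofReal_mul_sq a b 1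

lemma norm_le_norm_sub_of_re_conj_mul_nonpos {a b : ℂ} (h : (starRingEnd ℂ a * b).re ≤ 0) :
    ‖a‖ ≤ ‖a - b‖ := by
  refine (sq_le_sq₀ (norm_nonneg _) (norm_nonneg _)).1 ?_
  nlinarith [norm_sub_sq a b, sq_nonneg ‖b‖]

lemma norm_lt_norm_sub_of_re_conj_mul_nonpos {a b : ℂ} (h : (starRingEnd ℂ a * b).re ≤ 0)
    (hb : b ≠ 0) : ‖a‖ < ‖a - b‖ := by
  refine (pow_lt_pow_iff_left₀ (norm_nonneg _) (norm_nonneg _) two_ne_zero).1 ?_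
  nlinarith [norm_sub_sq a b, pow_pos (norm_pos_iff.2 hb) 2]

lemma eventually_norm_sub_ofReal_mul_lt_norm {a b : ℂ} (h : 0 < (starRingEnd ℂ a * b).re) :
    ∀ᶠ t : ℝ in 𝓝[>] 0, ‖a - t * b‖ < ‖a‖ := by
  have hsmall : ∀ᶠ t : ℝ in 𝓝[>] 0, t * ‖b‖ ^ 2 < 2 * (starRingEnd ℂ a * b).re := by
    refine Tendsto.eventually_lt_const (v := 0) (by linarith) ?_
    exact tendsto_nhdsWithin_of_tendsto_nhds
      ((continuous_id.mul continuous_const).tendsto' 0 0 (by simp))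
  filter_upwards [hsmall, self_mem_nhdsWithin] with t ht (htpos : 0 < t)
  refine (pow_lt_pow_iff_left₀ (norm_nonneg _) (norm_nonneg _) two_ne_zero).1 ?_
  nlinarith [norm_sub_ofReal_mul_sq a b t]

lemma eventually_norm_sub_ofReal_mul_lt {a b : ℂ} {M : ℝ} (h : ‖a‖ < M) :
    ∀ᶠ t : ℝ in 𝓝[>] 0, ‖a - t * b‖ < M := by
  refine Tendsto.eventually_lt_const h (tendsto_nhdsWithin_of_tendsto_nhds ?_)
  exact Continuous.tendsto' (by fun_prop) 0 _ (by simp)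

lemma eventually_norm_sub_ofReal_mul_lt_of_le {a b : ℂ} {M : ℝ} (ha : ‖a‖ ≤ M)
    (h : ‖a‖ = M → 0 < (starRingEnd ℂ a * b).re) :
    ∀ᶠ t : ℝ in 𝓝[>] 0, ‖a - t * b‖ < M := by
  rcases ha.lt_or_eq with hlt | rfl
  · exact eventually_norm_sub_ofReal_mul_lt hlt
  · exact eventually_norm_sub_ofReal_mul_lt_norm (h rfl)

lemma eventually_norm_sub_ofReal_mul_le {a b : ℂ} {M : ℝ} (ha : ‖a‖ ≤ M)
    (h : ‖a‖ = M → 0 < (starRingEnd ℂ a * b).re ∨ b = 0) :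
    ∀ᶠ t : ℝ in 𝓝[>] 0, ‖a - t * b‖ ≤ M := by
  by_cases hb : b = 0
  · simp [hb, ha]
  · exact (eventually_norm_sub_ofReal_mul_lt_of_le ha fun hM => (h hM).resolve_right hb).mono
      fun _ => le_of_lt

end Complex

section MaxNorm

variable {ι E : Type*} [AddCommGroup E] [Module ℂ E] {f : ι → E →ₗ[ℂ] ℂ} {nrm : E → ℝ}

lemma nrm_le_iff (hnrm : ∀ z, IsGreatest (Set.range fun j => ‖f j z‖) (nrm z)) {z : E}
    {M : ℝ} : nrm z ≤ M ↔ ∀ j, ‖f j z‖ ≤ M := by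
  obtain ⟨⟨j, hj⟩, hub⟩ := hnrm z
  exact ⟨fun h i => (hub ⟨i, rfl⟩).trans h, fun h => hj ▸ h j⟩

lemma nrm_lt_iff (hnrm : ∀ z, IsGreatest (Set.range fun j => ‖f j z‖) (nrm z)) {z : E}
    {M : ℝ} : nrm z < M ↔ ∀ j, ‖f j z‖ < M := by
  obtain ⟨⟨j, hj⟩, hub⟩ := hnrm z
  exact ⟨fun h i => (hub ⟨i, rfl⟩).trans_lt h, fun h => hj ▸ h j⟩

variable (hnrm : ∀ z, IsGreatest (Set.range fun j => ‖f j z‖) (nrm z)) {x y : E}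
include hnrm

lemma nrm_le_nrm_sub_of_exists
    (h : ∃ j, ‖f j x‖ = nrm x ∧ (starRingEnd ℂ (f j x) * f j y).re ≤ 0) :
    nrm x ≤ nrm (x - y) := by
  obtain ⟨j, hj, hre⟩ := h
  calc nrm x = ‖f j x‖ := hj.symm
    _ ≤ ‖f j (x - y)‖ := by rw [map_sub]; exact Complex.norm_le_norm_sub_of_re_conj_mul_nonpos hre
    _ ≤ nrm (x - y) := (hnrm _).2 ⟨j, rfl⟩

lemma nrm_lt_nrm_sub_of_exists
    (h : ∃ j, ‖f j x‖ = nrm x ∧ (starRingEnd ℂ (f j x) * f j y).re ≤ 0 ∧ f j y ≠ 0) :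
    nrm x < nrm (x - y) := by
  obtain ⟨j, hj, hre, hy⟩ := h
  calc nrm x = ‖f j x‖ := hj.symm
    _ < ‖f j (x - y)‖ := by
      rw [map_sub]; exact Complex.norm_lt_norm_sub_of_re_conj_mul_nonpos hre hy
    _ ≤ nrm (x - y) := (hnrm _).2 ⟨j, rfl⟩

variable [Finite ι]

lemma exists_pos_nrm_sub_smul_lt
    (h : ∀ j, ‖f j x‖ = nrm x → 0 < (starRingEnd ℂ (f j x) * f j y).re) :
    ∃ t : ℝ, 0 < t ∧ nrm (x - (t : ℂ) • y) < nrm x := by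
  have hj : ∀ j, ∀ᶠ t : ℝ in 𝓝[>] 0, ‖f j (x - (t : ℂ) • y)‖ < nrm x := fun j => by
    simpa using Complex.eventually_norm_sub_ofReal_mul_lt_of_le ((hnrm x).2 ⟨j, rfl⟩) (h j)
  obtain ⟨t, hlt, ht⟩ := ((eventually_all.2 hj).and self_mem_nhdsWithin).exists
  exact ⟨t, ht, (nrm_lt_iff hnrm).2 hlt⟩

lemma exists_pos_nrm_sub_smul_le
    (h : ∀ j, ‖f j x‖ = nrm x → 0 < (starRingEnd ℂ (f j x) * f j y).re ∨ f j y = 0) :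
    ∃ t : ℝ, 0 < t ∧ nrm (x - (t : ℂ) • y) ≤ nrm x := by
  have hj : ∀ j, ∀ᶠ t : ℝ in 𝓝[>] 0, ‖f j (x - (t : ℂ) • y)‖ ≤ nrm x := fun j => by
    simpa using Complex.eventually_norm_sub_ofReal_mul_le ((hnrm x).2 ⟨j, rfl⟩) (h j)
  obtain ⟨t, hle, ht⟩ := ((eventually_all.2 hj).and self_mem_nhdsWithin).exists
  exact ⟨t, ht, (nrm_le_iff hnrm).2 hle⟩

end MaxNorm

theorem stmt3_general (n N : ℕ) (f : Fin N → ((Fin n → ℂ) →ₗ[ℂ] ℂ))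
    (nrm : (Fin n → ℂ) → ℝ)
    (hnrm : ∀ z, IsGreatest (Set.range fun j => ‖f j z‖) (nrm z))
    (Y : Submodule ℂ (Fin n → ℂ)) (x : Fin n → ℂ) :
    ((∀ y ∈ Y, nrm (x - y) ≥ nrm x) ↔
      (∀ y ∈ Y, ∃ j, ‖f j x‖ = nrm x ∧
        (starRingEnd ℂ (f j x) * f j y).re ≤ 0)) ∧
    ((∀ y ∈ Y, y ≠ 0 → nrm (x - y) > nrm x) ↔
      (∀ y ∈ Y, y ≠ 0 → ∃ j, ‖f j x‖ = nrm x ∧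
        (starRingEnd ℂ (f j x) * f j y).re ≤ 0 ∧ f j y ≠ 0)) := by
  refine ⟨⟨fun h y hy => ?_, fun h y hy => nrm_le_nrm_sub_of_exists hnrm (h y hy)⟩,
    ⟨fun h y hy hy0 => ?_, fun h y hy hy0 => nrm_lt_nrm_sub_of_exists hnrm (h y hy hy0)⟩⟩
  · by_contra! hc
    obtain ⟨t, -, hlt⟩ := exists_pos_nrm_sub_smul_lt hnrm hc
    exact (h _ (Y.smul_mem _ hy)).not_gt hlt
  · by_contra! hc
    obtain ⟨t, ht, hle⟩ := exists_pos_nrm_sub_smul_le hnrm fun j hj =>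
      or_iff_not_imp_left.2 fun hre => hc j hj (not_lt.1 hre)
    have hty : (t : ℂ) • y ≠ 0 := smul_ne_zero (Complex.ofReal_ne_zero.2 ht.ne') hy0
    exact (h _ (Y.smul_mem _ hy) hty).not_ge hle

theorem stmt3 (n N : ℕ) (f : Fin N → ((Fin n → ℂ) →ₗ[ℂ] ℂ)) (hf : ∀ j, f j ≠ 0)
    (nrm : (Fin n → ℂ) → ℝ)
    (hnrm : ∀ z, IsGreatest (Set.range fun j => ‖f j z‖) (nrm z))
    (hdef : ∀ z, nrm z = 0 → z = 0)
    (Y : Submodule ℂ (Fin n → ℂ)) (x : Fin n → ℂ) (hx : x ∉ Y) :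
    ((∀ y ∈ Y, nrm (x - y) ≥ nrm x) ↔
      (∀ y ∈ Y, ∃ j, ‖f j x‖ = nrm x ∧
        (starRingEnd ℂ (f j x) * f j y).re ≤ 0)) ∧
    ((∀ y ∈ Y, y ≠ 0 → nrm (x - y) > nrm x) ↔
      (∀ y ∈ Y, y ≠ 0 → ∃ j, ‖f j x‖ = nrm x ∧
        (starRingEnd ℂ (f j x) * f j y).re ≤ 0 ∧ f j y ≠ 0)) :=
  stmt3_general n N f nrm hnrm Y x
end

section
/- Let X = (ℂⁿ, ‖·‖) be a complex normed space with an adjoint complex polytope norm, i.e. ‖x‖ = max_{1 ≤ j ≤ N} |f_j(x)| for finitely many ℂ-linear functionals f₁, …, f_N on ℂⁿ. Let Y ⊆ X be a one-dimensional linear subspace and let x ∈ X \ Y be a vector for which y₀ ∈ Y is the unique best approximation in Y. Then y₀ is a 2-strongly unique best approximation for x in Y: there exists r > 0 such that ‖x − y‖² ≥ ‖x − y₀‖² + r‖y − y₀‖² for all y ∈ Y. -/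
/-!
Write `z = x - y₀` and `Y = ℂ v`. Fix `t ≠ 0`. If every functional `f j` with `|f j z| = ‖z‖` and
`f j v ≠ 0` had `Re (f j z * conj (f j (t v))) > 0`, then for small `ε > 0` no `|f j (z - ε t v)|`
would exceed `‖z‖` (inactive `j` by continuity, active `j` by the first-order term), contradicting
uniqueness. For the functional `j` so found, expanding `|f j z - f j (t v)|²` gives
`‖z - t v‖² ≥ ‖z‖² + |t|² |f j v|²`, and `|f j v| ≥ β ‖v‖` for one `β > 0` serving the finitely
many `j` with `f j v ≠ 0`.
-/

open Filter Topology ComplexConjugate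

theorem Complex.eventually_norm_sub_ofReal_mul_le_s4 {a c : ℂ} {m : ℝ} (ha : ‖a‖ ≤ m)
    (hc : ‖a‖ = m → c ≠ 0 → 0 < (a * conj c).re) :
    ∀ᶠ ε : ℝ in 𝓝[>] 0, ‖a - ε * c‖ ≤ m := by
  rcases ha.lt_or_eq with hlt | rfl
  · have hcont : Tendsto (fun ε : ℝ => ‖a - ε * c‖) (𝓝 0) (𝓝 ‖a‖) := by
      simpa using (show Continuous (fun ε : ℝ => ‖a - ε * c‖) by fun_prop).tendsto 0
    exact ((hcont.mono_left nhdsWithin_le_nhds).eventually_lt_const hlt).mono fun _ h => h.le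
  rcases eq_or_ne c 0 with rfl | hc0
  · simp
  have hre := hc rfl hc0
  have hnc := Complex.normSq_pos.mpr hc0
  filter_upwards [Ioo_mem_nhdsGT (div_pos (mul_pos two_pos hre) hnc)] with ε ⟨hε0, hε⟩
  rw [lt_div_iff₀ hnc] at hε
  have hsq : ‖a - ε * c‖ ^ 2 ≤ ‖a‖ ^ 2 := by
    rw [Complex.sq_norm, Complex.sq_norm, Complex.normSq_sub, Complex.normSq_mul,
      Complex.normSq_ofReal, map_mul, Complex.conj_ofReal, mul_left_comm, Complex.re_ofReal_mul]
    nlinarith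
  exact (pow_le_pow_iff_left₀ (norm_nonneg _) (norm_nonneg _) two_ne_zero).mp hsq

theorem exists_pos_mul_le_of_pos {ι : Type*} [Finite ι] (g : ι → ℝ) (c : ℝ) :
    ∃ β > 0, ∀ j, 0 < g j → β * c ≤ g j := by
  have hsmall : ∀ j, ∀ᶠ β : ℝ in 𝓝[>] 0, 0 < g j → β * c ≤ g j := by
    intro j
    by_cases hj : 0 < g j
    · have hlim : Tendsto (fun β : ℝ => β * c) (𝓝[>] 0) (𝓝 0) :=
        ((continuous_id.mul continuous_const).tendsto' 0 0 (zero_mul _)).mono_left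
          nhdsWithin_le_nhds
      exact (hlim.eventually_lt_const hj).mono fun _ hβ _ => hβ.le
    · simp [hj]
  obtain ⟨β, hβ, hβ0⟩ := ((eventually_all.mpr hsmall).and self_mem_nhdsWithin).exists
  exact ⟨β, hβ0, hβ⟩

section PolytopeNorm

variable {ι E : Type*} [AddCommGroup E] [Module ℂ E] {f : ι → E →ₗ[ℂ] ℂ}
  {nrm : E → ℝ} (hnrm : ∀ z, IsGreatest (Set.range fun j => ‖f j z‖) (nrm z))
include hnrm

theorem exists_norm_apply_eq_of_isGreatest (z : E) : ∃ j, ‖f j z‖ = nrm z :=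
  (hnrm z).1

theorem norm_apply_le_of_isGreatest (z : E) (j : ι) : ‖f j z‖ ≤ nrm z :=
  (hnrm z).2 ⟨j, rfl⟩

theorem nrm_smul_of_isGreatest (t : ℂ) (z : E) : nrm (t • z) = ‖t‖ * nrm z := by
  obtain ⟨i, hi⟩ := exists_norm_apply_eq_of_isGreatest hnrm (t • z)
  obtain ⟨j, hj⟩ := exists_norm_apply_eq_of_isGreatest hnrm z
  apply le_antisymm
  · rw [← hi, map_smul, smul_eq_mul, norm_mul]
    exact mul_le_mul_of_nonneg_left (norm_apply_le_of_isGreatest hnrm z i) (norm_nonneg t)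
  · rw [← hj, ← norm_mul, ← smul_eq_mul, ← map_smul]
    exact norm_apply_le_of_isGreatest hnrm _ j

theorem sq_add_sq_le_of_active {z u : E} {j : ι} (hj : ‖f j z‖ = nrm z)
    (hre : (f j z * conj (f j u)).re ≤ 0) :
    nrm z ^ 2 + ‖f j u‖ ^ 2 ≤ nrm (z - u) ^ 2 := by
  have hsq : ‖f j z - f j u‖ ^ 2 = ‖f j z‖ ^ 2 + ‖f j u‖ ^ 2 - 2 * (f j z * conj (f j u)).re := by
    simp only [Complex.sq_norm, Complex.normSq_sub]
  calc nrm z ^ 2 + ‖f j u‖ ^ 2 ≤ ‖f j (z - u)‖ ^ 2 := by rw [map_sub, hsq, hj]; linarith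
    _ ≤ nrm (z - u) ^ 2 :=
      pow_le_pow_left₀ (norm_nonneg _) (norm_apply_le_of_isGreatest hnrm _ j) 2

variable [Finite ι]

theorem exists_active_re_mul_conj_nonpos {z u : E}
    (h : ∀ ε : ℝ, 0 < ε → nrm z < nrm (z - (ε : ℂ) • u)) :
    ∃ j, ‖f j z‖ = nrm z ∧ f j u ≠ 0 ∧ (f j z * conj (f j u)).re ≤ 0 := by
  by_contra! hcon
  have hall : ∀ᶠ ε : ℝ in 𝓝[>] 0, ∀ j, ‖f j z - ε * f j u‖ ≤ nrm z :=
    eventually_all.mpr fun j => Complex.eventually_norm_sub_ofReal_mul_le_s4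
      (norm_apply_le_of_isGreatest hnrm z j) (hcon j)
  obtain ⟨ε, hε, hε0⟩ := (hall.and self_mem_nhdsWithin).exists
  obtain ⟨j, hj⟩ := exists_norm_apply_eq_of_isGreatest hnrm (z - (ε : ℂ) • u)
  have := h ε hε0
  rw [← hj, map_sub, map_smul, smul_eq_mul] at this
  linarith [hε j]

theorem exists_pos_sq_add_le_of_unique_on_line {z v : E}
    (huniq : ∀ t : ℂ, t ≠ 0 → nrm z < nrm (z - t • v)) :
    ∃ r > 0, ∀ t : ℂ, nrm z ^ 2 + r * nrm (t • v) ^ 2 ≤ nrm (z - t • v) ^ 2 := by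
  obtain ⟨β, hβ, hβle⟩ := exists_pos_mul_le_of_pos (fun j => ‖f j v‖) (nrm v)
  refine ⟨β ^ 2, pow_pos hβ 2, fun t => ?_⟩
  rcases eq_or_ne t 0 with rfl | ht
  · rw [nrm_smul_of_isGreatest hnrm, zero_smul, sub_zero]
    simp
  obtain ⟨j, hj, hju, hre⟩ := exists_active_re_mul_conj_nonpos hnrm (u := t • v)
    fun ε hε => by simpa [smul_smul] using huniq (ε * t) (mul_ne_zero (by exact_mod_cast hε.ne') ht)
  have hjv : f j v ≠ 0 := by simpa [ht] using hju
  have hcmp : β * nrm (t • v) ≤ ‖f j (t • v)‖ := by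
    rw [nrm_smul_of_isGreatest hnrm, map_smul, smul_eq_mul, norm_mul, mul_left_comm]
    exact mul_le_mul_of_nonneg_left (hβle j (norm_pos_iff.mpr hjv)) (norm_nonneg t)
  calc nrm z ^ 2 + β ^ 2 * nrm (t • v) ^ 2 ≤ nrm z ^ 2 + ‖f j (t • v)‖ ^ 2 := by
        rw [← mul_pow]
        gcongr
        exact mul_nonneg hβ.le ((norm_nonneg _).trans (norm_apply_le_of_isGreatest hnrm _ j))
    _ ≤ nrm (z - t • v) ^ 2 := sq_add_sq_le_of_active hnrm hj hre

end PolytopeNorm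

theorem stmt4_general (n N : ℕ) (f : Fin N → ((Fin n → ℂ) →ₗ[ℂ] ℂ))
    (nrm : (Fin n → ℂ) → ℝ)
    (hnrm : ∀ z, IsGreatest (Set.range fun j => ‖f j z‖) (nrm z))
    (Y : Submodule ℂ (Fin n → ℂ)) (hY : Module.finrank ℂ Y = 1)
    (x : Fin n → ℂ) (y₀ : Fin n → ℂ) (hy₀ : y₀ ∈ Y)
    (huniq : ∀ y ∈ Y, y ≠ y₀ → nrm (x - y) > nrm (x - y₀)) :
    ∃ r > 0, ∀ y ∈ Y, nrm (x - y) ^ 2 ≥ nrm (x - y₀) ^ 2 + r * nrm (y - y₀) ^ 2 := by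
  obtain ⟨v, hv, hspan⟩ := finrank_eq_one_iff'.mp hY
  have hline : ∀ t : ℂ, t ≠ 0 → nrm (x - y₀) < nrm (x - y₀ - t • (v : Fin n → ℂ)) := by
    intro t ht
    have hvne : (v : Fin n → ℂ) ≠ 0 := by simpa using hv
    rw [sub_sub]
    exact huniq _ (Y.add_mem hy₀ (Y.smul_mem t v.2)) (by simp [ht, hvne])
  obtain ⟨r, hr, hsq⟩ := exists_pos_sq_add_le_of_unique_on_line hnrm hline
  refine ⟨r, hr, fun y hy => ?_⟩
  obtain ⟨t, ht⟩ := hspan ⟨y - y₀, Y.sub_mem hy hy₀⟩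
  have hy : y = y₀ + t • (v : Fin n → ℂ) := by
    rw [← sub_eq_iff_eq_add', ← Submodule.coe_smul, ht]
  simpa [hy, sub_sub] using hsq t

theorem stmt4 (n N : ℕ) (f : Fin N → ((Fin n → ℂ) →ₗ[ℂ] ℂ))
    (nrm : (Fin n → ℂ) → ℝ)
    (hnrm : ∀ z, IsGreatest (Set.range fun j => ‖f j z‖) (nrm z))
    (hdef : ∀ z, nrm z = 0 → z = 0)
    (Y : Submodule ℂ (Fin n → ℂ)) (hY : Module.finrank ℂ Y = 1)
    (x : Fin n → ℂ) (hx : x ∉ Y) (y₀ : Fin n → ℂ) (hy₀ : y₀ ∈ Y)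
    (huniq : ∀ y ∈ Y, y ≠ y₀ → nrm (x - y) > nrm (x - y₀)) :
    ∃ r > 0, ∀ y ∈ Y, nrm (x - y) ^ 2 ≥ nrm (x - y₀) ^ 2 + r * nrm (y - y₀) ^ 2 :=
  stmt4_general n N f nrm hnrm Y hY x y₀ hy₀ huniq
end

section
/- Let X = (ℂⁿ, ‖·‖) be a complex normed space whose closed unit ball equals absconv{u₁, …, u_N} for vectors u₁, …, u_N ∈ ℂⁿ. Let Y ⊆ X be a linear subspace and let x ∈ X \ Y have a representation x = a₁u₁ + … + a_N u_N with ‖x‖ = |a₁| + … + |a_N|, where a_j ≠ 0 for 1 ≤ j ≤ m and a_j = 0 for m+1 ≤ j ≤ N. Then: (i) 0 is a best approximation for x in Y if and only if for every y ∈ Y and every representation y = b₁u₁ + … + b_N u_N one has |Σ_{j=1}^{m} (conj(a_j)/|a_j|)·b_j| ≤ Σ_{j=m+1}^{N} |b_j|; (ii) 0 is the unique best approximation for x in Y if and only if in addition: whenever y = b₁u₁ + … + b_N u_N ∈ Y is nonzero and Σ_{j=1}^{m} (conj(a_j)/|a_j|)·b_j = Σ_{j=m+1}^{N} |b_j|,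 there exists 1 ≤ j ≤ m with Im(conj(a_j)·b_j) ≠ 0. -/
/-!
A minimal representation `a` of `x` turns the question into one about the `ℓ¹` norm of
coefficient vectors: `nrm (x - y)` is the least `∑ ‖a j - b j‖` over representations `b` of `y`.
On the support `S` of `a` write `‖a j - b j‖ = ‖‖a j‖ - σ j * b j‖` with `σ j = conj (a j) / ‖a j‖`.
Comparing each term with its real part gives
`∑ ‖a j - b j‖ ≥ ∑ ‖a j‖ - Re φ(b) + ∑_{j ∉ S} ‖b j‖`, `φ(b) = signSum S a b = ∑_{j ∈ S} σ j * b j`,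
with equality exactly when every `σ j * b j` is real and at most `‖a j‖`; this yields sufficiency
in (i) and (ii). Conversely the same expansion holds up to an error `O(‖b‖²)`, so if `‖φ(b)‖`
exceeded the tail sum, a small multiple of a rotation of `b` would decrease the norm; and if
`φ(b)` equals the tail sum with all `σ j * b j` real, small multiples of `b` give equality,
contradicting uniqueness.
-/

open Finset Filter Topology ComplexConjugate
open scoped ComplexOrder

namespace Complex

lemma conj_div_norm_mul_self (z : ℂ) : conj z / ‖z‖ * z = ‖z‖ := by
  rcases eq_or_ne z 0 with rfl | hz
  · simp
  have : (‖z‖ : ℂ) ≠ 0 := by simpa using hz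
  rw [div_mul_eq_mul_div, mul_comm, mul_conj, normSq_eq_norm_sq]
  field_simp
  push_cast; ring

lemma norm_conj_div_norm {z : ℂ} (hz : z ≠ 0) : ‖conj z / ‖z‖‖ = 1 := by
  rw [norm_div, norm_conj, norm_real, norm_norm, div_self (norm_ne_zero_iff.mpr hz)]

lemma norm_sub_eq_norm_ofReal_sub {z : ℂ} (hz : z ≠ 0) (w : ℂ) :
    ‖z - w‖ = ‖(‖z‖ : ℂ) - conj z / ‖z‖ * w‖ := by
  rw [show (‖z‖ : ℂ) - conj z / ‖z‖ * w = conj z / ‖z‖ * (z - w) by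
    rw [mul_sub, conj_div_norm_mul_self], norm_mul, norm_conj_div_norm hz, one_mul]

lemma norm_ofReal_sub_le {r : ℝ} (hr : 0 < r) (w : ℂ) :
    ‖(r : ℂ) - w‖ ≤ r - w.re + ‖w‖ ^ 2 / (2 * r) := by
  have hsq : ‖(r : ℂ) - w‖ ^ 2 = r ^ 2 - 2 * r * w.re + ‖w‖ ^ 2 := by
    simp only [Complex.sq_norm, normSq_apply, sub_re, sub_im, ofReal_re, ofReal_im]; ring
  rw [show r - w.re + ‖w‖ ^ 2 / (2 * r) = (‖(r : ℂ) - w‖ ^ 2 + r ^ 2) / (2 * r) by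
    rw [hsq]; field_simp; ring, le_div_iff₀ (by positivity)]
  nlinarith [sq_nonneg (‖(r : ℂ) - w‖ - r)]

lemma conj_mul_eq_norm_mul {z : ℂ} (hz : z ≠ 0) (w : ℂ) :
    conj z * w = ‖z‖ * (conj z / ‖z‖ * w) := by
  have : (‖z‖ : ℂ) ≠ 0 := by simpa using hz
  field_simp

end Complex

variable {ι : Type*}

noncomputable def signSum (S : Finset ι) (a b : ι → ℂ) : ℂ :=
  ∑ j ∈ S, conj (a j) / ‖a j‖ * b j

lemma signSum_const_mul (S : Finset ι) (a b : ι → ℂ) (c : ℂ) :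
    signSum S a (fun j => c * b j) = c * signSum S a b := by
  simp only [signSum, mul_sum]
  exact sum_congr rfl fun j _ => by ring

section Coefficients

variable [Fintype ι] [DecidableEq ι]
variable {S : Finset ι} {a : ι → ℂ}

lemma sum_norm_sub_eq (hS : ∀ j, a j ≠ 0 ↔ j ∈ S) (b : ι → ℂ) :
    ∑ j, ‖a j - b j‖ =
      ∑ j ∈ S, ‖(‖a j‖ : ℂ) - conj (a j) / ‖a j‖ * b j‖ + ∑ j ∈ Sᶜ, ‖b j‖ := by
  rw [← sum_add_sum_compl S]
  congr 1
  · exact sum_congr rfl fun j hj => Complex.norm_sub_eq_norm_ofReal_sub ((hS j).2 hj) _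
  · refine sum_congr rfl fun j hj => ?_
    rw [not_ne_iff.1 (mt (hS j).1 (mem_compl.1 hj)), zero_sub, norm_neg]

lemma sum_norm_sub_re_signSum (hS : ∀ j, a j ≠ 0 ↔ j ∈ S) (b : ι → ℂ) :
    ∑ j, ‖a j‖ - (signSum S a b).re =
      ∑ j ∈ S, ((‖a j‖ : ℂ) - conj (a j) / ‖a j‖ * b j).re := by
  have hzero : ∑ j ∈ Sᶜ, ‖a j‖ = 0 :=
    sum_eq_zero fun j hj => by rw [not_ne_iff.1 (mt (hS j).1 (mem_compl.1 hj)), norm_zero]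
  rw [← sum_add_sum_compl S, hzero, add_zero, signSum, Complex.re_sum, ← sum_sub_distrib]
  simp only [Complex.sub_re, Complex.ofReal_re]

lemma sum_norm_le_sum_norm_sub (hS : ∀ j, a j ≠ 0 ↔ j ∈ S) {b : ι → ℂ}
    (hb : ‖signSum S a b‖ ≤ ∑ j ∈ Sᶜ, ‖b j‖) : ∑ j, ‖a j‖ ≤ ∑ j, ‖a j - b j‖ := by
  have hre := sum_norm_sub_re_signSum hS b
  have hnorm := sum_norm_sub_eq hS b
  have hle := sum_le_sum fun j (_ : j ∈ S) =>
    Complex.re_le_norm ((‖a j‖ : ℂ) - conj (a j) / ‖a j‖ * b j)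
  linarith [Complex.re_le_norm (signSum S a b)]

lemma signSum_eq_and_im_eq_zero_of_sum_norm_sub_le (hS : ∀ j, a j ≠ 0 ↔ j ∈ S) {b : ι → ℂ}
    (hb : ‖signSum S a b‖ ≤ ∑ j ∈ Sᶜ, ‖b j‖) (hab : ∑ j, ‖a j - b j‖ ≤ ∑ j, ‖a j‖) :
    signSum S a b = ((∑ j ∈ Sᶜ, ‖b j‖ : ℝ) : ℂ) ∧ ∀ j ∈ S, (conj (a j) * b j).im = 0 := by
  have hre := sum_norm_sub_re_signSum hS b
  have hnorm := sum_norm_sub_eq hS b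
  have hle : ∀ j ∈ S, ((‖a j‖ : ℂ) - conj (a j) / ‖a j‖ * b j).re
      ≤ ‖(‖a j‖ : ℂ) - conj (a j) / ‖a j‖ * b j‖ := fun j _ => Complex.re_le_norm _
  have hφ := Complex.re_le_norm (signSum S a b)
  have hsum := sum_le_sum hle
  have heq : ∑ j ∈ S, ((‖a j‖ : ℂ) - conj (a j) / ‖a j‖ * b j).re
      = ∑ j ∈ S, ‖(‖a j‖ : ℂ) - conj (a j) / ‖a j‖ * b j‖ := le_antisymm hsum (by linarith)
  refine ⟨?_, fun j hj => ?_⟩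
  · have hnonneg : (0 : ℂ) ≤ signSum S a b := Complex.re_eq_norm.1 (by linarith)
    rw [Complex.eq_re_of_ofReal_le (r := 0) (z := signSum S a b) (by simpa using hnonneg)]
    congr 1
    linarith
  · have hw := Complex.re_eq_norm.1 ((sum_eq_sum_iff_of_le hle).1 heq j hj)
    have him : (conj (a j) / ‖a j‖ * b j).im = 0 := by
      have := (Complex.le_def.1 hw).2
      rw [Complex.zero_im, Complex.sub_im, Complex.ofReal_im] at this
      linarith
    rw [Complex.conj_mul_eq_norm_mul ((hS j).2 hj), Complex.im_ofReal_mul, him, mul_zero]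

lemma sum_norm_sub_le (hS : ∀ j, a j ≠ 0 ↔ j ∈ S) (b : ι → ℂ) :
    ∑ j, ‖a j - b j‖ ≤ ∑ j, ‖a j‖ - (signSum S a b).re + ∑ j ∈ Sᶜ, ‖b j‖
      + ∑ j ∈ S, ‖b j‖ ^ 2 / (2 * ‖a j‖) := by
  have hre := sum_norm_sub_re_signSum hS b
  have hnorm := sum_norm_sub_eq hS b
  have hle : ∀ j ∈ S, ‖(‖a j‖ : ℂ) - conj (a j) / ‖a j‖ * b j‖
      ≤ ((‖a j‖ : ℂ) - conj (a j) / ‖a j‖ * b j).re + ‖b j‖ ^ 2 / (2 * ‖a j‖) := by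
    intro j hj
    have ha := (hS j).2 hj
    have := Complex.norm_ofReal_sub_le (norm_pos_iff.2 ha) (conj (a j) / ‖a j‖ * b j)
    rwa [norm_mul, Complex.norm_conj_div_norm ha, one_mul, ← Complex.ofReal_re (‖a j‖),
      ← Complex.sub_re, Complex.ofReal_re] at this
  have := sum_le_sum hle
  rw [sum_add_distrib] at this
  linarith

lemma norm_signSum_le_of_forall_le (hS : ∀ j, a j ≠ 0 ↔ j ∈ S) {b : ι → ℂ}
    (h : ∀ c : ℂ, ∑ j, ‖a j‖ ≤ ∑ j, ‖a j - c * b j‖) :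
    ‖signSum S a b‖ ≤ ∑ j ∈ Sᶜ, ‖b j‖ := by
  set C := ∑ j ∈ S, ‖b j‖ ^ 2 / (2 * ‖a j‖)
  have hC : 0 ≤ C := sum_nonneg fun j _ => by positivity
  have hψ : 0 ≤ ∑ j ∈ Sᶜ, ‖b j‖ := sum_nonneg fun j _ => norm_nonneg _
  rcases eq_or_ne (signSum S a b) 0 with h0 | h0
  · simpa [h0] using hψ
  set z := conj (signSum S a b) / ‖signSum S a b‖
  have hz : ‖z‖ = 1 := Complex.norm_conj_div_norm h0
  have hexpand : ∀ t : ℝ, 0 < t →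
      t * ‖signSum S a b‖ ≤ t * ∑ j ∈ Sᶜ, ‖b j‖ + t ^ 2 * C := by
    intro t ht
    have hup := sum_norm_sub_le hS (fun j => (t * z) * b j)
    have hφ : (signSum S a (fun j => (t * z) * b j)).re = t * ‖signSum S a b‖ := by
      rw [signSum_const_mul, mul_assoc, Complex.conj_div_norm_mul_self, ← Complex.ofReal_mul,
        Complex.ofReal_re]
    have hnorm : ∀ j, ‖(t * z) * b j‖ = t * ‖b j‖ := fun j => by
      rw [norm_mul, norm_mul, hz, mul_one, Complex.norm_real, Real.norm_of_nonneg ht.le]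
    have hquad : ∑ j ∈ S, (t * ‖b j‖) ^ 2 / (2 * ‖a j‖) = t ^ 2 * C := by
      rw [mul_sum]; exact sum_congr rfl fun j _ => by ring
    simp only [hnorm, hφ, ← mul_sum, hquad] at hup
    linarith [h (t * z)]
  -- `hexpand` says `‖signSum S a b‖ ≤ ∑ j ∈ Sᶜ, ‖b j‖ + t * C` for every `t > 0`
  by_contra! hlt
  set t := (‖signSum S a b‖ - ∑ j ∈ Sᶜ, ‖b j‖) / (C + 1)
  have ht : 0 < t := div_pos (by linarith) (by linarith)
  have htC : t * (C + 1) = ‖signSum S a b‖ - ∑ j ∈ Sᶜ, ‖b j‖ := div_mul_cancel₀ _ (by linarith)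
  nlinarith [hexpand t ht]

lemma exists_pos_sum_norm_sub_mul_eq (hS : ∀ j, a j ≠ 0 ↔ j ∈ S) {b : ι → ℂ}
    (hb : signSum S a b = ((∑ j ∈ Sᶜ, ‖b j‖ : ℝ) : ℂ))
    (him : ∀ j ∈ S, (conj (a j) * b j).im = 0) :
    ∃ t : ℝ, 0 < t ∧ ∑ j, ‖a j - t * b j‖ = ∑ j, ‖a j‖ := by
  have hsmall : ∀ᶠ t in 𝓝[>] (0 : ℝ), ∀ j ∈ S, t * ‖b j‖ < ‖a j‖ := by
    refine (eventually_all_finset S).2 fun j hj => eventually_nhdsWithin_of_eventually_nhds ?_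
    have hcont : Continuous fun t : ℝ => t * ‖b j‖ := continuous_id.mul continuous_const
    exact hcont.continuousAt.eventually_lt continuousAt_const
      (by simpa using (hS j).2 hj)
  obtain ⟨t, ht, htpos⟩ := (hsmall.and self_mem_nhdsWithin).exists
  refine ⟨t, htpos, ?_⟩
  have hre := sum_norm_sub_re_signSum hS (fun j => t * b j)
  have hnorm := sum_norm_sub_eq hS (fun j => t * b j)
  have hreal : ∀ j ∈ S, ‖(‖a j‖ : ℂ) - conj (a j) / ‖a j‖ * (t * b j)‖
      = ((‖a j‖ : ℂ) - conj (a j) / ‖a j‖ * (t * b j)).re := by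
    intro j hj
    have ha := (hS j).2 hj
    have him' : (conj (a j) / ‖a j‖ * b j).im = 0 := by
      have := him j hj
      rw [Complex.conj_mul_eq_norm_mul ha, Complex.im_ofReal_mul] at this
      exact (mul_eq_zero.1 this).resolve_left (norm_ne_zero_iff.2 ha)
    have hre_le : (conj (a j) / ‖a j‖ * b j).re ≤ ‖b j‖ := by
      refine (Complex.re_le_norm _).trans_eq ?_
      rw [norm_mul, Complex.norm_conj_div_norm ha, one_mul]
    refine (Complex.re_eq_norm.2 (Complex.le_def.2 ⟨?_, ?_⟩)).symm
    · rw [mul_left_comm, Complex.zero_re, Complex.sub_re, Complex.re_ofReal_mul,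
        Complex.ofReal_re]
      linarith [ht j hj, mul_le_mul_of_nonneg_left hre_le htpos.le]
    · rw [mul_left_comm, Complex.sub_im, Complex.im_ofReal_mul, Complex.ofReal_im, him']
      simp
  have hψ : ∑ j ∈ Sᶜ, ‖(t : ℂ) * b j‖ = t * ∑ j ∈ Sᶜ, ‖b j‖ := by
    rw [mul_sum]
    exact sum_congr rfl fun j _ => by
      rw [norm_mul, Complex.norm_real, Real.norm_of_nonneg htpos.le]
  rw [signSum_const_mul, hb, ← Complex.ofReal_mul, Complex.ofReal_re] at hre
  rw [hnorm, sum_congr rfl hreal, ← hre, hψ]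
  ring

end Coefficients

section RepresentationNorm

variable {E : Type*} [AddCommGroup E] [Module ℂ E] [Fintype ι] {u : ι → E} {nrm : E → ℝ}

lemma sum_sub_mul_smul (a b : ι → ℂ) (c : ℂ) (u : ι → E) :
    ∑ j, (a j - c * b j) • u j = ∑ j, a j • u j - c • ∑ j, b j • u j := by
  simp only [sub_smul, mul_smul, sum_sub_distrib, smul_sum]

lemma nrm_sum_smul_le (hsmul : ∀ (c : ℂ) v, nrm (c • v) = ‖c‖ * nrm v)
    (hball : {v | nrm v ≤ 1} = {v | ∃ α : ι → ℂ, (∑ j, ‖α j‖) ≤ 1 ∧ v = ∑ j, α j • u j})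
    (c : ι → ℂ) : nrm (∑ j, c j • u j) ≤ ∑ j, ‖c j‖ := by
  refine le_of_forall_pos_le_add fun ε hε => ?_
  set r := ∑ j, ‖c j‖ + ε
  have hr : 0 < r := by positivity
  have hmem : (r : ℂ)⁻¹ • ∑ j, c j • u j ∈ {v | nrm v ≤ 1} := by
    rw [hball]
    refine ⟨fun j => (r : ℂ)⁻¹ * c j, ?_, by simp only [smul_sum, mul_smul]⟩
    simp only [norm_mul, norm_inv, Complex.norm_real, Real.norm_of_nonneg hr.le, ← mul_sum]
    rw [inv_mul_le_one₀ hr]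
    linarith
  have hle : nrm ((r : ℂ)⁻¹ • ∑ j, c j • u j) ≤ 1 := hmem
  rwa [hsmul, norm_inv, Complex.norm_real, Real.norm_of_nonneg hr.le, inv_mul_le_one₀ hr] at hle

lemma exists_sum_smul_eq_sum_norm_le (hadd : ∀ v w, nrm (v + w) ≤ nrm v + nrm w)
    (hsmul : ∀ (c : ℂ) v, nrm (c • v) = ‖c‖ * nrm v) (hdef : ∀ v, nrm v = 0 → v = 0)
    (hball : {v | nrm v ≤ 1} = {v | ∃ α : ι → ℂ, (∑ j, ‖α j‖) ≤ 1 ∧ v = ∑ j, α j • u j})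
    (v : E) : ∃ c : ι → ℂ, v = ∑ j, c j • u j ∧ ∑ j, ‖c j‖ ≤ nrm v := by
  have hnonneg : 0 ≤ nrm v := by
    have h := hadd v ((-1 : ℂ) • v)
    rw [hsmul, neg_one_smul, add_neg_cancel, ← zero_smul ℂ (0 : E), hsmul] at h
    norm_num at h
    linarith
  rcases hnonneg.eq_or_lt with h0 | hpos
  · exact ⟨0, by simp [hdef v h0.symm], by simp [← h0]⟩
  have hne : (nrm v : ℂ) ≠ 0 := Complex.ofReal_ne_zero.2 hpos.ne'
  have hmem : (nrm v : ℂ)⁻¹ • v ∈ {v | nrm v ≤ 1} := by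
    change nrm _ ≤ 1
    rw [hsmul, norm_inv, Complex.norm_real, Real.norm_of_nonneg hnonneg, inv_mul_cancel₀ hpos.ne']
  rw [hball] at hmem
  obtain ⟨α, hα, hv⟩ := hmem
  refine ⟨fun j => nrm v * α j, ?_, ?_⟩
  · calc v = (nrm v : ℂ) • ((nrm v : ℂ)⁻¹ • v) := (smul_inv_smul₀ hne v).symm
      _ = _ := by simp only [hv, smul_sum, mul_smul]
  · simp only [norm_mul, Complex.norm_real, Real.norm_of_nonneg hnonneg, ← mul_sum]
    exact mul_le_of_le_one_right hnonneg hα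

lemma isLeast_nrm (hadd : ∀ v w, nrm (v + w) ≤ nrm v + nrm w)
    (hsmul : ∀ (c : ℂ) v, nrm (c • v) = ‖c‖ * nrm v) (hdef : ∀ v, nrm v = 0 → v = 0)
    (hball : {v | nrm v ≤ 1} = {v | ∃ α : ι → ℂ, (∑ j, ‖α j‖) ≤ 1 ∧ v = ∑ j, α j • u j})
    (v : E) : IsLeast ((fun c : ι → ℂ => ∑ j, ‖c j‖) '' {c | v = ∑ j, c j • u j}) (nrm v) := by
  obtain ⟨c, hc, hle⟩ := exists_sum_smul_eq_sum_norm_le hadd hsmul hdef hball v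
  refine ⟨⟨c, hc, le_antisymm hle ?_⟩, ?_⟩
  · exact hc ▸ nrm_sum_smul_le hsmul hball c
  · rintro _ ⟨c, rfl, rfl⟩
    exact nrm_sum_smul_le hsmul hball c

lemma exists_repr_sum_norm_sub_eq
    (hnrm : ∀ v, IsLeast ((fun c : ι → ℂ => ∑ j, ‖c j‖) '' {c | v = ∑ j, c j • u j}) (nrm v))
    {a : ι → ℂ} {x : E} (hxa : x = ∑ j, a j • u j) (y : E) :
    ∃ b : ι → ℂ, y = ∑ j, b j • u j ∧ ∑ j, ‖a j - b j‖ = nrm (x - y) := by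
  obtain ⟨c, hc, hcn⟩ := (hnrm (x - y)).1
  refine ⟨fun j => a j - c j, ?_, by simpa only [sub_sub_cancel] using hcn⟩
  rw [← sub_sub_cancel x y, hc, hxa]
  simp only [sub_smul, sum_sub_distrib]

end RepresentationNorm

section BestApproximation

variable {E : Type*} [AddCommGroup E] [Module ℂ E] [Fintype ι] [DecidableEq ι]
  {u : ι → E} {nrm : E → ℝ} {S : Finset ι} {a : ι → ℂ} {x : E} {Y : Submodule ℂ E}

lemma forall_nrm_le_nrm_sub_iff (hS : ∀ j, a j ≠ 0 ↔ j ∈ S)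
    (hnrm : ∀ v, IsLeast ((fun c : ι → ℂ => ∑ j, ‖c j‖) '' {c | v = ∑ j, c j • u j}) (nrm v))
    (hxa : x = ∑ j, a j • u j) (hna : nrm x = ∑ j, ‖a j‖) :
    (∀ y ∈ Y, nrm x ≤ nrm (x - y)) ↔
      ∀ y ∈ Y, ∀ b : ι → ℂ, y = ∑ j, b j • u j → ‖signSum S a b‖ ≤ ∑ j ∈ Sᶜ, ‖b j‖ := by
  refine ⟨fun hbest y hy b hyb => norm_signSum_le_of_forall_le hS fun c => ?_,
    fun hP y hy => ?_⟩
  · rw [← hna]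
    refine (hbest _ (Y.smul_mem c hy)).trans ((hnrm _).2 ⟨_, ?_, rfl⟩)
    rw [hxa, hyb]
    exact (sum_sub_mul_smul a b c u).symm
  · obtain ⟨b, hyb, hb⟩ := exists_repr_sum_norm_sub_eq hnrm hxa y
    rw [hna, ← hb]
    exact sum_norm_le_sum_norm_sub hS (hP y hy b hyb)

lemma forall_nrm_lt_nrm_sub_iff (hS : ∀ j, a j ≠ 0 ↔ j ∈ S)
    (hnrm : ∀ v, IsLeast ((fun c : ι → ℂ => ∑ j, ‖c j‖) '' {c | v = ∑ j, c j • u j}) (nrm v))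
    (hxa : x = ∑ j, a j • u j) (hna : nrm x = ∑ j, ‖a j‖) :
    (∀ y ∈ Y, y ≠ 0 → nrm x < nrm (x - y)) ↔
      (∀ y ∈ Y, ∀ b : ι → ℂ, y = ∑ j, b j • u j → ‖signSum S a b‖ ≤ ∑ j ∈ Sᶜ, ‖b j‖) ∧
      ∀ y ∈ Y, y ≠ 0 → ∀ b : ι → ℂ, y = ∑ j, b j • u j →
        signSum S a b = ((∑ j ∈ Sᶜ, ‖b j‖ : ℝ) : ℂ) → ∃ j ∈ S, (conj (a j) * b j).im ≠ 0 := by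
  refine ⟨fun hunique => ⟨?_, fun y hy hy0 b hyb hb => ?_⟩, fun ⟨hP, hcond⟩ y hy hy0 => ?_⟩
  · refine (forall_nrm_le_nrm_sub_iff hS hnrm hxa hna).1 fun y hy => ?_
    rcases eq_or_ne y 0 with rfl | hy0
    · rw [sub_zero]
    · exact (hunique y hy hy0).le
  · by_contra! him
    obtain ⟨t, ht, hta⟩ := exists_pos_sum_norm_sub_mul_eq hS hb him
    have hlt := hunique _ (Y.smul_mem (t : ℂ) hy)
      (smul_ne_zero (Complex.ofReal_ne_zero.2 ht.ne') hy0)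
    have hle : nrm (x - (t : ℂ) • y) ≤ ∑ j, ‖a j - t * b j‖ :=
      (hnrm _).2 ⟨_, by rw [hxa, hyb]; exact (sum_sub_mul_smul a b t u).symm, rfl⟩
    linarith
  · by_contra! hle
    obtain ⟨b, hyb, hb⟩ := exists_repr_sum_norm_sub_eq hnrm hxa y
    obtain ⟨hφ, him⟩ :=
      signSum_eq_and_im_eq_zero_of_sum_norm_sub_le hS (hP y hy b hyb) (by linarith)
    obtain ⟨j, hj, hne⟩ := hcond y hy hy0 b hyb hφ
    exact hne (him j hj)

end BestApproximation

theorem stmt6_general (n N : ℕ) (u : Fin N → (Fin n → ℂ))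
    (nrm : (Fin n → ℂ) → ℝ)
    (hadd : ∀ v w, nrm (v + w) ≤ nrm v + nrm w)
    (hsmul : ∀ (c : ℂ) v, nrm (c • v) = ‖c‖ * nrm v)
    (hdef : ∀ v, nrm v = 0 → v = 0)
    (hball : {v | nrm v ≤ 1} =
      {v | ∃ α : Fin N → ℂ, (∑ j, ‖α j‖) ≤ 1 ∧ v = ∑ j, α j • u j})
    (Y : Submodule ℂ (Fin n → ℂ)) (x : Fin n → ℂ)
    (a : Fin N → ℂ) (hxa : x = ∑ j, a j • u j) (hna : nrm x = ∑ j, ‖a j‖)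
    (m : ℕ) (ha : ∀ j : Fin N, a j ≠ 0 ↔ (j : ℕ) < m) :
    ((∀ y ∈ Y, nrm (x - y) ≥ nrm x) ↔
      (∀ y ∈ Y, ∀ b : Fin N → ℂ, y = ∑ j, b j • u j →
        ‖∑ j ∈ Finset.univ.filter (fun j : Fin N => (j : ℕ) < m),
            (starRingEnd ℂ (a j) / (‖a j‖ : ℂ)) * b j‖
          ≤ ∑ j ∈ Finset.univ.filter (fun j : Fin N => m ≤ (j : ℕ)),
              ‖b j‖)) ∧
    ((∀ y ∈ Y, y ≠ 0 → nrm (x - y) > nrm x) ↔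
      ((∀ y ∈ Y, ∀ b : Fin N → ℂ, y = ∑ j, b j • u j →
        ‖∑ j ∈ Finset.univ.filter (fun j : Fin N => (j : ℕ) < m),
            (starRingEnd ℂ (a j) / (‖a j‖ : ℂ)) * b j‖
          ≤ ∑ j ∈ Finset.univ.filter (fun j : Fin N => m ≤ (j : ℕ)),
              ‖b j‖) ∧
       (∀ y ∈ Y, y ≠ 0 → ∀ b : Fin N → ℂ, y = ∑ j, b j • u j →
         (∑ j ∈ Finset.univ.filter (fun j : Fin N => (j : ℕ) < m),
             (starRingEnd ℂ (a j) / (‖a j‖ : ℂ)) * b j)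
           = ((∑ j ∈ Finset.univ.filter (fun j : Fin N => m ≤ (j : ℕ)),
               ‖b j‖ : ℝ) : ℂ) →
         ∃ j : Fin N, (j : ℕ) < m ∧ (starRingEnd ℂ (a j) * b j).im ≠ 0))) := by
  set S := univ.filter fun j : Fin N => (j : ℕ) < m
  have hS : ∀ j, a j ≠ 0 ↔ j ∈ S := by simp [S, ha]
  have hSc : univ.filter (fun j : Fin N => m ≤ (j : ℕ)) = Sᶜ := by ext; simp [S]
  have hmem : ∀ j : Fin N, (j : ℕ) < m ↔ j ∈ S := by simp [S]
  have hnrm := isLeast_nrm hadd hsmul hdef hball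
  simp only [hSc, hmem]
  exact ⟨forall_nrm_le_nrm_sub_iff hS hnrm hxa hna, forall_nrm_lt_nrm_sub_iff hS hnrm hxa hna⟩

theorem stmt6 (n N : ℕ) (u : Fin N → (Fin n → ℂ))
    (nrm : (Fin n → ℂ) → ℝ)
    (hadd : ∀ v w, nrm (v + w) ≤ nrm v + nrm w)
    (hsmul : ∀ (c : ℂ) v, nrm (c • v) = ‖c‖ * nrm v)
    (hdef : ∀ v, nrm v = 0 → v = 0)
    (hball : {v | nrm v ≤ 1} =
      {v | ∃ α : Fin N → ℂ, (∑ j, ‖α j‖) ≤ 1 ∧ v = ∑ j, α j • u j})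
    (Y : Submodule ℂ (Fin n → ℂ)) (x : Fin n → ℂ) (hx : x ∉ Y)
    (a : Fin N → ℂ) (hxa : x = ∑ j, a j • u j) (hna : nrm x = ∑ j, ‖a j‖)
    (m : ℕ) (hm : m ≤ N) (ha : ∀ j : Fin N, a j ≠ 0 ↔ (j : ℕ) < m) :
    ((∀ y ∈ Y, nrm (x - y) ≥ nrm x) ↔
      (∀ y ∈ Y, ∀ b : Fin N → ℂ, y = ∑ j, b j • u j →
        ‖∑ j ∈ Finset.univ.filter (fun j : Fin N => (j : ℕ) < m),
            (starRingEnd ℂ (a j) / (‖a j‖ : ℂ)) * b j‖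
          ≤ ∑ j ∈ Finset.univ.filter (fun j : Fin N => m ≤ (j : ℕ)),
              ‖b j‖)) ∧
    ((∀ y ∈ Y, y ≠ 0 → nrm (x - y) > nrm x) ↔
      ((∀ y ∈ Y, ∀ b : Fin N → ℂ, y = ∑ j, b j • u j →
        ‖∑ j ∈ Finset.univ.filter (fun j : Fin N => (j : ℕ) < m),
            (starRingEnd ℂ (a j) / (‖a j‖ : ℂ)) * b j‖
          ≤ ∑ j ∈ Finset.univ.filter (fun j : Fin N => m ≤ (j : ℕ)),
              ‖b j‖) ∧
       (∀ y ∈ Y, y ≠ 0 → ∀ b : Fin N → ℂ, y = ∑ j, b j • u j →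
         (∑ j ∈ Finset.univ.filter (fun j : Fin N => (j : ℕ) < m),
             (starRingEnd ℂ (a j) / (‖a j‖ : ℂ)) * b j)
           = ((∑ j ∈ Finset.univ.filter (fun j : Fin N => m ≤ (j : ℕ)),
               ‖b j‖ : ℝ) : ℂ) →
         ∃ j : Fin N, (j : ℕ) < m ∧ (starRingEnd ℂ (a j) * b j).im ≠ 0))) :=
  stmt6_general n N u nrm hadd hsmul hdef hball Y x a hxa hna m ha
end

section
/- Let x, y ∈ ℂ be complex numbers with x ≠ 0. Then for every real number t satisfying |t·y| ≤ |x|/2 we have |x − t·y| ≥ |x| − t·Re(conj(x)·y)/|x| + t²·Im(conj(x)·y)²/(4|x|³). -/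
/-!
Multiplying by `‖x‖ = ‖conj x‖` turns `‖x - t y‖` into `‖A - u‖` with `A = ‖x‖²` real and
`u = t conj(x) y`, `‖u‖ ≤ A / 2`. With `p = A - Re u ≤ 3A/2` and `q = Im u`, `q² ≤ A²/4`, the claim
becomes `p + q²/(4A) ≤ √(p² + q²)`: squaring, the excess `s = q²/(4A) ≤ A/16` satisfies
`2ps + s² ≤ 4As = q²` because `2p + s ≤ 4A`.
-/

open ComplexConjugate

theorem add_sq_div_le_sqrt_sq_add_sq {A p q : ℝ} (hA : 0 < A) (hp : p ≤ 3 / 2 * A)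
    (hq : q ^ 2 ≤ A ^ 2 / 4) : p + q ^ 2 / (4 * A) ≤ √(p ^ 2 + q ^ 2) := by
  set s := q ^ 2 / (4 * A) with hs_def
  have hs : 4 * A * s = q ^ 2 := by rw [hs_def]; field_simp
  have hs0 : 0 ≤ s := by positivity
  have hsA : s ≤ A / 16 := by
    rw [div_le_iff₀ (by positivity)]; nlinarith
  apply Real.le_sqrt_of_sq_le
  nlinarith [mul_nonneg hs0 (by linarith : 0 ≤ 4 * A - 2 * p - s)]

theorem Complex.sub_re_add_sq_im_div_le_norm_ofReal_sub {A : ℝ} {u : ℂ} (hA : 0 < A)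
    (hu : ‖u‖ ≤ A / 2) : A - u.re + u.im ^ 2 / (4 * A) ≤ ‖(A : ℂ) - u‖ := by
  have hre : A - u.re ≤ 3 / 2 * A := by linarith [neg_abs_le u.re, abs_re_le_norm u]
  have him : u.im ^ 2 ≤ A ^ 2 / 4 := by
    nlinarith [sq_abs u.im, abs_nonneg u.im, abs_im_le_norm u]
  rw [norm_def, normSq_apply]
  simpa [sq] using add_sq_div_le_sqrt_sq_add_sq hA hre him

theorem Complex.norm_mul_norm_sub (x w : ℂ) :
    ‖x‖ * ‖x - w‖ = ‖((‖x‖ ^ 2 : ℝ) : ℂ) - conj x * w‖ := by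
  rw [ofReal_pow, ← conj_mul', ← mul_sub, norm_mul, norm_conj]

theorem stmt7 (x y : ℂ) (hx : x ≠ 0) (t : ℝ)
    (ht : ‖(t : ℂ) * y‖ ≤ ‖x‖ / 2) :
    ‖x - (t : ℂ) * y‖ ≥
      ‖x‖ - t * (starRingEnd ℂ x * y).re / ‖x‖
        + t ^ 2 * (starRingEnd ℂ x * y).im ^ 2 / (4 * ‖x‖ ^ 3) := by
  have ha : 0 < ‖x‖ := norm_pos_iff.mpr hx
  have hu : ‖conj x * (t * y)‖ ≤ ‖x‖ ^ 2 / 2 := by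
    rw [norm_mul, Complex.norm_conj]; nlinarith
  have key := Complex.sub_re_add_sq_im_div_le_norm_ofReal_sub (by positivity) hu
  rw [← Complex.norm_mul_norm_sub, mul_left_comm, Complex.re_ofReal_mul,
    Complex.im_ofReal_mul] at key
  rw [ge_iff_le, ← mul_le_mul_iff_of_pos_left ha]
  refine le_of_eq_of_le ?_ key
  field_simp
end

section
/- Let X be a normed space over 𝕂 (𝕂 = ℝ or ℂ), let Y ⊆ X be a finite-dimensional linear subspace, and let x ∈ X \ Y be a vector such that 0 is the unique best approximation for x in Y. Then for every d > 0 there exists a constant r_d > 0 such that ‖x − y‖ ≥ ‖x‖ + r_d‖y‖ for every y ∈ Y with ‖y‖ ≥ d. -/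
/-! The function `y ↦ ‖x - y‖ - ‖x‖` is convex and vanishes at `0`, so along each ray from `0`
its slope `(‖x - y‖ - ‖x‖) / ‖y‖` is nondecreasing in `‖y‖`. Hence it suffices to bound it below
on the sphere of radius `d` in `Y`, which is compact because `Y` is finite-dimensional; there the
function is positive by uniqueness of the best approximation `0`, so it has a positive minimum. -/

section

variable {𝕜 X : Type*} [RCLike 𝕜] [NormedAddCommGroup X] [NormedSpace 𝕜 X]

lemma norm_sub_ofReal_smul_le (x y : X) {t : ℝ} (ht₀ : 0 ≤ t) (ht₁ : t ≤ 1) :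
    ‖x - (t : 𝕜) • y‖ ≤ (1 - t) * ‖x‖ + t * ‖x - y‖ := by
  have hsplit : x - (t : 𝕜) • y = ((1 - t : ℝ) : 𝕜) • x + (t : 𝕜) • (x - y) := by
    simp only [RCLike.ofReal_sub, RCLike.ofReal_one, sub_smul, one_smul, smul_sub]
    abel
  rw [hsplit]
  refine (norm_add_le _ _).trans_eq ?_
  rw [norm_smul, norm_smul, RCLike.norm_ofReal, RCLike.norm_ofReal, abs_of_nonneg ht₀,
    abs_of_nonneg (sub_nonneg.2 ht₁)]

lemma norm_add_mul_norm_le_norm_sub_of_forall_sphere (Y : Submodule 𝕜 X) (x : X) {a d : ℝ}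
    (hd : 0 < d) (ha : ∀ z ∈ Y, ‖z‖ = d → a ≤ ‖x - z‖) {y : X} (hy : y ∈ Y) (hyd : d ≤ ‖y‖) :
    ‖x‖ + (a - ‖x‖) / d * ‖y‖ ≤ ‖x - y‖ := by
  have hy₀ : 0 < ‖y‖ := hd.trans_le hyd
  set t := d / ‖y‖
  have ht₀ : 0 < t := div_pos hd hy₀
  have hty : t * ‖y‖ = d := div_mul_cancel₀ d hy₀.ne'
  have hz : ‖(t : 𝕜) • y‖ = d := by
    rw [norm_smul, RCLike.norm_ofReal, abs_of_pos ht₀, hty]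
  have hchord : a ≤ (1 - t) * ‖x‖ + t * ‖x - y‖ :=
    (ha _ (Y.smul_mem _ hy) hz).trans
      (norm_sub_ofReal_smul_le x y ht₀.le ((div_le_one hy₀).2 hyd))
  have hslope : (a - ‖x‖) / d ≤ (‖x - y‖ - ‖x‖) / ‖y‖ := by
    rw [div_le_div_iff₀ hd hy₀, ← hty]
    have : a - ‖x‖ ≤ t * (‖x - y‖ - ‖x‖) := by linarith
    nlinarith [mul_le_mul_of_nonneg_right this hy₀.le]
  calc ‖x‖ + (a - ‖x‖) / d * ‖y‖ ≤ ‖x‖ + (‖x - y‖ - ‖x‖) / ‖y‖ * ‖y‖ := by gcongr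
    _ = ‖x - y‖ := by rw [div_mul_cancel₀ _ hy₀.ne']; ring

lemma exists_gt_norm_forall_sphere_le_norm_sub (Y : Submodule 𝕜 X) [FiniteDimensional 𝕜 Y]
    (x : X) (huniq : ∀ y ∈ Y, y ≠ 0 → ‖x - y‖ > ‖x‖) {d : ℝ} (hd : 0 < d) :
    ∃ a > ‖x‖, ∀ z ∈ Y, ‖z‖ = d → a ≤ ‖x - z‖ := by
  have hcont : ContinuousOn (fun z : Y ↦ ‖x - z‖) (Metric.sphere 0 d) := by fun_prop
  obtain ⟨a, hxa, ha⟩ := (isCompact_sphere (0 : Y) d).exists_forall_le' hcont fun z hz ↦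
    huniq z z.2 (by rintro h; simp [h, hd.ne] at hz)
  exact ⟨a, hxa, fun z hzY hz ↦ ha ⟨z, hzY⟩ (by simpa using hz)⟩

end

theorem stmt8_general (𝕜 : Type*) [RCLike 𝕜] (X : Type*) [NormedAddCommGroup X] [NormedSpace 𝕜 X]
    (Y : Submodule 𝕜 X) [FiniteDimensional 𝕜 Y] (x : X)
    (huniq : ∀ y ∈ Y, y ≠ 0 → ‖x - y‖ > ‖x‖)
    (d : ℝ) (hd : 0 < d) :
    ∃ r > 0, ∀ y ∈ Y, d ≤ ‖y‖ → ‖x - y‖ ≥ ‖x‖ + r * ‖y‖ := by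
  obtain ⟨a, hxa, ha⟩ := exists_gt_norm_forall_sphere_le_norm_sub Y x huniq hd
  exact ⟨(a - ‖x‖) / d, div_pos (sub_pos.2 hxa) hd, fun y hy hyd ↦
    norm_add_mul_norm_le_norm_sub_of_forall_sphere Y x hd ha hy hyd⟩

theorem stmt8 (𝕜 : Type*) [RCLike 𝕜] (X : Type*) [NormedAddCommGroup X] [NormedSpace 𝕜 X]
    (Y : Submodule 𝕜 X) [FiniteDimensional 𝕜 Y] (x : X) (hx : x ∉ Y)
    (huniq : ∀ y ∈ Y, y ≠ 0 → ‖x - y‖ > ‖x‖)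
    (d : ℝ) (hd : 0 < d) :
    ∃ r > 0, ∀ y ∈ Y, d ≤ ‖y‖ → ‖x - y‖ ≥ ‖x‖ + r * ‖y‖ :=
  stmt8_general 𝕜 X Y x huniq d hd
end

section
/- Let Y be a linear subspace of the complex space ℓ₁ⁿ and suppose y₀ ∈ Y is the unique best approximation in Y for a vector x ∈ ℓ₁ⁿ \ Y. Then y₀ is a 2-strongly unique best approximation for x in Y: there exists r > 0 such that ‖x − y‖₁² ≥ ‖x − y₀‖₁² + r‖y − y₀‖₁² for all y ∈ Y. -/
/-!
Put `a = x - y₀` and `z = y - y₀`. Rotating the `i`-th coordinate so that `a i` becomes the positive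
real `‖a i‖`, `‖a i - z i‖ = √((‖a i‖ - Re w)² + (Im w)²)` for the rotated `w` of `z i`. This gives
`‖a - z‖₁ ≥ ‖a‖₁ + D z + Q z / (2 (‖a‖₁ + ‖z‖₁))`, where `D z` is the right derivative of
`t ↦ ‖a - t z‖₁` at `0` (positively homogeneous) and `Q z = ∑ (Im w)²` (quadratic), together with a
matching upper bound `‖a - t z‖₁ ≤ ‖a‖₁ + t D z + O(t² Q z)` as `t → 0⁺`. Since `0` is the unique best
approximation of `a` in `Y`, the upper bound forces `D ≥ 0` and `D + Q > 0` on `Y \ {0}`, so by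
compactness `D + Q ≥ ε > 0` on the unit sphere of `Y`. Homogeneity then yields
`‖a - z‖₁ - ‖a‖₁ ≥ ε ‖z‖₁² / (2 (‖a‖₁ + ‖z‖₁))`, and multiplying by `‖a - z‖₁ + ‖a‖₁ ≥ (‖a‖₁ + ‖z‖₁) / 2`
gives the claim with `r = ε / 4`.
-/

open Finset Filter Topology Complex ComplexConjugate

noncomputable section

namespace L1BestApprox

lemma add_sq_div_le_sqrt {s v D : ℝ} (hD : 0 < D) (h : √(s ^ 2 + v ^ 2) ≤ D) :
    s + v ^ 2 / (2 * D) ≤ √(s ^ 2 + v ^ 2) := by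
  set L := √(s ^ 2 + v ^ 2)
  have hL : L ^ 2 = s ^ 2 + v ^ 2 := Real.sq_sqrt (by positivity)
  have hsL : s ≤ L := Real.le_sqrt_of_sq_le (by nlinarith)
  rw [← le_sub_iff_add_le', div_le_iff₀ (by positivity)]
  nlinarith [Real.sqrt_nonneg (s ^ 2 + v ^ 2)]

lemma sqrt_le_add_sq_div {s : ℝ} (hs : 0 < s) (v : ℝ) :
    √(s ^ 2 + v ^ 2) ≤ s + v ^ 2 / (2 * s) := by
  refine Real.sqrt_le_iff.2 ⟨by positivity, ?_⟩
  have : (s + v ^ 2 / (2 * s)) ^ 2 = s ^ 2 + v ^ 2 + (v ^ 2 / (2 * s)) ^ 2 := by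
    field_simp
    ring
  nlinarith [sq_nonneg (v ^ 2 / (2 * s))]

/-- `z` seen in the frame in which `a` lies on the positive real axis (and `0` if `a = 0`). -/
def alignTo (a z : ℂ) : ℂ := conj (a / ‖a‖) * z

/-- The right derivative at `0` of `t ↦ ‖a - t z‖`. -/
def normSubDeriv (a z : ℂ) : ℝ := if a = 0 then ‖z‖ else -(alignTo a z).re

lemma alignTo_zero_left (z : ℂ) : alignTo 0 z = 0 := by
  simp [alignTo]

lemma alignTo_ofReal_mul (a z : ℂ) (t : ℝ) : alignTo a (t * z) = t * alignTo a z := by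
  simp only [alignTo]
  ring

lemma norm_alignTo {a : ℂ} (ha : a ≠ 0) (z : ℂ) : ‖alignTo a z‖ = ‖z‖ := by
  simp [alignTo, ha]

lemma norm_sub_eq_norm_ofReal_sub_alignTo {a : ℂ} (ha : a ≠ 0) (z : ℂ) :
    ‖a - z‖ = ‖(‖a‖ : ℂ) - alignTo a z‖ := by
  set σ := a / ‖a‖
  have hσ : ‖σ‖ = 1 := by simp [σ, ha]
  have hσa : σ * ‖a‖ = a := div_mul_cancel₀ _ (by exact_mod_cast norm_ne_zero_iff.2 ha)
  have hσσ : σ * conj σ = 1 := by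
    rw [mul_conj, normSq_eq_norm_sq, hσ]
    simp
  have : a - z = σ * (‖a‖ - alignTo a z) := by
    simp only [alignTo]
    linear_combination -hσa + z * hσσ
  rw [this, norm_mul, hσ, one_mul]

lemma le_norm_ofReal_sub {p : ℝ} (hp : 0 < p) (w : ℂ) :
    p - w.re + w.im ^ 2 / (2 * (p + ‖w‖)) ≤ ‖(p : ℂ) - w‖ := by
  have hnorm : ‖(p : ℂ) - w‖ = √((p - w.re) ^ 2 + w.im ^ 2) := by
    simp [norm_eq_sqrt_sq_add_sq]
  rw [hnorm]
  refine add_sq_div_le_sqrt (by positivity) ?_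
  calc √((p - w.re) ^ 2 + w.im ^ 2) = ‖(p : ℂ) - w‖ := hnorm.symm
    _ ≤ ‖(p : ℂ)‖ + ‖w‖ := norm_sub_le _ _
    _ = p + ‖w‖ := by rw [Complex.norm_of_nonneg hp.le]

lemma norm_ofReal_sub_le {p : ℝ} (hp : 0 < p) {w : ℂ} (hw : ‖w‖ ≤ p / 2) :
    ‖(p : ℂ) - w‖ ≤ p - w.re + w.im ^ 2 / p := by
  have hs : p / 2 ≤ p - w.re := by linarith [re_le_norm w]
  have hnorm : ‖(p : ℂ) - w‖ = √((p - w.re) ^ 2 + w.im ^ 2) := by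
    simp [norm_eq_sqrt_sq_add_sq]
  calc ‖(p : ℂ) - w‖ ≤ p - w.re + w.im ^ 2 / (2 * (p - w.re)) :=
        hnorm ▸ sqrt_le_add_sq_div (by linarith) _
    _ ≤ p - w.re + w.im ^ 2 / p := by gcongr; linarith

lemma norm_add_normSubDeriv_le (a z : ℂ) :
    ‖a‖ + normSubDeriv a z + (alignTo a z).im ^ 2 / (2 * (‖a‖ + ‖z‖)) ≤ ‖a - z‖ := by
  by_cases ha : a = 0
  · simp [normSubDeriv, ha, alignTo_zero_left]
  · rw [normSubDeriv, if_neg ha, norm_sub_eq_norm_ofReal_sub_alignTo ha, ← norm_alignTo ha z]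
    linarith [le_norm_ofReal_sub (norm_pos_iff.2 ha) (alignTo a z)]

lemma norm_sub_ofReal_mul_le {a z : ℂ} {t : ℝ} (ht : 0 ≤ t)
    (hsmall : a ≠ 0 → t * ‖z‖ ≤ ‖a‖ / 2) :
    ‖a - t * z‖ ≤ ‖a‖ + t * normSubDeriv a z + t ^ 2 * ((alignTo a z).im ^ 2 / ‖a‖) := by
  by_cases ha : a = 0
  · simp [normSubDeriv, ha, alignTo_zero_left, abs_of_nonneg ht]
  · have hw : ‖alignTo a (t * z)‖ ≤ ‖a‖ / 2 := by
      rw [norm_alignTo ha, norm_mul, Complex.norm_of_nonneg ht]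
      exact hsmall ha
    rw [normSubDeriv, if_neg ha, norm_sub_eq_norm_ofReal_sub_alignTo ha]
    calc ‖(‖a‖ : ℂ) - alignTo a (t * z)‖
        ≤ ‖a‖ - (alignTo a (t * z)).re + (alignTo a (t * z)).im ^ 2 / ‖a‖ :=
          norm_ofReal_sub_le (norm_pos_iff.2 ha) hw
      _ = _ := by
          rw [alignTo_ofReal_mul, re_ofReal_mul, im_ofReal_mul]
          ring

lemma normSubDeriv_ofReal_mul (a z : ℂ) {c : ℝ} (hc : 0 ≤ c) :
    normSubDeriv a (c * z) = c * normSubDeriv a z := by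
  unfold normSubDeriv
  split_ifs <;> simp [alignTo_ofReal_mul, abs_of_nonneg hc]

variable {ι : Type*} [Fintype ι]

def l1Norm (v : ι → ℂ) : ℝ := ∑ i, ‖v i‖

def l1DirDeriv (a z : ι → ℂ) : ℝ := ∑ i, normSubDeriv (a i) (z i)

/-- Vanishes iff `z i` is a real multiple of `a i` wherever `a i ≠ 0`. -/
def l1Transverse (a z : ι → ℂ) : ℝ := ∑ i, (alignTo (a i) (z i)).im ^ 2

lemma l1Norm_nonneg (v : ι → ℂ) : 0 ≤ l1Norm v :=
  sum_nonneg fun _ _ => norm_nonneg _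

lemma norm_le_l1Norm (v : ι → ℂ) (i : ι) : ‖v i‖ ≤ l1Norm v :=
  single_le_sum (fun j _ => norm_nonneg (v j)) (mem_univ i)

lemma l1Norm_pos {v : ι → ℂ} (hv : v ≠ 0) : 0 < l1Norm v := by
  obtain ⟨i, hi⟩ := Function.ne_iff.1 hv
  exact (norm_pos_iff.2 hi).trans_le (norm_le_l1Norm v i)

lemma l1Norm_smul (v : ι → ℂ) {c : ℝ} (hc : 0 ≤ c) : l1Norm ((c : ℂ) • v) = c * l1Norm v := by
  simp [l1Norm, mul_sum, abs_of_nonneg hc]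

lemma l1Norm_le_l1Norm_sub_add (a z : ι → ℂ) : l1Norm z ≤ l1Norm (a - z) + l1Norm a := by
  simp only [l1Norm, ← sum_add_distrib, Pi.sub_apply]
  exact sum_le_sum fun i _ => (norm_le_norm_add_norm_sub (a i) (z i)).trans_eq (add_comm _ _)

lemma continuous_l1Norm : Continuous (l1Norm : (ι → ℂ) → ℝ) := by
  unfold l1Norm
  fun_prop

lemma l1DirDeriv_smul (a z : ι → ℂ) {c : ℝ} (hc : 0 ≤ c) :
    l1DirDeriv a ((c : ℂ) • z) = c * l1DirDeriv a z := by
  simp only [l1DirDeriv, Pi.smul_apply, smul_eq_mul, normSubDeriv_ofReal_mul _ _ hc, mul_sum]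

lemma l1Transverse_smul (a z : ι → ℂ) (c : ℝ) :
    l1Transverse a ((c : ℂ) • z) = c ^ 2 * l1Transverse a z := by
  simp only [l1Transverse, Pi.smul_apply, smul_eq_mul, alignTo_ofReal_mul, im_ofReal_mul, mul_sum,
    mul_pow]

lemma l1Transverse_nonneg (a z : ι → ℂ) : 0 ≤ l1Transverse a z :=
  sum_nonneg fun _ _ => sq_nonneg _

lemma continuous_l1DirDeriv (a : ι → ℂ) : Continuous (l1DirDeriv a) := by
  refine continuous_finsetSum _ fun i _ => ?_
  unfold normSubDeriv alignTo
  split_ifs <;> fun_prop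

lemma continuous_l1Transverse (a : ι → ℂ) : Continuous (l1Transverse a) := by
  unfold l1Transverse alignTo
  fun_prop

lemma l1Norm_add_l1DirDeriv_add_le (a z : ι → ℂ) :
    l1Norm a + l1DirDeriv a z + l1Transverse a z / (2 * (l1Norm a + l1Norm z)) ≤
      l1Norm (a - z) := by
  set K := 2 * (l1Norm a + l1Norm z)
  calc l1Norm a + l1DirDeriv a z + l1Transverse a z / K
      = ∑ i, (‖a i‖ + normSubDeriv (a i) (z i) + (alignTo (a i) (z i)).im ^ 2 / K) := by
        simp only [sum_add_distrib, ← sum_div]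
        rfl
    _ ≤ ∑ i, ‖a i - z i‖ := sum_le_sum fun i _ => by
        refine le_trans ?_ (norm_add_normSubDeriv_le (a i) (z i))
        by_cases ha : a i = 0
        · simp [ha, alignTo_zero_left]
        have hpos : 0 < ‖a i‖ + ‖z i‖ := by positivity
        have hle : 2 * (‖a i‖ + ‖z i‖) ≤ K := by
          linarith [norm_le_l1Norm a i, norm_le_l1Norm z i]
        gcongr

lemma eventually_l1Norm_sub_smul_le (a z : ι → ℂ) :
    ∀ᶠ t : ℝ in 𝓝[>] 0, l1Norm (a - (t : ℂ) • z) ≤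
      l1Norm a + t * l1DirDeriv a z + t ^ 2 * ∑ i, (alignTo (a i) (z i)).im ^ 2 / ‖a i‖ := by
  have hsmall (i : ι) : ∀ᶠ t : ℝ in 𝓝[>] 0, a i ≠ 0 → t * ‖z i‖ ≤ ‖a i‖ / 2 := by
    by_cases ha : a i = 0
    · exact Eventually.of_forall fun _ h => absurd ha h
    have hlim : Tendsto (fun t : ℝ => t * ‖z i‖) (𝓝[>] 0) (𝓝 0) :=
      ((continuous_id.mul continuous_const).tendsto' 0 0 (by simp)).mono_left nhdsWithin_le_nhds
    filter_upwards [hlim.eventually (ge_mem_nhds (half_pos (norm_pos_iff.2 ha)))] with t ht _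
      using ht
  filter_upwards [eventually_all.2 hsmall, self_mem_nhdsWithin] with t hts (ht : 0 < t)
  calc l1Norm (a - (t : ℂ) • z) = ∑ i, ‖a i - t * z i‖ := rfl
    _ ≤ ∑ i, (‖a i‖ + t * normSubDeriv (a i) (z i)
          + t ^ 2 * ((alignTo (a i) (z i)).im ^ 2 / ‖a i‖)) :=
        sum_le_sum fun i _ => norm_sub_ofReal_mul_le ht.le (hts i)
    _ = _ := by
        simp only [sum_add_distrib, ← mul_sum]
        rfl

section UniqueBestApprox

variable {Y : Submodule ℂ (ι → ℂ)} {a : ι → ℂ}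

lemma eventually_pos_l1DirDeriv_add (hmin : ∀ z ∈ Y, z ≠ 0 → l1Norm a < l1Norm (a - z))
    {z : ι → ℂ} (hz : z ∈ Y) (hz0 : z ≠ 0) :
    ∀ᶠ t : ℝ in 𝓝[>] 0,
      0 < l1DirDeriv a z + t * ∑ i, (alignTo (a i) (z i)).im ^ 2 / ‖a i‖ := by
  filter_upwards [eventually_l1Norm_sub_smul_le a z, self_mem_nhdsWithin] with t hle (ht : 0 < t)
  have hlt := hmin _ (Y.smul_mem (t : ℂ) hz) (smul_ne_zero (ofReal_ne_zero.2 ht.ne') hz0)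
  refine pos_of_mul_pos_right (a := t) ?_ ht.le
  linarith

lemma l1DirDeriv_nonneg (hmin : ∀ z ∈ Y, z ≠ 0 → l1Norm a < l1Norm (a - z))
    {z : ι → ℂ} (hz : z ∈ Y) (hz0 : z ≠ 0) : 0 ≤ l1DirDeriv a z := by
  refine ge_of_tendsto ?_ ((eventually_pos_l1DirDeriv_add hmin hz hz0).mono fun _ h => h.le)
  exact ((continuous_const.add (continuous_id.mul continuous_const)).tendsto' 0 _
    (by simp)).mono_left nhdsWithin_le_nhds

lemma l1DirDeriv_add_l1Transverse_pos (hmin : ∀ z ∈ Y, z ≠ 0 → l1Norm a < l1Norm (a - z))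
    {z : ι → ℂ} (hz : z ∈ Y) (hz0 : z ≠ 0) : 0 < l1DirDeriv a z + l1Transverse a z := by
  by_contra! hle
  have hD := l1DirDeriv_nonneg hmin hz hz0
  have hQ := l1Transverse_nonneg a z
  have him (i : ι) : (alignTo (a i) (z i)).im = 0 := by
    have hQ0 : l1Transverse a z = 0 := by linarith
    simpa using (sum_eq_zero_iff_of_nonneg fun i _ => sq_nonneg _).1 hQ0 i (mem_univ i)
  have hD0 : l1DirDeriv a z = 0 := by linarith
  obtain ⟨t, ht⟩ := (eventually_pos_l1DirDeriv_add hmin hz hz0).exists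
  simp [him, hD0] at ht

lemma exists_pos_le_l1DirDeriv_add_l1Transverse
    (hmin : ∀ z ∈ Y, z ≠ 0 → l1Norm a < l1Norm (a - z)) :
    ∃ ε > 0, ∀ u ∈ Y, l1Norm u = 1 → ε ≤ l1DirDeriv a u + l1Transverse a u := by
  have hcompact : IsCompact ((Y : Set (ι → ℂ)) ∩ {u | l1Norm u = 1}) := by
    refine Metric.isCompact_of_isClosed_isBounded ((Submodule.closed_of_finiteDimensional Y).inter
      (isClosed_eq continuous_l1Norm continuous_const)) ?_
    refine (Metric.isBounded_closedBall (x := 0) (r := 1)).subset fun u hu => ?_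
    rw [Metric.mem_closedBall, dist_zero_right, pi_norm_le_iff_of_nonneg zero_le_one]
    exact fun i => hu.2 ▸ norm_le_l1Norm u i
  obtain ⟨ε, hε, hle⟩ := hcompact.exists_forall_le'
    ((continuous_l1DirDeriv a).add (continuous_l1Transverse a)).continuousOn
    fun u hu => l1DirDeriv_add_l1Transverse_pos hmin hu.1 (by rintro rfl; simp [l1Norm] at hu)
  exact ⟨ε, hε, fun u hu hu1 => hle u ⟨hu, hu1⟩⟩

lemma le_l1Norm_sub_sub_l1Norm (hmin : ∀ z ∈ Y, z ≠ 0 → l1Norm a < l1Norm (a - z)) {ε : ℝ}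
    (hε : ∀ u ∈ Y, l1Norm u = 1 → ε ≤ l1DirDeriv a u + l1Transverse a u)
    {z : ι → ℂ} (hz : z ∈ Y) (hz0 : z ≠ 0) :
    ε * l1Norm z ^ 2 / (2 * (l1Norm a + l1Norm z)) ≤ l1Norm (a - z) - l1Norm a := by
  set t := l1Norm z
  set K := 2 * (l1Norm a + t)
  have ht : 0 < t := l1Norm_pos hz0
  have hK : t ≤ K := by linarith [l1Norm_nonneg a]
  have hK0 : 0 < K := by linarith
  set u := ((t⁻¹ : ℝ) : ℂ) • z
  have hzu : z = (t : ℂ) • u := by simp [u, smul_smul, ht.ne']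
  have hu1 : l1Norm u = 1 := by rw [l1Norm_smul _ (inv_nonneg.2 ht.le), inv_mul_cancel₀ ht.ne']
  have huY : u ∈ Y := Y.smul_mem _ hz
  have hD : 0 ≤ l1DirDeriv a u := l1DirDeriv_nonneg hmin huY fun hu0 => by simp [hu0, l1Norm] at hu1
  have hDz : l1DirDeriv a z = t * l1DirDeriv a u := by rw [hzu, l1DirDeriv_smul _ _ ht.le]
  have hQz : l1Transverse a z = t ^ 2 * l1Transverse a u := by rw [hzu, l1Transverse_smul]
  have hDt : t ^ 2 * l1DirDeriv a u / K ≤ t * l1DirDeriv a u := by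
    rw [div_le_iff₀ hK0]
    nlinarith [mul_nonneg (mul_nonneg ht.le hD) (sub_nonneg.2 hK)]
  calc ε * t ^ 2 / K ≤ (l1DirDeriv a u + l1Transverse a u) * t ^ 2 / K := by
        have := hε u huY hu1
        gcongr
    _ = t ^ 2 * l1DirDeriv a u / K + t ^ 2 * l1Transverse a u / K := by ring
    _ ≤ l1DirDeriv a z + l1Transverse a z / K := by rw [hDz, hQz]; gcongr
    _ ≤ l1Norm (a - z) - l1Norm a := by linarith [l1Norm_add_l1DirDeriv_add_le a z]

lemma sq_add_le_sq_of_le_sub {A F t ε : ℝ} (hA : 0 ≤ A) (hε : 0 ≤ ε) (ht : 0 < t)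
    (htF : t ≤ F + A) (hgap : ε * t ^ 2 / (2 * (A + t)) ≤ F - A) :
    A ^ 2 + ε / 4 * t ^ 2 ≤ F ^ 2 := by
  set g := ε * t ^ 2 / (2 * (A + t))
  have hg : 0 ≤ g := by positivity
  calc A ^ 2 + ε / 4 * t ^ 2 = A ^ 2 + g * ((A + t) / 2) := by
        simp only [g]
        field_simp
        ring
    _ ≤ A ^ 2 + (F - A) * (F + A) :=
        add_le_add le_rfl (mul_le_mul hgap (by linarith) (by positivity) (by linarith))
    _ = F ^ 2 := by ring

theorem exists_pos_sq_l1Norm_add_le (hmin : ∀ z ∈ Y, z ≠ 0 → l1Norm a < l1Norm (a - z)) :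
    ∃ r > 0, ∀ z ∈ Y, l1Norm a ^ 2 + r * l1Norm z ^ 2 ≤ l1Norm (a - z) ^ 2 := by
  obtain ⟨ε, hε, hεle⟩ := exists_pos_le_l1DirDeriv_add_l1Transverse hmin
  refine ⟨ε / 4, by positivity, fun z hz => ?_⟩
  rcases eq_or_ne z 0 with rfl | hz0
  · simp [l1Norm]
  exact sq_add_le_sq_of_le_sub (l1Norm_nonneg a) hε.le (l1Norm_pos hz0)
    (l1Norm_le_l1Norm_sub_add a z) (le_l1Norm_sub_sub_l1Norm hmin hεle hz hz0)

end UniqueBestApprox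

end L1BestApprox

end

theorem stmt9_general (n : ℕ) (Y : Submodule ℂ (Fin n → ℂ)) (x : Fin n → ℂ)
    (y₀ : Fin n → ℂ) (hy₀ : y₀ ∈ Y)
    (huniq : ∀ y ∈ Y, y ≠ y₀ →
      (∑ j, ‖(x - y) j‖) > ∑ j, ‖(x - y₀) j‖) :
    ∃ r > 0, ∀ y ∈ Y,
      (∑ j, ‖(x - y) j‖) ^ 2 ≥
        (∑ j, ‖(x - y₀) j‖) ^ 2 + r * (∑ j, ‖(y - y₀) j‖) ^ 2 := by
  have hmin : ∀ z ∈ Y, z ≠ 0 →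
      L1BestApprox.l1Norm (x - y₀) < L1BestApprox.l1Norm (x - y₀ - z) := fun z hz hz0 => by
    have := huniq (y₀ + z) (Y.add_mem hy₀ hz) (by simpa using hz0)
    rwa [← sub_sub] at this
  obtain ⟨r, hr, hle⟩ := L1BestApprox.exists_pos_sq_l1Norm_add_le hmin
  refine ⟨r, hr, fun y hy => ?_⟩
  have := hle (y - y₀) (Y.sub_mem hy hy₀)
  rwa [sub_sub_sub_cancel_right] at this

theorem stmt9 (n : ℕ) (Y : Submodule ℂ (Fin n → ℂ)) (x : Fin n → ℂ) (hx : x ∉ Y)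
    (y₀ : Fin n → ℂ) (hy₀ : y₀ ∈ Y)
    (huniq : ∀ y ∈ Y, y ≠ y₀ →
      (∑ j, ‖(x - y) j‖) > ∑ j, ‖(x - y₀) j‖) :
    ∃ r > 0, ∀ y ∈ Y,
      (∑ j, ‖(x - y) j‖) ^ 2 ≥
        (∑ j, ‖(x - y₀) j‖) ^ 2 + r * (∑ j, ‖(y - y₀) j‖) ^ 2 :=
  stmt9_general n Y x y₀ hy₀ huniq
end

section
/- Let Y be a linear subspace of the complex space ℓ∞ⁿ that has a basis over ℂ consisting of vectors with all coordinates real, and let x = (1, 1, …, 1) ∈ ℓ∞ⁿ. If 0 is the unique best approximation for x in Y, then 0 is a 2-strongly unique best approximation for x in Y: there exists r > 0 such that ‖x − y‖∞² ≥ ‖x‖∞² + r‖y‖∞² for all y ∈ Y. -/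
/-!
Having a real basis, `Y` is closed under conjugation, so `u = ℜ y` lies in `Y` for every
`y ∈ Y`. Since `0` is the unique best approximation of `1`, the continuous function `‖1 - u‖`
exceeds `1` on the compact set of self-adjoint unit vectors of `Y`, hence is `≥ 1 + δ` there;
consequently every self-adjoint `u ∈ Y` has a coordinate with `re u_j ≤ -δ ‖u‖`. At that
coordinate of `y` one reads off `‖1 - y‖² ≥ 1 + 2δ‖u‖`, while at every coordinate
`|y_j|² ≤ ‖1 - y‖² - 1 + 2 re y_j ≤ ‖1 - y‖² - 1 + 2‖u‖`. Together these give
`‖1 - y‖² ≥ 1 + δ / (1 + δ) · ‖y‖²`.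
-/

open scoped ComplexStarModule

variable {ι : Type*}

theorem Submodule.star_mem_of_basis_im_eq_zero {κ : Type*} {Y : Submodule ℂ (ι → ℂ)}
    (b : Module.Basis κ ℂ Y) (hb : ∀ i j, ((b i : ι → ℂ) j).im = 0) {y : ι → ℂ} (hy : y ∈ Y) :
    star y ∈ Y := by
  suffices ∀ z : Y, star (z : ι → ℂ) ∈ Y from this ⟨y, hy⟩
  intro z
  induction b.mem_span z using Submodule.span_induction with
  | mem z hz =>
    obtain ⟨i, rfl⟩ := hz
    convert (b i).2
    funext j
    exact Complex.conj_eq_iff_im.2 (hb i j)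
  | zero => simp
  | add z w _ _ hz hw => simpa using Y.add_mem hz hw
  | smul c z _ hz => simpa [star_smul] using Y.smul_mem (star c) hz

theorem Submodule.realPart_mem {A : Type*} [AddCommGroup A] [Module ℂ A] [StarAddMonoid A]
    [StarModule ℂ A] {Y : Submodule ℂ A} (hY : ∀ y ∈ Y, star y ∈ Y) {y : A} (hy : y ∈ Y) :
    (ℜ y : A) ∈ Y := by
  rw [realPart_apply_coe]
  exact Y.smul_of_tower_mem _ (Y.add_mem hy (hY y hy))

theorem Complex.sq_norm_one_sub (z : ℂ) : ‖1 - z‖ ^ 2 = 1 - 2 * z.re + ‖z‖ ^ 2 := by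
  simp only [Complex.sq_norm, Complex.normSq_apply, Complex.sub_re, Complex.sub_im,
    Complex.one_re, Complex.one_im]
  ring

theorem one_add_mul_sq_norm_le_sq_norm_one_sub [Fintype ι] (y : ι → ℂ) {δ a : ℝ} (hδ : 0 < δ)
    (ha : ∀ j, (y j).re ≤ a) (j₀ : ι) (hj₀ : (y j₀).re ≤ -(δ * a)) :
    1 + δ / (1 + δ) * ‖y‖ ^ 2 ≤ ‖1 - y‖ ^ 2 := by
  have : Nonempty ι := ⟨j₀⟩
  have hcoord (j : ι) : 1 - 2 * (y j).re + ‖y j‖ ^ 2 ≤ ‖1 - y‖ ^ 2 := by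
    rw [← Complex.sq_norm_one_sub]
    gcongr
    exact norm_le_pi_norm (1 - y) j
  have hδa : 2 * δ * a ≤ ‖1 - y‖ ^ 2 - 1 := by linarith [hcoord j₀, sq_nonneg ‖y j₀‖]
  obtain ⟨j, hj⟩ := (IsGreatest.pi_norm y).1
  have hyj : ‖y j‖ ^ 2 ≤ ‖1 - y‖ ^ 2 - 1 + 2 * a := by linarith [hcoord j, ha j]
  rw [← hj, div_mul_eq_mul_div, ← le_sub_iff_add_le', div_le_iff₀ (by positivity)]
  nlinarith [mul_le_mul_of_nonneg_left hyj hδ.le]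

theorem exists_re_le_neg_of_le_norm_one_sub [Fintype ι] {u : ι → ℂ} (hu : IsSelfAdjoint u)
    (hu1 : ‖u‖ ≤ 1) {ε : ℝ} (hε : 0 < ε) (h : 1 + ε ≤ ‖1 - u‖) : ∃ j, (u j).re ≤ -ε := by
  by_contra! hlt
  refine h.not_gt ((pi_norm_lt_iff (by linarith)).2 fun j => ?_)
  have hre : ((u j).re : ℂ) = u j := Complex.conj_eq_iff_re.1 (hu.apply j)
  have hle : |(u j).re| ≤ 1 := (Complex.abs_re_le_norm _).trans ((norm_le_pi_norm u j).trans hu1)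
  rw [Pi.sub_apply, Pi.one_apply, ← hre, ← Complex.ofReal_one, ← Complex.ofReal_sub,
    Complex.norm_real, Real.norm_eq_abs, abs_lt]
  constructor <;> linarith [abs_le.1 hle, hlt j]

theorem exists_pos_forall_isSelfAdjoint_exists_re_le [Fintype ι] [Nonempty ι]
    {Y : Submodule ℂ (ι → ℂ)} (huniq : ∀ y ∈ Y, y ≠ 0 → 1 < ‖1 - y‖) :
    ∃ δ > 0, ∀ u ∈ Y, IsSelfAdjoint u → ∃ j, (u j).re ≤ -(δ * ‖u‖) := by
  set K := {u | u ∈ Y ∧ IsSelfAdjoint u} ∩ Metric.sphere 0 1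
  have hK : IsCompact K := (isCompact_sphere 0 1).inter_left
    ((Submodule.closed_of_finiteDimensional Y).inter (isClosed_eq continuous_star continuous_id))
  obtain ⟨m, hm1, hm⟩ := hK.exists_forall_le' (f := fun u => ‖1 - u‖)
    (continuous_const.sub continuous_id).norm.continuousOn fun u hu => huniq u hu.1.1 (ne_zero_of_mem_unit_sphere ⟨u, hu.2⟩)
  refine ⟨m - 1, sub_pos.2 hm1, fun u hu hsa => ?_⟩
  rcases eq_or_ne u 0 with rfl | hu0
  · simp
  set w := (‖u‖⁻¹ : ℝ) • u
  have hwK : w ∈ K := ⟨⟨Y.smul_of_tower_mem _ hu, (IsSelfAdjoint.all _).smul hsa⟩,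
    by simp [w, norm_smul, hu0]⟩
  obtain ⟨j, hj⟩ := exists_re_le_neg_of_le_norm_one_sub hwK.1.2
    (mem_sphere_zero_iff_norm.1 hwK.2).le (sub_pos.2 hm1) (by linarith [hm w hwK])
  refine ⟨j, ?_⟩
  have hwj : (w j).re = ‖u‖⁻¹ * (u j).re := by simp [w]
  have hu_pos : 0 < ‖u‖ := norm_pos_iff.2 hu0
  rw [hwj, inv_mul_le_iff₀ hu_pos] at hj
  linarith

theorem stmt10 (n : ℕ) (nrm : (Fin n → ℂ) → ℝ)
    (hnrm : ∀ z : Fin n → ℂ, IsGreatest (Set.range fun j => ‖z j‖) (nrm z))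
    (Y : Submodule ℂ (Fin n → ℂ))
    (hreal : ∃ (k : ℕ) (b : Module.Basis (Fin k) ℂ Y), ∀ i j, ((b i : Fin n → ℂ) j).im = 0)
    (x : Fin n → ℂ) (hx : x = fun _ => 1)
    (huniq : ∀ y ∈ Y, y ≠ 0 → nrm (x - y) > nrm x) :
    ∃ r > 0, ∀ y ∈ Y, nrm (x - y) ^ 2 ≥ nrm x ^ 2 + r * nrm y ^ 2 := by
  obtain ⟨⟨j, -⟩, -⟩ := hnrm 0
  have : Nonempty (Fin n) := ⟨j⟩
  obtain rfl : nrm = norm := funext fun z => (hnrm z).unique (IsGreatest.pi_norm z)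
  obtain rfl : x = 1 := hx
  obtain ⟨k, b, hb⟩ := hreal
  rw [norm_one] at huniq ⊢
  obtain ⟨δ, hδ, hδY⟩ := exists_pos_forall_isSelfAdjoint_exists_re_le huniq
  refine ⟨δ / (1 + δ), by positivity, fun y hy => ?_⟩
  obtain ⟨j₀, hj₀⟩ := hδY _ (Submodule.realPart_mem
    (fun _ => Submodule.star_mem_of_basis_im_eq_zero b hb) hy) (ℜ y).2
  have hre (j : Fin n) : ((ℜ y : Fin n → ℂ) j).re = (y j).re := by
    simp [realPart_apply_coe]
    ring
  rw [one_pow, ge_iff_le]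
  refine one_add_mul_sq_norm_le_sq_norm_one_sub y hδ (fun j => ?_) j₀ (hre j₀ ▸ hj₀)
  exact hre j ▸ (Complex.re_le_norm _).trans (norm_le_pi_norm _ j)
end

section
/- Let X = (ℂⁿ, ‖·‖) be a complex normed space whose norm is either (a) a complex polytope norm whose closed unit ball equals absconv{u₁, …, u_N} for vectors u₁, …, u_N with all coordinates real, or (b) an adjoint complex polytope norm ‖x‖ = max_{1 ≤ j ≤ M} |f_j(x)| where each ℂ-linear functional f_j maps vectors with real coordinates to real numbers. Then for any two vectors x, y ∈ ℝⁿ ⊆ ℂⁿ we have ‖x + iy‖ ≥ ‖x‖. -/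
/-! Coordinatewise complex conjugation `v ↦ star v` does not increase the norm: in case (a) it maps
the unit ball `absconv {u₁, …, u_N}` onto itself because the `u_k` are real, and in case (b) it
only conjugates each value `f_j v`. Since `2 • x = z + star z` for `z = x + i y`, the triangle
inequality gives `2 ‖x‖ ≤ ‖z‖ + ‖star z‖ ≤ 2 ‖z‖`. -/

open Complex

theorem Seminorm.apply_star_le_of_forall_apply_le_one {𝕜 E : Type*} [RCLike 𝕜] [AddCommGroup E]
    [Module 𝕜 E] [StarAddMonoid E] [StarModule 𝕜 E] (p : Seminorm 𝕜 E)
    (h : ∀ v, p v ≤ 1 → p (star v) ≤ 1) (v : E) : p (star v) ≤ p v := by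
  refine le_of_forall_gt_imp_ge_of_dense fun t ht => ?_
  have ht₀ : 0 < t := (apply_nonneg p v).trans_lt ht
  have hscale : ∀ w : E, p ((t⁻¹ : 𝕜) • w) = t⁻¹ * p w := fun w => by
    rw [map_smul_eq_mul, ← RCLike.ofReal_inv, RCLike.norm_ofReal, abs_of_pos (inv_pos.2 ht₀)]
  have hv : p ((t⁻¹ : 𝕜) • v) ≤ 1 := by
    rw [hscale, inv_mul_le_one₀ ht₀]
    exact ht.le
  have := h _ hv
  rwa [star_smul, ← RCLike.ofReal_inv, RCLike.star_def, RCLike.conj_ofReal, RCLike.ofReal_inv,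
    hscale, inv_mul_le_one₀ ht₀] at this

theorem Seminorm.apply_re_le_of_apply_star_le {ι : Type*} (p : Seminorm ℂ (ι → ℂ))
    (h : ∀ v, p (star v) ≤ p v) (v : ι → ℂ) : p (fun j => ((v j).re : ℂ)) ≤ p v := by
  have hre : (fun j => ((v j).re : ℂ)) = (2 : ℂ)⁻¹ • (v + star v) := by
    ext j
    simp only [re_eq_add_conj, Pi.smul_apply, Pi.add_apply, Pi.star_apply, smul_eq_mul,
      RCLike.star_def]
    ring
  calc p (fun j => ((v j).re : ℂ)) = 2⁻¹ * p (v + star v) := by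
        rw [hre, map_smul_eq_mul, norm_inv, Complex.norm_two]
    _ ≤ 2⁻¹ * (p v + p (star v)) := by gcongr; exact map_add_le_add p _ _
    _ ≤ p v := by linarith [h v]

theorem star_mem_absconv {ι E : Type*} [Fintype ι] [AddCommGroup E] [Module ℂ E]
    [StarAddMonoid E] [StarModule ℂ E] {u : ι → E} (hu : ∀ k, star (u k) = u k) {v : E}
    (hv : ∃ α : ι → ℂ, ∑ j, ‖α j‖ ≤ 1 ∧ v = ∑ j, α j • u j) :
    ∃ α : ι → ℂ, ∑ j, ‖α j‖ ≤ 1 ∧ star v = ∑ j, α j • u j := by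
  obtain ⟨α, hα, rfl⟩ := hv
  exact ⟨star α, by simpa using hα, by simp [star_sum, star_smul, hu]⟩

theorem LinearMap.map_star_of_map_real {ι : Type*} (f : (ι → ℂ) →ₗ[ℂ] ℂ)
    (hf : ∀ v : ι → ℂ, (∀ i, (v i).im = 0) → (f v).im = 0) (v : ι → ℂ) :
    f (star v) = star (f v) := by
  set a : ι → ℂ := fun i => ((v i).re : ℂ)
  set b : ι → ℂ := fun i => ((v i).im : ℂ)
  have hv : v = a + I • b := by
    ext i
    rw [Pi.add_apply, Pi.smul_apply, smul_eq_mul, mul_comm, re_add_im]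
  have hsv : star v = a - I • b := by ext i; simp [a, b, Complex.ext_iff]
  have ha : star (f a) = f a := conj_eq_iff_im.2 (hf a fun i => ofReal_im _)
  have hb : star (f b) = f b := conj_eq_iff_im.2 (hf b fun i => ofReal_im _)
  rw [hsv, hv, map_sub, map_add, map_smul, smul_eq_mul, star_add, star_mul', ha, hb]
  simp [sub_eq_add_neg]

theorem apply_star_eq_of_isGreatest_norm {ι κ : Type*} (nrm : (ι → ℂ) → ℝ)
    (f : κ → ((ι → ℂ) →ₗ[ℂ] ℂ))
    (hf : ∀ j (v : ι → ℂ), (∀ i, (v i).im = 0) → (f j v).im = 0)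
    (hmax : ∀ v, IsGreatest (Set.range fun j => ‖f j v‖) (nrm v)) (v : ι → ℂ) :
    nrm (star v) = nrm v := by
  refine (hmax (star v)).unique ?_
  simpa only [(f _).map_star_of_map_real (hf _), norm_star] using hmax v

theorem stmt12_general (n : ℕ) (nrm : (Fin n → ℂ) → ℝ)
    (hadd : ∀ v w, nrm (v + w) ≤ nrm v + nrm w)
    (hsmul : ∀ (c : ℂ) v, nrm (c • v) = ‖c‖ * nrm v)
    (h : (∃ (N : ℕ) (u : Fin N → (Fin n → ℂ)),
            (∀ k j, (u k j).im = 0) ∧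
            Submodule.span ℂ (Set.range u) = ⊤ ∧
            {v | nrm v ≤ 1} =
              {v | ∃ α : Fin N → ℂ, (∑ j, ‖α j‖) ≤ 1 ∧ v = ∑ j, α j • u j})
         ∨
         (∃ (M : ℕ) (f : Fin M → ((Fin n → ℂ) →ₗ[ℂ] ℂ)),
            (∀ j (v : Fin n → ℂ), (∀ i, (v i).im = 0) → (f j v).im = 0) ∧
            ∀ v, IsGreatest (Set.range fun j => ‖f j v‖) (nrm v)))
    (x y : Fin n → ℝ) :
    nrm (fun j => (x j : ℂ) + (y j : ℂ) * Complex.I) ≥ nrm (fun j => (x j : ℂ)) := by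
  let p : Seminorm ℂ (Fin n → ℂ) := .of nrm hadd hsmul
  have hstar : ∀ v, p (star v) ≤ p v := by
    rcases h with ⟨N, u, hu, -, hball⟩ | ⟨M, f, hf, hmax⟩
    · have hu' : ∀ k, star (u k) = u k := fun k => funext fun j => conj_eq_iff_im.2 (hu k j)
      refine p.apply_star_le_of_forall_apply_le_one fun v hv => ?_
      exact (Set.ext_iff.1 hball (star v)).2 (star_mem_absconv hu' ((Set.ext_iff.1 hball v).1 hv))
    · exact fun v => (apply_star_eq_of_isGreatest_norm nrm f hf hmax v).le
  show p _ ≤ p _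
  simpa using p.apply_re_le_of_apply_star_le hstar fun j => (x j : ℂ) + (y j : ℂ) * I

theorem stmt12 (n : ℕ) (nrm : (Fin n → ℂ) → ℝ)
    (hadd : ∀ v w, nrm (v + w) ≤ nrm v + nrm w)
    (hsmul : ∀ (c : ℂ) v, nrm (c • v) = ‖c‖ * nrm v)
    (hdef : ∀ v, nrm v = 0 → v = 0)
    (h : (∃ (N : ℕ) (u : Fin N → (Fin n → ℂ)),
            (∀ k j, (u k j).im = 0) ∧
            Submodule.span ℂ (Set.range u) = ⊤ ∧
            {v | nrm v ≤ 1} =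
              {v | ∃ α : Fin N → ℂ, (∑ j, ‖α j‖) ≤ 1 ∧ v = ∑ j, α j • u j})
         ∨
         (∃ (M : ℕ) (f : Fin M → ((Fin n → ℂ) →ₗ[ℂ] ℂ)),
            (∀ j (v : Fin n → ℂ), (∀ i, (v i).im = 0) → (f j v).im = 0) ∧
            ∀ v, IsGreatest (Set.range fun j => ‖f j v‖) (nrm v)))
    (x y : Fin n → ℝ) :
    nrm (fun j => (x j : ℂ) + (y j : ℂ) * Complex.I) ≥ nrm (fun j => (x j : ℂ)) :=
  stmt12_general n nrm hadd hsmul h x y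
end

section
/- Let X = (ℂⁿ, ‖·‖) be a complex normed space whose closed unit ball equals absconv{u₁, …, u_N} for vectors u₁, …, u_N ∈ ℝⁿ (all coordinates real) spanning ℂⁿ. Let Y ⊆ X be a linear subspace with a basis over ℂ consisting of vectors with all coordinates real, and let x ∈ ℝⁿ \ Y be a vector for which y₀ ∈ Y is the unique best approximation in Y. Then y₀ has all coordinates real, and y₀ is a 2-strongly unique best approximation for x: there exists r > 0 such that ‖x − y‖² ≥ ‖x − y₀‖² + r‖y − y₀‖² for all y ∈ Y. -/
/-!
Because the generators `u j` are real, conjugation preserves the norm, so `star y₀` is again a best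
approximation and uniqueness forces `y₀` to be real. On real vectors the norm is the least `ℓ¹`-norm
of a real representation by the `u j`. Optimal representations may be taken with linearly
independent support; along a real ray `t ↦ ‖w - t • d‖`, those sharing one sign pattern lie on a
line, so the norm agrees with an affine function for arbitrarily small `t > 0`. By convexity,
uniqueness then yields a positive slope in every real direction, and compactness of the real unit
sphere of `Y` a uniform one: `‖w - a‖ ≥ ‖w‖ + c ‖a‖` for real `a ∈ Y`. Finally
`‖p + I • q‖² ≥ ‖p‖² + ‖q‖²` for real `p, q` handles the imaginary part of `y - y₀`.
-/

open Complex ComplexStarModule Filter Finset Function Set Topology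

lemma abs_add_add_abs_sub_of_abs_le {x y : ℝ} (h : |y| ≤ |x|) :
    |x + y| + |x - y| = 2 * |x| := by
  rcases abs_le.1 h with ⟨h1, h2⟩
  rcases le_total 0 x with hx | hx
  · rw [abs_of_nonneg hx] at h1 h2 ⊢
    rw [abs_of_nonneg (by linarith), abs_of_nonneg (by linarith)]; ring
  · rw [abs_of_nonpos hx] at h1 h2 ⊢
    rw [abs_of_nonpos (by linarith), abs_of_nonpos (by linarith)]; ring

lemma Complex.sq_sum_abs_re_add_sq_sum_abs_im_le {ι : Type*} (s : Finset ι) (α : ι → ℂ) :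
    (∑ j ∈ s, |(α j).re|) ^ 2 + (∑ j ∈ s, |(α j).im|) ^ 2 ≤ (∑ j ∈ s, ‖α j‖) ^ 2 := by
  set z : ι → ℂ := fun j => ⟨|(α j).re|, |(α j).im|⟩
  have hz : ∀ j, ‖z j‖ = ‖α j‖ := fun j => by
    simp [z, Complex.norm_def, Complex.normSq_apply, abs_mul_abs_self]
  calc (∑ j ∈ s, |(α j).re|) ^ 2 + (∑ j ∈ s, |(α j).im|) ^ 2 = ‖∑ j ∈ s, z j‖ ^ 2 := by
        rw [Complex.sq_norm, Complex.normSq_apply, re_sum, im_sum]; ring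
    _ ≤ (∑ j ∈ s, ‖z j‖) ^ 2 := pow_le_pow_left₀ (norm_nonneg _) (norm_sum_le _ _) 2
    _ = (∑ j ∈ s, ‖α j‖) ^ 2 := by simp only [hz]

lemma realPart_sum_smul_of_isSelfAdjoint {κ A : Type*} [Fintype κ] [AddCommGroup A]
    [Module ℂ A] [StarAddMonoid A] [StarModule ℂ A] {u : κ → A} (hu : ∀ j, IsSelfAdjoint (u j))
    (α : κ → ℂ) :
    (ℜ (∑ j, α j • u j) : A) = ∑ j, (α j).re • u j := by
  simp [realPart_smul, (hu _).coe_realPart, (hu _).imaginaryPart]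

lemma imaginaryPart_sum_smul_of_isSelfAdjoint {κ A : Type*} [Fintype κ] [AddCommGroup A]
    [Module ℂ A] [StarAddMonoid A] [StarModule ℂ A] {u : κ → A} (hu : ∀ j, IsSelfAdjoint (u j))
    (α : κ → ℂ) :
    (ℑ (∑ j, α j • u j) : A) = ∑ j, (α j).im • u j := by
  simp [imaginaryPart_smul, (hu _).coe_realPart, (hu _).imaginaryPart]

lemma ConvexOn.frequently_eq_add_mul {f : ℝ → ℝ} (hf : ConvexOn ℝ univ f) {A B : ℝ}
    (hfreq : ∃ᶠ t in 𝓝[>] 0, f t = A + B * t) : ∃ᶠ t in 𝓝[>] 0, f t = f 0 + B * t := by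
  have hcont : Continuous f := continuousOn_univ.1 (hf.continuousOn isOpen_univ)
  have hA : f 0 = A + B * 0 := tendsto_nhds_unique_of_frequently_eq
    (hcont.tendsto 0 |>.mono_left nhdsWithin_le_nhds)
    ((continuous_const.add (continuous_const.mul continuous_id)).tendsto 0 |>.mono_left
      nhdsWithin_le_nhds) hfreq
  simpa [hA] using hfreq

lemma ConvexOn.add_mul_le_of_frequently_eq {f : ℝ → ℝ} (hf : ConvexOn ℝ univ f) {B : ℝ}
    (hfreq : ∃ᶠ t in 𝓝[>] 0, f t = f 0 + B * t) {t : ℝ} (ht : 0 ≤ t) : f 0 + B * t ≤ f t := by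
  rcases ht.eq_or_lt with rfl | ht
  · simp
  obtain ⟨τ, hτf, hτ⟩ := (hfreq.and_eventually (Ioo_mem_nhdsGT ht)).exists
  have := hf.secant_mono (a := 0) trivial trivial trivial hτ.1.ne' ht.ne' hτ.2.le
  rw [hτf, add_sub_cancel_left, sub_zero, sub_zero, mul_div_cancel_right₀ _ hτ.1.ne',
    le_div_iff₀ ht] at this
  linarith

variable {E : Type*} [NormedAddCommGroup E] [NormedSpace ℂ E] {κ : Type*} [Fintype κ]

lemma Seminorm.map_real_smul (p : Seminorm ℂ E) (t : ℝ) (v : E) : p (t • v) = |t| * p v := by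
  simpa using map_smul_eq_mul (p.restrictScalars ℝ) t v

lemma Seminorm.convexOn_sub_smul (p : Seminorm ℂ E) (w d : E) :
    ConvexOn ℝ univ fun t : ℝ => p (w - t • d) := by
  refine ⟨convex_univ, fun x _ y _ a b ha hb hab => ?_⟩
  calc p (w - (a • x + b • y) • d) = p (a • (w - x • d) + b • (w - y • d)) := by
        congr 1; linear_combination (norm := module) (-hab) • w
    _ ≤ a • p (w - x • d) + b • p (w - y • d) := p.convexOn.2 trivial trivial ha hb hab

def HasAbsConvUnitBall (p : Seminorm ℂ E) (u : κ → E) : Prop :=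
  {v | p v ≤ 1} = {v | ∃ α : κ → ℂ, ∑ j, ‖α j‖ ≤ 1 ∧ v = ∑ j, α j • u j}

structure IsOptimalRep (p : Seminorm ℂ E) (u : κ → E) (v : E) (β : κ → ℝ) : Prop where
  sum_smul : ∑ j, β j • u j = v
  sum_abs : ∑ j, |β j| = p v

namespace HasAbsConvUnitBall

variable {p : Seminorm ℂ E} {u : κ → E}

lemma map_le_one (h : HasAbsConvUnitBall p u) (j : κ) : p (u j) ≤ 1 := by
  classical
  have : u j ∈ {v | ∃ α : κ → ℂ, ∑ j, ‖α j‖ ≤ 1 ∧ v = ∑ j, α j • u j} :=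
    ⟨Pi.single j 1, by simp [Pi.single_apply, apply_ite norm], by simp [Pi.single_apply, ite_smul]⟩
  rw [← h] at this
  exact this

lemma map_sum_smul_le (h : HasAbsConvUnitBall p u) (α : κ → ℂ) :
    p (∑ j, α j • u j) ≤ ∑ j, ‖α j‖ :=
  calc p (∑ j, α j • u j) ≤ ∑ j, p (α j • u j) :=
        Finset.le_sum_of_subadditive p (map_zero p).le (map_add_le_add p) _ _
    _ = ∑ j, ‖α j‖ * p (u j) := by simp only [map_smul_eq_mul]
    _ ≤ ∑ j, ‖α j‖ :=
        sum_le_sum fun j _ => mul_le_of_le_one_right (norm_nonneg _) (h.map_le_one j)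

lemma map_sum_real_smul_le (h : HasAbsConvUnitBall p u) (β : κ → ℝ) :
    p (∑ j, β j • u j) ≤ ∑ j, |β j| := by
  simpa [Complex.coe_smul] using h.map_sum_smul_le fun j => (β j : ℂ)

lemma norm_le (h : HasAbsConvUnitBall p u) {v : E} (hv : p v ≤ 1) : ‖v‖ ≤ ∑ j, ‖u j‖ := by
  obtain ⟨α, hα, rfl⟩ : v ∈ {v | ∃ α : κ → ℂ, ∑ j, ‖α j‖ ≤ 1 ∧ v = ∑ j, α j • u j} :=
    h ▸ hv
  calc ‖∑ j, α j • u j‖ ≤ ∑ j, ‖α j‖ * ‖u j‖ := by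
        simpa only [norm_smul] using norm_sum_le univ fun j => α j • u j
    _ ≤ ∑ j, ‖u j‖ := sum_le_sum fun j _ => mul_le_of_le_one_left (norm_nonneg _)
        ((single_le_sum (fun i _ => norm_nonneg (α i)) (mem_univ j)).trans hα)

lemma eq_zero_of_map_eq_zero (h : HasAbsConvUnitBall p u) {v : E} (hv : p v = 0) : v = 0 := by
  by_contra hne
  have hv0 : 0 < ‖v‖ := norm_pos_iff.2 hne
  set U := ∑ j, ‖u j‖
  have hU : 0 ≤ U := sum_nonneg fun j _ => norm_nonneg _
  have := h.norm_le (v := ((U + 1) / ‖v‖ : ℝ) • v) (by rw [p.map_real_smul, hv, mul_zero]; simp)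
  rw [norm_smul, Real.norm_eq_abs, abs_of_pos (by positivity), div_mul_cancel₀ _ hv0.ne'] at this
  linarith

lemma exists_sum_smul_eq (h : HasAbsConvUnitBall p u) (v : E) :
    ∃ α : κ → ℂ, ∑ j, α j • u j = v ∧ ∑ j, ‖α j‖ ≤ p v := by
  rcases (apply_nonneg p v).eq_or_lt with h0 | hpos
  · exact ⟨0, by simp [h.eq_zero_of_map_eq_zero h0.symm], by simp [← h0]⟩
  have hball : (p v : ℂ)⁻¹ • v ∈ {v | p v ≤ 1} := by
    simp [map_smul_eq_mul, abs_of_pos hpos, hpos.ne']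
  rw [h] at hball
  obtain ⟨α, hα, hv⟩ := hball
  refine ⟨fun j => (p v : ℂ) * α j, ?_, ?_⟩
  · simp_rw [mul_smul, ← Finset.smul_sum, ← hv, smul_inv_smul₀ (ofReal_ne_zero.2 hpos.ne')]
  · simpa [norm_mul, abs_of_pos hpos, ← mul_sum] using mul_le_of_le_one_right hpos.le hα

lemma exists_isOptimalRep_support_ssubset (h : HasAbsConvUnitBall p u) {v : E} {β c : κ → ℝ}
    (hβ : IsOptimalRep p u v β) (hc : c ≠ 0) (hcβ : support c ⊆ support β)
    (hcu : ∑ j, c j • u j = 0) : ∃ γ, IsOptimalRep p u v γ ∧ support γ ⊂ support β := by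
  classical
  obtain ⟨j₁, hj₁⟩ := Function.ne_iff.1 hc
  obtain ⟨j₀, hj₀, hmin⟩ := (univ.filter (c · ≠ 0)).exists_min_image (fun j => |β j| / |c j|)
    ⟨j₁, by simpa using hj₁⟩
  rw [mem_filter] at hj₀
  -- `|s * c| ≤ |β|` coordinatewise, so `β + s • c` and `β - s • c` have `ℓ¹`-norms averaging to
  -- `p v`; both represent `v`, hence both are optimal, and `β - s • c` vanishes at `j₀`.
  set s := β j₀ / c j₀
  have hbound : ∀ j, |s * c j| ≤ |β j| := fun j => by
    by_cases hcj : c j = 0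
    · simp [hcj]
    rw [abs_mul, abs_div, ← le_div_iff₀ (abs_pos.2 hcj)]
    exact hmin j (by simpa using hcj)
  have hrep : ∀ t : ℝ, ∑ j, (β j + t * c j) • u j = v := fun t => by
    simp [add_smul, mul_smul, sum_add_distrib, ← smul_sum, hcu, hβ.sum_smul]
  have hle : ∀ t, p v ≤ ∑ j, |β j + t * c j| := fun t => hrep t ▸ h.map_sum_real_smul_le _
  have hpair : ∑ j, |β j + s * c j| + ∑ j, |β j + -s * c j| = 2 * p v := by
    simp_rw [← hβ.sum_abs, mul_sum, ← sum_add_distrib, neg_mul, ← sub_eq_add_neg]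
    exact sum_congr rfl fun j _ => abs_add_add_abs_sub_of_abs_le (hbound j)
  refine ⟨fun j => β j + -s * c j, ⟨hrep (-s), by linarith [hle s, hle (-s)]⟩, ?_⟩
  refine (Set.ssubset_iff_of_subset fun j hj => ?_).2 ⟨j₀, ?_, ?_⟩
  · by_contra hβj
    have hcj : c j = 0 := by simpa using mt (@hcβ j) hβj
    simp_all
  · exact hcβ hj₀.2
  · simp [s, div_mul_cancel₀ _ hj₀.2]

lemma exists_isOptimalRep_unique (h : HasAbsConvUnitBall p u) {v : E} {β : κ → ℝ}
    (hβ : IsOptimalRep p u v β) : ∃ γ, IsOptimalRep p u v γ ∧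
      ∀ g : κ → ℝ, support g ⊆ support γ → ∑ j, g j • u j = v → g = γ := by
  induction hn : (support β).ncard using Nat.strong_induction_on generalizing β with
  | _ n ih =>
    by_cases hU : ∀ g : κ → ℝ, support g ⊆ support β → ∑ j, g j • u j = v → g = β
    · exact ⟨β, hβ, hU⟩
    push Not at hU
    obtain ⟨g, hgβ, hgv, hne⟩ := hU
    obtain ⟨γ, hγ, hγβ⟩ := h.exists_isOptimalRep_support_ssubset hβ (sub_ne_zero.2 hne)
      ((support_sub g β).trans (Set.union_subset hgβ subset_rfl))
      (by simp [sub_smul, sum_sub_distrib, hgv, hβ.sum_smul])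
    exact ih _ (hn ▸ Set.ncard_lt_ncard hγβ (Set.toFinite _)) hγ rfl

section Star

variable [StarAddMonoid E] [StarModule ℂ E]

lemma map_star (h : HasAbsConvUnitBall p u) (hu : ∀ j, IsSelfAdjoint (u j)) (v : E) :
    p (star v) = p v := by
  have key : ∀ v, p (star v) ≤ p v := fun v => by
    obtain ⟨α, rfl, hα⟩ := h.exists_sum_smul_eq v
    calc p (star (∑ j, α j • u j)) = p (∑ j, star (α j) • u j) := by
          simp [star_sum, star_smul, (hu _).star_eq]
      _ ≤ ∑ j, ‖α j‖ := by simpa using h.map_sum_smul_le fun j => star (α j)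
      _ ≤ _ := hα
  exact le_antisymm (key v) (by simpa using key (star v))

lemma exists_isOptimalRep (h : HasAbsConvUnitBall p u) (hu : ∀ j, IsSelfAdjoint (u j)) {v : E}
    (hv : IsSelfAdjoint v) : ∃ β, IsOptimalRep p u v β := by
  obtain ⟨α, hαv, hα⟩ := h.exists_sum_smul_eq v
  have hsum : ∑ j, (α j).re • u j = v := by
    rw [← realPart_sum_smul_of_isSelfAdjoint hu, hαv, hv.coe_realPart]
  refine ⟨fun j => (α j).re, hsum, le_antisymm ?_ ?_⟩
  · exact (sum_le_sum fun j _ => abs_re_le_norm (α j)).trans hα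
  · simpa [hsum] using h.map_sum_real_smul_le fun j => (α j).re

lemma sq_add_sq_le (h : HasAbsConvUnitBall p u) (hu : ∀ j, IsSelfAdjoint (u j)) {a b : E}
    (ha : IsSelfAdjoint a) (hb : IsSelfAdjoint b) : p a ^ 2 + p b ^ 2 ≤ p (a + I • b) ^ 2 := by
  obtain ⟨α, hαv, hα⟩ := h.exists_sum_smul_eq (a + I • b)
  have hre : ∑ j, (α j).re • u j = a := by
    rw [← realPart_sum_smul_of_isSelfAdjoint hu, hαv]
    simp [ha.coe_realPart, realPart_I_smul, hb.imaginaryPart]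
  have him : ∑ j, (α j).im • u j = b := by
    rw [← imaginaryPart_sum_smul_of_isSelfAdjoint hu, hαv]
    simp [ha.imaginaryPart, imaginaryPart_I_smul, hb.coe_realPart]
  have hpa := h.map_sum_real_smul_le fun j => (α j).re
  have hpb := h.map_sum_real_smul_le fun j => (α j).im
  rw [hre] at hpa
  rw [him] at hpb
  have hα2 := Complex.sq_sum_abs_re_add_sq_sum_abs_im_le univ α
  have hα0 : 0 ≤ ∑ j, ‖α j‖ := sum_nonneg fun j _ => norm_nonneg _
  nlinarith [apply_nonneg p a, apply_nonneg p b, apply_nonneg p (a + I • b)]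

lemma isSelfAdjoint_of_forall_ne_lt (h : HasAbsConvUnitBall p u) (hu : ∀ j, IsSelfAdjoint (u j))
    {Y : Set E} (hY : ∀ y ∈ Y, star y ∈ Y) {x y₀ : E} (hx : IsSelfAdjoint x) (hy₀ : y₀ ∈ Y)
    (huniq : ∀ y ∈ Y, y ≠ y₀ → p (x - y₀) < p (x - y)) : IsSelfAdjoint y₀ := by
  by_contra hne
  have := huniq (star y₀) (hY _ hy₀) hne
  rw [← h.map_star hu (x - y₀), star_sub, hx.star_eq] at this
  exact lt_irrefl _ this

lemma sq_add_mul_sq_le (h : HasAbsConvUnitBall p u) (hu : ∀ j, IsSelfAdjoint (u j))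
    {Y : Submodule ℂ E} (hY : ∀ y ∈ Y, star y ∈ Y) {w : E} (hw : IsSelfAdjoint w) {c : ℝ}
    (hc0 : 0 ≤ c) (hc : ∀ a ∈ Y, IsSelfAdjoint a → p w + c * p a ≤ p (w - a)) {z : E}
    (hz : z ∈ Y) : p w ^ 2 + min (c ^ 2) 1 / 2 * p z ^ 2 ≤ p (w - z) ^ 2 := by
  have haY : (ℜ z : E) ∈ Y := by
    rw [realPart_apply_coe]; exact Y.smul_of_tower_mem _ (Y.add_mem hz (hY z hz))
  have hbY : (ℑ z : E) ∈ Y := by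
    rw [imaginaryPart_apply_coe]
    exact Y.smul_mem _ (Y.smul_of_tower_mem _ (Y.sub_mem hz (hY z hz)))
  set a : E := ↑(ℜ z)
  set b : E := ↑(ℑ z)
  have hzab : z = a + I • b := (realPart_add_I_smul_imaginaryPart z).symm
  have hsplit := h.sq_add_sq_le hu (hw.sub (ℜ z).2) (ℑ z).2.neg
  rw [map_neg_eq_map, smul_neg, ← sub_eq_add_neg, sub_sub, ← hzab] at hsplit
  have hreal := hc a haY (ℜ z).2
  have hzle : p z ≤ p a + p b := by
    simpa [hzab, map_smul_eq_mul] using map_add_le_add p a (I • b)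
  have hm : min (c ^ 2) 1 ≤ c ^ 2 := min_le_left _ _
  have hm1 : min (c ^ 2) 1 ≤ 1 := min_le_right _ _
  have hm0 : 0 ≤ min (c ^ 2) 1 := le_min (sq_nonneg c) zero_le_one
  have ha0 := apply_nonneg p a
  have hb0 := apply_nonneg p b
  have hw0 := apply_nonneg p w
  calc p w ^ 2 + min (c ^ 2) 1 / 2 * p z ^ 2
      ≤ p w ^ 2 + min (c ^ 2) 1 / 2 * (p a + p b) ^ 2 := by gcongr
    _ ≤ p w ^ 2 + min (c ^ 2) 1 * (p a ^ 2 + p b ^ 2) := by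
        nlinarith [sq_nonneg (p a - p b)]
    _ ≤ (p w + c * p a) ^ 2 + p b ^ 2 := by nlinarith [mul_nonneg hc0 (mul_nonneg hw0 ha0)]
    _ ≤ p (w - a) ^ 2 + p b ^ 2 := by gcongr
    _ ≤ p (w - z) ^ 2 := hsplit

lemma frequently_map_sub_smul_eq_affine (h : HasAbsConvUnitBall p u)
    (hu : ∀ j, IsSelfAdjoint (u j)) {w d : E} (hw : IsSelfAdjoint w) (hd : IsSelfAdjoint d) :
    ∃ A B : ℝ, ∃ᶠ t in 𝓝[>] (0 : ℝ), p (w - t • d) = A + B * t := by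
  have hv : ∀ t : ℝ, IsSelfAdjoint (w - t • d) := fun t => hw.sub ((IsSelfAdjoint.all t).smul hd)
  choose β hβ huniq using fun t : ℝ =>
    h.exists_isOptimalRep_unique (h.exists_isOptimalRep hu (hv t)).choose_spec
  obtain ⟨σ, hσ⟩ : ∃ σ : κ → SignType,
      ∃ᶠ t in 𝓝[>] (0 : ℝ), (fun j => SignType.sign (β t j)) = σ :=
    frequently_exists.1 (Frequently.of_forall fun t => ⟨_, rfl⟩)
  obtain ⟨t₁, ht₁σ, ht₁⟩ := (hσ.and_eventually self_mem_nhdsWithin).exists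
  obtain ⟨t₂, ht₂σ, ht₂⟩ := (hσ.and_eventually (Ioo_mem_nhdsGT ht₁)).exists
  set q : κ → ℝ := fun j => (β t₁ j - β t₂ j) / (t₁ - t₂)
  have hq : ∑ j, q j • u j = -d := by
    simp_rw [q, div_eq_inv_mul, mul_smul, sub_smul, ← smul_sum, sum_sub_distrib,
      (hβ _).sum_smul]
    rw [show w - t₁ • d - (w - t₂ • d) = -((t₁ - t₂) • d) by rw [sub_smul]; abel, smul_neg,
      inv_smul_smul₀ (sub_ne_zero.2 ht₂.2.ne')]
  refine ⟨∑ j, σ j * (β t₁ j - t₁ * q j), ∑ j, σ j * q j, hσ.mono fun t ht => ?_⟩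
  -- the line through `β t₁`, `β t₂` represents `w - t • d` inside `{σ ≠ 0}`, where `β t` is unique
  have hline : (fun j => β t₁ j + (t - t₁) * q j) = β t := by
    refine huniq t _ (fun j hj => ?_) ?_
    · have hσj : σ j ≠ 0 := fun hσj => hj (by
        simp [q, sign_eq_zero_iff.1 ((congrFun ht₁σ j).trans hσj),
          sign_eq_zero_iff.1 ((congrFun ht₂σ j).trans hσj)])
      exact fun h0 => hσj (by simp [← congrFun ht j, h0])
    · simp only [add_smul, mul_smul, sum_add_distrib, ← smul_sum, hq, (hβ t₁).sum_smul]
      module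
  rw [← (hβ t).sum_abs, sum_mul, ← sum_add_distrib]
  refine sum_congr rfl fun j _ => ?_
  rw [← sign_mul_self, congrFun ht j, ← hline]
  ring

lemma exists_pos_slope (h : HasAbsConvUnitBall p u) (hu : ∀ j, IsSelfAdjoint (u j)) {w d : E}
    (hw : IsSelfAdjoint w) (hd : IsSelfAdjoint d) (hgt : ∀ t : ℝ, 0 < t → p w < p (w - t • d)) :
    ∃ s > 0, ∀ t : ℝ, 0 ≤ t → p w + s * t ≤ p (w - t • d) := by
  obtain ⟨A, B, hAB⟩ := h.frequently_map_sub_smul_eq_affine hu hw hd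
  have hconv := p.convexOn_sub_smul w d
  have hB := hconv.frequently_eq_add_mul hAB
  simp only [zero_smul, sub_zero] at hB
  obtain ⟨t, htB, ht⟩ := (hB.and_eventually self_mem_nhdsWithin).exists
  refine ⟨B, pos_of_mul_pos_left (b := t) ?_ (le_of_lt ht), fun t ht => ?_⟩
  · linarith [hgt t ht]
  · simpa using hconv.add_mul_le_of_frequently_eq (by simpa using hB) ht

end Star

section FiniteDimensional

variable [FiniteDimensional ℂ E]

lemma isCompact_setOf_mem_and_map_eq_one (h : HasAbsConvUnitBall p u) (Z : Submodule ℝ E) :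
    IsCompact {d : E | d ∈ Z ∧ p d = 1} := by
  have := FiniteDimensional.proper ℂ E
  refine Metric.isCompact_of_isClosed_isBounded (Z.closed_of_finiteDimensional.inter
    (isClosed_eq p.convexOn.locallyLipschitz.continuous continuous_const)) ?_
  exact (Metric.isBounded_closedBall (x := 0) (r := ∑ j, ‖u j‖)).subset fun d hd => by
    simpa using h.norm_le hd.2.le

variable [StarAddMonoid E] [StarModule ℂ E]

theorem exists_pos_mul_le_map_sub (h : HasAbsConvUnitBall p u) (hu : ∀ j, IsSelfAdjoint (u j))
    (Z : Submodule ℝ E) (hZ : ∀ z ∈ Z, IsSelfAdjoint z) {w : E} (hw : IsSelfAdjoint w)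
    (hmin : ∀ z ∈ Z, z ≠ 0 → p w < p (w - z)) :
    ∃ c > 0, ∀ z ∈ Z, p w + c * p z ≤ p (w - z) := by
  have hp : Continuous p := p.convexOn.locallyLipschitz.continuous
  set K := {d : E | d ∈ Z ∧ p d = 1}
  have hK : IsCompact K := h.isCompact_setOf_mem_and_map_eq_one Z
  have hslope : ∀ d ∈ K, ∃ s > 0, ∀ t : ℝ, 0 ≤ t → p w + s * t ≤ p (w - t • d) :=
    fun d hd => h.exists_pos_slope hu hw (hZ d hd.1) fun t ht =>
      hmin _ (Z.smul_mem t hd.1) (smul_ne_zero ht.ne' (by rintro rfl; simp [K] at hd))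
  -- a slope `s` in direction `d` gives slope `s / 2` in all nearby directions
  have hev : ∀ᶠ c in 𝓝 (0 : ℝ), ∀ d ∈ K, ∀ t : ℝ, 0 ≤ t → p w + c * t ≤ p (w - t • d) := by
    refine hK.eventually_forall_of_forall_eventually fun d hd => ?_
    obtain ⟨s, hs, hsd⟩ := hslope d hd
    have hc : ∀ᶠ z : ℝ × E in 𝓝 (0, d), z.1 < s / 2 :=
      continuous_fst.tendsto (0, d) |>.eventually (gt_mem_nhds (by linarith))
    have he : ∀ᶠ z : ℝ × E in 𝓝 (0, d), p (z.2 - d) < s / 2 :=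
      (hp.comp (continuous_snd.sub continuous_const)).tendsto (0, d) |>.eventually
        (gt_mem_nhds (by simpa using half_pos hs))
    filter_upwards [hc, he] with ⟨c, e⟩ hc he t ht
    have htri : p (w - t • d) ≤ p (w - t • e) + t * p (e - d) := by
      have := map_add_le_add p (w - t • e) (t • (e - d))
      rwa [p.map_real_smul, abs_of_nonneg ht, smul_sub, sub_add_sub_cancel] at this
    nlinarith [hsd t ht]
  obtain ⟨c, hcK, hc⟩ := ((hev.filter_mono nhdsWithin_le_nhds).and
    (self_mem_nhdsWithin (s := Ioi (0 : ℝ)))).exists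
  refine ⟨c, hc, fun z hz => ?_⟩
  rcases eq_or_ne z 0 with rfl | hz0
  · simp
  have hpz : 0 < p z := (apply_nonneg p z).lt_of_ne' (mt h.eq_zero_of_map_eq_zero hz0)
  have hzK : (p z)⁻¹ • z ∈ K :=
    ⟨Z.smul_mem _ hz, by rw [p.map_real_smul, abs_inv, abs_of_pos hpz, inv_mul_cancel₀ hpz.ne']⟩
  simpa [smul_inv_smul₀ hpz.ne'] using hcK _ hzK (p z) hpz.le

end FiniteDimensional

end HasAbsConvUnitBall

lemma star_mem_of_basis_isSelfAdjoint {ι : Type*} [Fintype ι] {Y : Submodule ℂ E}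
    [StarAddMonoid E] [StarModule ℂ E] (b : Module.Basis ι ℂ Y) (hb : ∀ i, IsSelfAdjoint (b i : E))
    {y : E} (hy : y ∈ Y) : star y ∈ Y := by
  have hy' : ∑ i, b.repr ⟨y, hy⟩ i • (b i : E) = y := by
    simpa only [Submodule.coe_sum, Submodule.coe_smul] using
      congrArg Subtype.val (b.sum_repr ⟨y, hy⟩)
  rw [← hy', star_sum]
  exact Y.sum_mem fun i _ => by rw [star_smul, (hb i).star_eq]; exact Y.smul_mem _ (b i).2

lemma isSelfAdjoint_iff_forall_im_eq_zero {ι : Type*} {v : ι → ℂ} :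
    IsSelfAdjoint v ↔ ∀ j, (v j).im = 0 := by
  simp [isSelfAdjoint_iff, funext_iff, Complex.conj_eq_iff_im]

theorem stmt13_general (n N : ℕ) (u : Fin N → (Fin n → ℂ)) (hu : ∀ k j, (u k j).im = 0)
    (nrm : (Fin n → ℂ) → ℝ)
    (hadd : ∀ v w, nrm (v + w) ≤ nrm v + nrm w)
    (hsmul : ∀ (c : ℂ) v, nrm (c • v) = ‖c‖ * nrm v)
    (hball : {v | nrm v ≤ 1} =
      {v | ∃ α : Fin N → ℂ, (∑ j, ‖α j‖) ≤ 1 ∧ v = ∑ j, α j • u j})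
    (Y : Submodule ℂ (Fin n → ℂ))
    (hreal : ∃ (k : ℕ) (b : Module.Basis (Fin k) ℂ Y), ∀ i j, ((b i : Fin n → ℂ) j).im = 0)
    (x : Fin n → ℂ) (hxreal : ∀ j, (x j).im = 0)
    (y₀ : Fin n → ℂ) (hy₀ : y₀ ∈ Y)
    (huniq : ∀ y ∈ Y, y ≠ y₀ → nrm (x - y) > nrm (x - y₀)) :
    (∀ j, (y₀ j).im = 0) ∧
    ∃ r > 0, ∀ y ∈ Y, nrm (x - y) ^ 2 ≥ nrm (x - y₀) ^ 2 + r * nrm (y - y₀) ^ 2 := by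
  set p : Seminorm ℂ (Fin n → ℂ) := Seminorm.of nrm hadd hsmul
  have hp : HasAbsConvUnitBall p u := hball
  have hu' k : IsSelfAdjoint (u k) := isSelfAdjoint_iff_forall_im_eq_zero.2 (hu k)
  have hx : IsSelfAdjoint x := isSelfAdjoint_iff_forall_im_eq_zero.2 hxreal
  obtain ⟨k, b, hb⟩ := hreal
  have hY y (hy : y ∈ Y) : star y ∈ Y :=
    star_mem_of_basis_isSelfAdjoint b (fun i => isSelfAdjoint_iff_forall_im_eq_zero.2 (hb i)) hy
  have hy₀' : IsSelfAdjoint y₀ := hp.isSelfAdjoint_of_forall_ne_lt hu' hY hx hy₀ huniq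
  set Z : Submodule ℝ (Fin n → ℂ) := Y.restrictScalars ℝ ⊓ selfAdjoint.submodule ℝ _
  obtain ⟨c, hc, hcZ⟩ := hp.exists_pos_mul_le_map_sub hu' Z (fun z hz => hz.2) (hx.sub hy₀')
    fun z hz hz0 => by
      rw [sub_sub]; exact huniq (y₀ + z) (Y.add_mem hy₀ hz.1) (by simpa using hz0)
  refine ⟨isSelfAdjoint_iff_forall_im_eq_zero.1 hy₀', min (c ^ 2) 1 / 2, by positivity,
    fun y hy => ?_⟩
  have := hp.sq_add_mul_sq_le hu' hY (hx.sub hy₀') hc.le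
    (fun a ha ha' => hcZ a ⟨ha, ha'⟩) (Y.sub_mem hy hy₀)
  rwa [sub_sub_sub_cancel_right] at this

theorem stmt13 (n N : ℕ) (u : Fin N → (Fin n → ℂ)) (hu : ∀ k j, (u k j).im = 0)
    (hspan : Submodule.span ℂ (Set.range u) = ⊤)
    (nrm : (Fin n → ℂ) → ℝ)
    (hadd : ∀ v w, nrm (v + w) ≤ nrm v + nrm w)
    (hsmul : ∀ (c : ℂ) v, nrm (c • v) = ‖c‖ * nrm v)
    (hdef : ∀ v, nrm v = 0 → v = 0)
    (hball : {v | nrm v ≤ 1} =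
      {v | ∃ α : Fin N → ℂ, (∑ j, ‖α j‖) ≤ 1 ∧ v = ∑ j, α j • u j})
    (Y : Submodule ℂ (Fin n → ℂ))
    (hreal : ∃ (k : ℕ) (b : Module.Basis (Fin k) ℂ Y), ∀ i j, ((b i : Fin n → ℂ) j).im = 0)
    (x : Fin n → ℂ) (hxreal : ∀ j, (x j).im = 0) (hx : x ∉ Y)
    (y₀ : Fin n → ℂ) (hy₀ : y₀ ∈ Y)
    (huniq : ∀ y ∈ Y, y ≠ y₀ → nrm (x - y) > nrm (x - y₀)) :
    (∀ j, (y₀ j).im = 0) ∧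
    ∃ r > 0, ∀ y ∈ Y, nrm (x - y) ^ 2 ≥ nrm (x - y₀) ^ 2 + r * nrm (y - y₀) ^ 2 :=
  stmt13_general n N u hu nrm hadd hsmul hball Y hreal x hxreal y₀ hy₀ huniq
end

section
/- Let X be a normed space over 𝕂 (𝕂 = ℝ or ℂ), let Y ⊆ X be a finite-dimensional linear subspace, and let x ∈ X \ Y. Suppose f₁, …, f_l are continuous linear functionals on X with ‖f_j‖ = 1, and α₁, …, α_l are positive reals with α₁ + … + α_l = 1, such that the functional f = Σ_{j=1}^{l} α_j f_j satisfies f(x) = ‖x‖ and f(y) = 0 for all y ∈ Y. Assume additionally that there is no nonzero vector y₀ ∈ Y with f_j(y₀) = 0 for every 1 ≤ j ≤ l. Then 0 is a 2-strongly unique best approximation for x in Y: there exists r > 0 such that ‖x − y‖² ≥ ‖x‖² + r‖y‖² for all y ∈ Y. -/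
/-!
Each `f j` has norm one while their convex combination attains `‖x‖` at `x`, so every `f j`
attains it: `f j x = ‖x‖`. Expanding `|‖x‖ - f j y|²` and averaging with the weights `α j`, the
cross terms cancel because the average annihilates `Y`, whence
`‖x - y‖² ≥ ∑ α j |f j (x - y)|² = ‖x‖² + ∑ α j |f j y|²`. The last sum is a positive definite
quadratic form on the finite-dimensional space `Y`, hence at least a multiple of `‖y‖²`.
-/

open RCLike Finset

section

variable {𝕜 : Type*} [RCLike 𝕜] {ι : Type*} [Fintype ι]

theorem eq_of_norm_le_of_sum_mul_eq {a : ι → 𝕜} {α : ι → ℝ} {M : ℝ} (hα : ∀ j, 0 < α j)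
    (hαsum : ∑ j, α j = 1) (ha : ∀ j, ‖a j‖ ≤ M) (hsum : ∑ j, (α j : 𝕜) * a j = M)
    (j : ι) : a j = M := by
  have hre : ∑ j, α j * (M - re (a j)) = 0 := by
    have := congrArg re hsum
    simp only [map_sum, re_ofReal_mul, ofReal_re] at this
    simp only [mul_sub, sum_sub_distrib, ← sum_mul, hαsum, this, one_mul, sub_self]
  have hnonneg : ∀ i ∈ univ, 0 ≤ α i * (M - re (a i)) := fun i _ =>
    mul_nonneg (hα i).le (sub_nonneg.2 ((re_le_norm _).trans (ha i)))
  have hj := (sum_eq_zero_iff_of_nonneg hnonneg).1 hre j (mem_univ j)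
  have hrej : re (a j) = M := by
    nlinarith [(mul_eq_zero.1 hj).resolve_left (hα j).ne']
  rw [← re_eq_self_of_le ((ha j).trans hrej.ge), hrej]

theorem sum_mul_norm_sub_sq {b : ι → 𝕜} {α : ι → ℝ} (hαsum : ∑ j, α j = 1) (a : ℝ)
    (hb : ∑ j, α j * re (b j) = 0) :
    ∑ j, α j * ‖(a : 𝕜) - b j‖ ^ 2 = a ^ 2 + ∑ j, α j * ‖b j‖ ^ 2 := by
  have hexpand (z : 𝕜) : ‖(a : 𝕜) - z‖ ^ 2 = a ^ 2 - 2 * a * re z + ‖z‖ ^ 2 := by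
    simp only [@norm_sub_sq 𝕜 𝕜, RCLike.inner_apply, conj_ofReal, re_mul_ofReal, norm_ofReal,
      sq_abs]
    ring
  calc ∑ j, α j * ‖(a : 𝕜) - b j‖ ^ 2
      = ∑ j, (α j * a ^ 2 - 2 * a * (α j * re (b j)) + α j * ‖b j‖ ^ 2) :=
        sum_congr rfl fun j _ => by rw [hexpand]; ring
    _ = (∑ j, α j) * a ^ 2 - 2 * a * ∑ j, α j * re (b j) + ∑ j, α j * ‖b j‖ ^ 2 := by
        rw [sum_add_distrib, sum_sub_distrib, ← sum_mul, ← mul_sum]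
    _ = a ^ 2 + ∑ j, α j * ‖b j‖ ^ 2 := by rw [hαsum, hb]; ring

theorem sum_mul_norm_sq_le {b : ι → 𝕜} {α : ι → ℝ} {B : ℝ} (hα : ∀ j, 0 ≤ α j)
    (hαsum : ∑ j, α j = 1) (hb : ∀ j, ‖b j‖ ≤ B) :
    ∑ j, α j * ‖b j‖ ^ 2 ≤ B ^ 2 :=
  calc ∑ j, α j * ‖b j‖ ^ 2 ≤ ∑ j, α j * B ^ 2 := sum_le_sum fun j _ =>
        mul_le_mul_of_nonneg_left (pow_le_pow_left₀ (norm_nonneg _) (hb j) 2) (hα j)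
    _ = B ^ 2 := by rw [← sum_mul, hαsum, one_mul]

theorem exists_mul_sq_norm_le_sum_mul_sq_norm {E : Type*} [NormedAddCommGroup E]
    [NormedSpace 𝕜 E] [FiniteDimensional 𝕜 E] (g : ι → E →ₗ[𝕜] 𝕜) {α : ι → ℝ}
    (hα : ∀ j, 0 < α j) (hsep : ∀ y, (∀ j, g j y = 0) → y = 0) :
    ∃ c > 0, ∀ y, c * ‖y‖ ^ 2 ≤ ∑ j, α j * ‖g j y‖ ^ 2 := by
  -- `T` is injective, hence bounded below on the finite-dimensional space `E`, and
  -- `‖T y‖²`, a maximum over `j`, is at most the sum `∑ α j ‖g j y‖²`.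
  set T : E →ₗ[𝕜] ι → 𝕜 := LinearMap.pi fun j => (√(α j) : 𝕜) • g j
  have hT : LinearMap.ker T = ⊥ := by
    refine LinearMap.ker_eq_bot'.2 fun y hy => hsep y fun j => ?_
    simpa [T, (Real.sqrt_pos.2 (hα j)).ne'] using congrFun hy j
  obtain ⟨K, -, hK⟩ := T.exists_antilipschitzWith hT
  obtain ⟨c, hc, hcT⟩ := antilipschitzWith_iff_exists_mul_le_norm.1 ⟨K, hK⟩
  refine ⟨c ^ 2, by positivity, fun y => ?_⟩
  have hterm (j : ι) : 0 ≤ α j * ‖g j y‖ ^ 2 := by have := hα j; positivity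
  have hTy : ‖T y‖ ≤ √(∑ j, α j * ‖g j y‖ ^ 2) := by
    refine (pi_norm_le_iff_of_nonneg (Real.sqrt_nonneg _)).2 fun j => ?_
    have hcoord : ‖T y j‖ = √(α j * ‖g j y‖ ^ 2) := by
      simp [T, norm_smul, Real.sqrt_mul (hα j).le, Real.sqrt_sq (norm_nonneg _)]
    rw [hcoord]
    exact Real.sqrt_le_sqrt (single_le_sum (fun i _ => hterm i) (mem_univ j))
  have hbound := (hcT y).trans hTy
  rw [Real.le_sqrt (by positivity) (sum_nonneg fun j _ => hterm j)] at hbound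
  linarith

end

theorem stmt16_general (𝕜 : Type*) [RCLike 𝕜] (X : Type*) [NormedAddCommGroup X] [NormedSpace 𝕜 X]
    (Y : Submodule 𝕜 X) [FiniteDimensional 𝕜 Y] (x : X)
    (l : ℕ) (f : Fin l → (X →L[𝕜] 𝕜)) (hfnorm : ∀ j, ‖f j‖ = 1)
    (α : Fin l → ℝ) (hαpos : ∀ j, 0 < α j) (hαsum : ∑ j, α j = 1)
    (hfx : (∑ j, ((α j : 𝕜)) • f j) x = (‖x‖ : 𝕜))
    (hfY : ∀ y ∈ Y, (∑ j, ((α j : 𝕜)) • f j) y = 0)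
    (hsep : ¬ ∃ y₀ ∈ Y, y₀ ≠ 0 ∧ ∀ j, f j y₀ = 0) :
    ∃ r > 0, ∀ y ∈ Y, ‖x - y‖ ^ 2 ≥ ‖x‖ ^ 2 + r * ‖y‖ ^ 2 := by
  have hle (j : Fin l) (z : X) : ‖f j z‖ ≤ ‖z‖ := by
    simpa [hfnorm j] using (f j).le_opNorm z
  simp only [FunLike.coe_sum, Finset.sum_apply, FunLike.coe_smul, Pi.smul_apply,
    smul_eq_mul] at hfx hfY
  have hattain : ∀ j, f j x = ‖x‖ :=
    eq_of_norm_le_of_sum_mul_eq hαpos hαsum (fun j => hle j x) hfx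
  obtain ⟨r, hr, hrY⟩ := exists_mul_sq_norm_le_sum_mul_sq_norm
    (fun j => (f j : X →ₗ[𝕜] 𝕜) ∘ₗ Y.subtype) hαpos
    fun y hy => by_contra fun hne => hsep ⟨y, y.2, by simpa using hne, hy⟩
  refine ⟨r, hr, fun y hy => ?_⟩
  have hreY : ∑ j, α j * re (f j y) = 0 := by
    simpa only [map_sum, re_ofReal_mul, map_zero] using congrArg re (hfY y hy)
  calc ‖x‖ ^ 2 + r * ‖y‖ ^ 2 ≤ ‖x‖ ^ 2 + ∑ j, α j * ‖f j y‖ ^ 2 := by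
        simpa using hrY ⟨y, hy⟩
    _ = ∑ j, α j * ‖f j (x - y)‖ ^ 2 := by
        simp only [map_sub, hattain]
        exact (sum_mul_norm_sub_sq hαsum _ hreY).symm
    _ ≤ ‖x - y‖ ^ 2 := sum_mul_norm_sq_le (fun j => (hαpos j).le) hαsum fun j => hle j _

theorem stmt16 (𝕜 : Type*) [RCLike 𝕜] (X : Type*) [NormedAddCommGroup X] [NormedSpace 𝕜 X]
    (Y : Submodule 𝕜 X) [FiniteDimensional 𝕜 Y] (x : X) (hx : x ∉ Y)
    (l : ℕ) (f : Fin l → (X →L[𝕜] 𝕜)) (hfnorm : ∀ j, ‖f j‖ = 1)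
    (α : Fin l → ℝ) (hαpos : ∀ j, 0 < α j) (hαsum : ∑ j, α j = 1)
    (hfx : (∑ j, ((α j : 𝕜)) • f j) x = (‖x‖ : 𝕜))
    (hfY : ∀ y ∈ Y, (∑ j, ((α j : 𝕜)) • f j) y = 0)
    (hsep : ¬ ∃ y₀ ∈ Y, y₀ ≠ 0 ∧ ∀ j, f j y₀ = 0) :
    ∃ r > 0, ∀ y ∈ Y, ‖x - y‖ ^ 2 ≥ ‖x‖ ^ 2 + r * ‖y‖ ^ 2 :=
  stmt16_general 𝕜 X Y x l f hfnorm α hαpos hαsum hfx hfY hsep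
end
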